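/- arXiv:2604.03609 — 8 statements merged into one kernel-verified Lean document; each statement's English description precedes it below -/
import Mathlib

section
/- If a and b are coprime positive integers, then a² + b² + ab and a(a+b) cannot both be perfect squares. -/
set_option maxHeartbeats 1000000

private lemma sqm2 (n : ℕ) : n ^ 2 % 2 = n % 2 := by
  rw [Nat.pow_mod]
  rcases Nat.mod_two_eq_zero_or_one n with h | h <;> simp [h]

private lemma pow4m2 (n : ℕ) : n ^ 4 % 2 = n % 2 := by
  rw [Nat.pow_mod]
  rcases Nat.mod_two_eq_zero_or_one n with h | h <;> simp [h]

private lemma odd_sq_m4 (n : ℕ) (h : n % 2 = 1) : n ^ 2 % 4 = 1 := by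
  obtain ⟨k, rfl⟩ : ∃ k, n = 2 * k + 1 := ⟨n / 2, by omega⟩
  have : (2 * k + 1) ^ 2 = 4 * (k * k + k) + 1 := by ring
  omega

/-- helper: gcd = 1 from no common prime divisor -/
private lemma gcd_one_of_no_prime (a b : ℕ)
    (h : ∀ p, p.Prime → p ∣ a → p ∣ b → False) : Nat.gcd a b = 1 := by
  by_contra hg
  exact h _ (Nat.minFac_prime hg)
    ((Nat.minFac_dvd _).trans (Nat.gcd_dvd_left a b))
    ((Nat.minFac_dvd _).trans (Nat.gcd_dvd_right a b))

private lemma coprime_sq_split {a b c : ℕ} (hab : Nat.gcd a b = 1) (h : a * b = c ^ 2) :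
    ∃ d, a = d ^ 2 :=
  exists_eq_pow_of_mul_eq_pow (by rw [Nat.isUnit_iff]; exact hab) h

private lemma coprime_pow4_split {a b c : ℕ} (hab : Nat.gcd a b = 1) (h : a * b = c ^ 4) :
    ∃ d, a = d ^ 4 :=
  exists_eq_pow_of_mul_eq_pow (by rw [Nat.isUnit_iff]; exact hab) h

section aux

/-- Case x,y both odd, y < x : descent -/
private lemma aux_odd (z x y : ℕ)
    (hzo : z % 2 = 1) (hy : 0 < y) (hyx : y < x)
    (hx2 : x % 2 = 1) (hy2 : y % 2 = 1)
    (hg : Nat.gcd x y = 1) (hgzx : Nat.gcd z x = 1) (hgzy : Nat.gcd z y = 1)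
    (heq : x^4 + y^4 = z^2 + x^2*y^2)
    (IH : ∀ w, w < z → ∀ u v : ℕ, Nat.gcd u v = 1 → u^4 + v^4 = w^2 + u^2*v^2 →
      u = v ∨ u = 0 ∨ v = 0) : False := by
  have hx : 0 < x := by omega
  have hlt : y^2 < x^2 := Nat.pow_lt_pow_left hyx (by norm_num)
  obtain ⟨P, hP⟩ : ∃ P, x^2 = y^2 + P := ⟨x^2 - y^2, by omega⟩
  have hP1 : 1 ≤ P := by omega
  have hz2 : z^2 = P^2 + x^2*y^2 := by
    zify at hP heq ⊢
    linear_combination -heq + (x^2 - y^2 + P) * hP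
  have hx2s : x^2 % 2 = 1 := by rw [sqm2]; exact hx2
  have hy2s : y^2 % 2 = 1 := by rw [sqm2]; exact hy2
  have hxy2 : (x*y) % 2 = 1 := by rw [Nat.mul_mod, hx2, hy2]
  have hP2 : P % 2 = 0 := by omega
  obtain ⟨Q, hQ⟩ : ∃ Q, P = 2*Q := ⟨P/2, by omega⟩
  have hzgt : x*y < z := by
    have h1 : (x*y)^2 < z^2 := by nlinarith [hz2, hP1]
    by_contra hc
    push_neg at hc
    exact absurd (Nat.pow_le_pow_left hc 2) (by omega)
  obtain ⟨α, hα⟩ : ∃ α, z = x*y + 2*α := ⟨(z - x*y)/2, by omega⟩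
  have hα1 : 1 ≤ α := by omega
  have hαβ : α * (x*y + α) = Q^2 := by
    have h4 : 4*(α * (x*y + α)) = 4*Q^2 := by
      zify at hz2 hα hQ ⊢
      linear_combination hz2 - (z + x*y + 2*α)*hα + (P + 2*Q)*hQ
    omega
  have hgαβ : Nat.gcd α (x*y + α) = 1 := by
    apply gcd_one_of_no_prime
    intro p hp hpα hpβ
    have hpxy : p ∣ x*y := by
      have := Nat.dvd_sub hpβ hpα
      simpa using this
    have hpz : p ∣ z := by rw [hα]; exact Nat.dvd_add hpxy (hpα.mul_left 2)
    rcases hp.dvd_mul.mp hpxy with hpx | hpy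
    · have := Nat.le_of_dvd one_pos (hgzx ▸ Nat.dvd_gcd hpz hpx)
      have := hp.two_le; omega
    · have := Nat.le_of_dvd one_pos (hgzy ▸ Nat.dvd_gcd hpz hpy)
      have := hp.two_le; omega
  obtain ⟨e, he⟩ := coprime_sq_split hgαβ hαβ
  obtain ⟨f, hf⟩ := coprime_sq_split (Nat.gcd_comm _ _ ▸ hgαβ) (by rw [mul_comm]; exact hαβ)
  obtain ⟨w, hw⟩ : ∃ w, x^2 + y^2 = 2*w := ⟨(x^2+y^2)/2, by omega⟩
  have hefQ : e^2 * f^2 = Q^2 := by rw [← he, ← hf]; exact hαβ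
  have hxyef : x*y + e^2 = f^2 := by omega
  have hnew : e^4 + f^4 = w^2 + e^2*f^2 := by
    have h4 : 4*(e^4 + f^4) = 4*(w^2 + e^2*f^2) := by
      zify at hxyef hefQ hQ hP hw ⊢
      linear_combination (-4*(f^2 - e^2 + x*y))*hxyef + 4*hefQ - (P+2*Q)*hQ
        - (x^2-y^2+P)*hP + (x^2+y^2+2*w)*hw
    omega
  have hef : Nat.gcd e f = 1 := by
    apply gcd_one_of_no_prime
    intro p hp hpe hpf
    have h1 : p ∣ α := he ▸ dvd_pow hpe (by norm_num)
    have h2 : p ∣ x*y + α := hf ▸ dvd_pow hpf (by norm_num)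
    have := Nat.le_of_dvd one_pos (hgαβ ▸ Nat.dvd_gcd h1 h2)
    have := hp.two_le; omega
  have h1 : (x^2+y^2)^2 + 3*P^2 = (2*z)^2 := by
    zify at hP hz2 ⊢
    linear_combination (x^2-y^2+P)*hP - 4*hz2
  have hwz : w < z := by
    have hPP : 1 ≤ P^2 := Nat.one_le_pow _ _ (by omega)
    have h3 : x^2+y^2 < 2*z := by
      by_contra hc; push_neg at hc
      exact absurd (Nat.pow_le_pow_left hc 2) (by omega)
    omega
  rcases IH w hwz e f hef hnew with h | h | h
  · rw [h] at hxyef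
    have := Nat.mul_pos hx hy
    omega
  · rw [h] at he; simp at he; omega
  · rw [h] at hf; simp at hf; omega

/-- Case x even, y odd : descent -/
private lemma aux_even (z x y : ℕ)
    (hzo : z % 2 = 1) (h3z : ¬ 3 ∣ z) (hx : 0 < x) (hy : 0 < y)
    (hx2 : x % 2 = 0) (hy2 : y % 2 = 1)
    (hg : Nat.gcd x y = 1) (hgzx : Nat.gcd z x = 1) (hgzy : Nat.gcd z y = 1)
    (heq : x^4 + y^4 = z^2 + x^2*y^2)
    (IH : ∀ w, w < z → ∀ u v : ℕ, Nat.gcd u v = 1 → u^4 + v^4 = w^2 + u^2*v^2 →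
      u = v ∨ u = 0 ∨ v = 0) : False := by
  obtain ⟨x₁, hx1⟩ : ∃ t, x = 2*t := ⟨x/2, by omega⟩
  have hx11 : 1 ≤ x₁ := by omega
  have hx2sq : x^2 = 4*x₁^2 := by rw [hx1]; ring
  have hy2s : y^2 % 2 = 1 := by rw [sqm2]; exact hy2
  have hz1 : 1 ≤ z := by omega
  -- positivity of the two factors
  have hZ : ((2*(z:ℤ) + 2*(y:ℤ)^2) - (x:ℤ)^2) * ((2*(z:ℤ) + (x:ℤ)^2) - 2*(y:ℤ)^2)
      = 3*(x:ℤ)^4 := by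
    have heqz : ((x:ℤ))^4 + (y:ℤ)^4 = (z:ℤ)^2 + (x:ℤ)^2*(y:ℤ)^2 := by exact_mod_cast heq
    linear_combination (-4)*heqz
  have hx4pos : (0:ℤ) < 3*(x:ℤ)^4 := by positivity
  have hzZ : (1:ℤ) ≤ (z:ℤ) := by exact_mod_cast hz1
  have hApos : (0:ℤ) < 2*(z:ℤ) + 2*(y:ℤ)^2 - (x:ℤ)^2 := by
    by_contra hcon
    push_neg at hcon
    have hB : (0:ℤ) < 2*(z:ℤ) + (x:ℤ)^2 - 2*(y:ℤ)^2 := by linarith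
    nlinarith [hZ]
  have hBpos : (0:ℤ) < 2*(z:ℤ) + (x:ℤ)^2 - 2*(y:ℤ)^2 := by
    by_contra hcon
    push_neg at hcon
    have hA : (0:ℤ) < 2*(z:ℤ) + 2*(y:ℤ)^2 - (x:ℤ)^2 := by linarith
    nlinarith [hZ]
  have hApos' : x^2 < 2*z + 2*y^2 := by
    have : ((x:ℤ))^2 < 2*(z:ℤ) + 2*(y:ℤ)^2 := by linarith
    exact_mod_cast this
  have hBpos' : 2*y^2 < 2*z + x^2 := by
    have : 2*((y:ℤ))^2 < 2*(z:ℤ) + (x:ℤ)^2 := by linarith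
    exact_mod_cast this
  obtain ⟨F₁, hF₁⟩ : ∃ t, x^2 + t = 2*z + 2*y^2 := ⟨2*z + 2*y^2 - x^2, by omega⟩
  obtain ⟨F₂, hF₂⟩ : ∃ t, 2*y^2 + t = 2*z + x^2 := ⟨2*z + x^2 - 2*y^2, by omega⟩
  obtain ⟨f₁, hf₁⟩ : ∃ t, F₁ = 4*t := ⟨F₁/4, by omega⟩
  obtain ⟨f₂, hf₂⟩ : ∃ t, F₂ = 4*t := ⟨F₂/4, by omega⟩
  have hFF : F₁ * F₂ = 3*x^4 := by
    zify at hF₁ hF₂ heq ⊢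
    linear_combination (F₂:ℤ)*hF₁ + (2*(z:ℤ)+2*(y:ℤ)^2-(x:ℤ)^2)*hF₂ - 4*heq
  have hprod : f₁ * f₂ = 3*x₁^4 := by
    have h16 : 16*(f₁*f₂) = 16*(3*x₁^4) := by
      zify at hFF hf₁ hf₂ hx1 ⊢
      linear_combination hFF - (F₂:ℤ)*hf₁ - 4*(f₁:ℤ)*hf₂
        + 3*((x:ℤ)+2*(x₁:ℤ))*((x:ℤ)^2+4*(x₁:ℤ)^2)*hx1
    omega
  have hsum : f₁ + f₂ = z := by omega
  have hx14 : 1 ≤ x₁^4 := Nat.one_le_pow _ _ (by omega)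
  have hf₁1 : 1 ≤ f₁ := by
    rcases Nat.eq_zero_or_pos f₁ with h | h
    · rw [h] at hprod; simp at hprod; omega
    · exact h
  have hf₂1 : 1 ≤ f₂ := by
    rcases Nat.eq_zero_or_pos f₂ with h | h
    · rw [h] at hprod; simp at hprod; omega
    · exact h
  have hg12 : Nat.gcd f₁ f₂ = 1 := by
    apply gcd_one_of_no_prime
    intro p hp hp1 hp2
    have hpz : p ∣ z := hsum ▸ Nat.dvd_add hp1 hp2
    have hp3x : p ∣ 3*x₁^4 := hprod ▸ Dvd.dvd.mul_right hp1 f₂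
    rcases hp.dvd_mul.mp hp3x with h3 | hx4
    · have hp3 : p = 3 := (Nat.prime_dvd_prime_iff_eq hp (by norm_num)).mp h3
      exact h3z (hp3 ▸ hpz)
    · have hpx1 : p ∣ x₁ := hp.dvd_of_dvd_pow hx4
      have hpx : p ∣ x := hx1 ▸ hpx1.mul_left 2
      have := Nat.le_of_dvd one_pos (hgzx ▸ Nat.dvd_gcd hpz hpx)
      have := hp.two_le; omega
  have hdiff : f₁ + 2*x₁^2 = f₂ + y^2 := by omega
  have h3d : 3 ∣ f₁ ∨ 3 ∣ f₂ := by
    have h33 : (3:ℕ) ∣ f₁ * f₂ := by rw [hprod]; exact Dvd.dvd.mul_right (dvd_refl 3) _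
    exact (Nat.Prime.dvd_mul (by norm_num)).mp h33
  rcases h3d with h3f | h3f
  · -- SUBCASE A : 3 ∣ f₁ : mod 4 contradiction
    obtain ⟨c, hc⟩ := h3f
    have hcf : c * f₂ = x₁^4 := by
      have h3c : 3*(c*f₂) = 3*x₁^4 := by rw [← hprod, hc]; ring
      omega
    have hgcf : Nat.gcd c f₂ = 1 := by
      apply gcd_one_of_no_prime
      intro p hp hpc hpf2
      have hpf1 : p ∣ f₁ := hc ▸ hpc.mul_left 3
      have := Nat.le_of_dvd one_pos (hg12 ▸ Nat.dvd_gcd hpf1 hpf2)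
      have := hp.two_le; omega
    obtain ⟨u, hu⟩ := coprime_pow4_split hgcf hcf
    obtain ⟨v, hv⟩ := coprime_pow4_split (Nat.gcd_comm _ _ ▸ hgcf) (by rw [mul_comm]; exact hcf)
    have huv : u*v = x₁ := by
      have h4 : (u*v)^4 = x₁^4 := by rw [← hcf, hu, hv]; ring
      exact Nat.pow_left_injective (by norm_num) h4
    have hu1 : 1 ≤ u := by
      rcases Nat.eq_zero_or_pos u with h | h
      · rw [h] at huv; simp at huv; omega
      · exact h
    have hv1 : 1 ≤ v := by
      rcases Nat.eq_zero_or_pos v with h | h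
      · rw [h] at huv; simp at huv; omega
      · exact h
    have hguv : Nat.gcd u v = 1 := by
      apply gcd_one_of_no_prime
      intro p hp hpu hpv
      have h1 : p ∣ c := hu ▸ dvd_pow hpu (by norm_num)
      have h2 : p ∣ f₂ := hv ▸ dvd_pow hpv (by norm_num)
      have := Nat.le_of_dvd one_pos (hgcf ▸ Nat.dvd_gcd h1 h2)
      have := hp.two_le; omega
    have hx12 : x₁^2 = u^2*v^2 := by rw [← huv]; ring
    have hy2eq : y^2 + v^4 = 3*u^4 + 2*(u^2*v^2) := by omega
    have hvu : v^2 ≤ 3*u^2 := by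
      by_contra hcon
      push_neg at hcon
      have hcon' : 3*u^2+1 ≤ v^2 := hcon
      have h1 : (3*u^2+1) * v^2 ≤ v^2 * v^2 := Nat.mul_le_mul hcon' (le_refl _)
      have h2 : u^2*(3*u^2+1) ≤ u^2 * v^2 := Nat.mul_le_mul (le_refl _) hcon'
      have he1 : (3*u^2+1)*v^2 = 3*(u^2*v^2)+v^2 := by ring
      have he2 : u^2*(3*u^2+1) = 3*(u^2*u^2)+u^2 := by ring
      have hu4' : u^4 = u^2*u^2 := by ring
      have hv4' : v^4 = v^2*v^2 := by ring
      omega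
    obtain ⟨D, hD⟩ : ∃ D, v^2 + D = 3*u^2 := ⟨3*u^2 - v^2, by omega⟩
    have hfact : y^2 = D * (u^2+v^2) := by
      zify at hy2eq hD ⊢
      linear_combination hy2eq - ((u:ℤ)^2+(v:ℤ)^2)*hD
    have hu4m := pow4m2 u
    have hv4m := pow4m2 v
    have hu2m := sqm2 u
    have hv2m := sqm2 v
    -- u+v odd from z = 3u⁴+v⁴ odd
    have hparS : (u^2+v^2) % 2 = 1 := by omega
    have hDodd : D % 2 = 1 := by
      have h4 := Nat.mul_mod D (u^2+v^2) 2
      rw [← hfact, hparS, mul_one] at h4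
      omega
    have hsum4 : (u^2+v^2) + D = 4*u^2 := by omega
    have hgD : Nat.gcd D (u^2+v^2) = 1 := by
      apply gcd_one_of_no_prime
      intro p hp hpD hpS
      have hp4u : p ∣ 4*u^2 := hsum4 ▸ Nat.dvd_add hpS hpD
      have hp2 : p ≠ 2 := by rintro rfl; omega
      rcases hp.dvd_mul.mp hp4u with h4' | hu2
      · have : p = 2 := by
          rcases (Nat.Prime.dvd_mul hp).mp (show p ∣ 2*2 from h4') with h | h <;>
            exact (Nat.prime_dvd_prime_iff_eq hp Nat.prime_two).mp h
        exact hp2 this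
      · have hpu : p ∣ u := hp.dvd_of_dvd_pow hu2
        have hpv : p ∣ v := by
          have hv2 : p ∣ v^2 := (Nat.dvd_add_right (dvd_pow hpu (by norm_num))).mp hpS
          exact hp.dvd_of_dvd_pow hv2
        have := Nat.le_of_dvd one_pos (hguv ▸ Nat.dvd_gcd hpu hpv)
        have := hp.two_le; omega
    obtain ⟨d, hd⟩ := coprime_sq_split hgD hfact.symm
    obtain ⟨c₂, hc₂⟩ := coprime_sq_split (Nat.gcd_comm _ _ ▸ hgD)
      (by rw [mul_comm]; exact hfact.symm)
    have hdo : d % 2 = 1 := by have := sqm2 d; omega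
    have hco : c₂ % 2 = 1 := by have := sqm2 c₂; omega
    have hm1 := odd_sq_m4 d hdo
    have hm2 := odd_sq_m4 c₂ hco
    omega
  · -- SUBCASE B : 3 ∣ f₂ : descent
    obtain ⟨c, hc⟩ := h3f
    have hcf : f₁ * c = x₁^4 := by
      have h3c : 3*(f₁*c) = 3*x₁^4 := by rw [← hprod, hc]; ring
      omega
    have hgcf : Nat.gcd f₁ c = 1 := by
      apply gcd_one_of_no_prime
      intro p hp hpf1 hpc
      have hpf2 : p ∣ f₂ := hc ▸ hpc.mul_left 3
      have := Nat.le_of_dvd one_pos (hg12 ▸ Nat.dvd_gcd hpf1 hpf2)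
      have := hp.two_le; omega
    obtain ⟨v, hv⟩ := coprime_pow4_split hgcf hcf
    obtain ⟨u, hu⟩ := coprime_pow4_split (Nat.gcd_comm _ _ ▸ hgcf) (by rw [mul_comm]; exact hcf)
    have huv : u*v = x₁ := by
      have h4 : (u*v)^4 = x₁^4 := by rw [← hcf, hu, hv]; ring
      exact Nat.pow_left_injective (by norm_num) h4
    have hu1 : 1 ≤ u := by
      rcases Nat.eq_zero_or_pos u with h | h
      · rw [h] at huv; simp at huv; omega
      · exact h
    have hv1 : 1 ≤ v := by
      rcases Nat.eq_zero_or_pos v with h | h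
      · rw [h] at huv; simp at huv; omega
      · exact h
    have hguv : Nat.gcd u v = 1 := by
      apply gcd_one_of_no_prime
      intro p hp hpu hpv
      have h1 : p ∣ c := hu ▸ dvd_pow hpu (by norm_num)
      have h2 : p ∣ f₁ := hv ▸ dvd_pow hpv (by norm_num)
      have := Nat.le_of_dvd one_pos (hgcf ▸ Nat.dvd_gcd h2 h1)
      have := hp.two_le; omega
    have hx12 : x₁^2 = u^2*v^2 := by rw [← huv]; ring
    have hy2eq : y^2 + 3*u^4 = v^4 + 2*(u^2*v^2) := by omega
    have hy1' : 1 ≤ y^2 := Nat.one_le_pow _ _ hy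
    have hvu : u^2 < v^2 := by
      by_contra hcon
      push_neg at hcon
      have h1 : v^2*v^2 ≤ u^2*v^2 := Nat.mul_le_mul hcon (le_refl _)
      have h2 : u^2*v^2 ≤ u^2*u^2 := Nat.mul_le_mul (le_refl _) hcon
      have hu4' : u^4 = u^2*u^2 := by ring
      have hv4' : v^4 = v^2*v^2 := by ring
      omega
    obtain ⟨S, hS⟩ : ∃ S, u^2 + S = v^2 := ⟨v^2 - u^2, by omega⟩
    have hS1 : 1 ≤ S := by omega
    have hfact : y^2 = (v^2 + 3*u^2) * S := by
      zify at hy2eq hS ⊢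
      linear_combination hy2eq - ((v:ℤ)^2+3*(u:ℤ)^2)*hS
    have hu4m := pow4m2 u
    have hv4m := pow4m2 v
    have hu2m := sqm2 u
    have hv2m := sqm2 v
    have hodd1 : (v^2+3*u^2) % 2 = 1 := by omega
    have hsum4 : (v^2+3*u^2) + 3*S = 4*v^2 := by omega
    have hgD : Nat.gcd (v^2+3*u^2) S = 1 := by
      apply gcd_one_of_no_prime
      intro p hp hpT hpS
      have hp4v : p ∣ 4*v^2 := hsum4 ▸ Nat.dvd_add hpT (hpS.mul_left 3)
      have hp2 : p ≠ 2 := by rintro rfl; omega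
      rcases hp.dvd_mul.mp hp4v with h4' | hv2
      · have : p = 2 := by
          rcases (Nat.Prime.dvd_mul hp).mp (show p ∣ 2*2 from h4') with h | h <;>
            exact (Nat.prime_dvd_prime_iff_eq hp Nat.prime_two).mp h
        exact hp2 this
      · have hpv : p ∣ v := hp.dvd_of_dvd_pow hv2
        have hpu : p ∣ u := by
          have h1 : p ∣ u^2 + S := hS.symm ▸ hv2
          exact hp.dvd_of_dvd_pow ((Nat.dvd_add_iff_left hpS).mpr h1)
        have := Nat.le_of_dvd one_pos (hguv ▸ Nat.dvd_gcd hpu hpv)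
        have := hp.two_le; omega
    obtain ⟨t, ht⟩ := coprime_sq_split hgD hfact.symm
    obtain ⟨s, hs⟩ := coprime_sq_split (Nat.gcd_comm _ _ ▸ hgD)
      (by rw [mul_comm]; exact hfact.symm)
    have hs1 : 1 ≤ s := by
      rcases Nat.eq_zero_or_pos s with h | h
      · rw [h] at hs; simp at hs; omega
      · exact h
    have hts : s^2 + 4*u^2 = t^2 := by omega
    have hto : t % 2 = 1 := by have := sqm2 t; omega
    have hSodd : S % 2 = 1 := by
      have h4 := Nat.mul_mod (v^2+3*u^2) S 2
      rw [← hfact, hodd1, one_mul] at h4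
      omega
    have hso : s % 2 = 1 := by have := sqm2 s; omega
    have hst : s < t := by
      have hu2' : 1 ≤ u^2 := Nat.one_le_pow _ _ (by omega)
      have h1 : s^2 < t^2 := by omega
      by_contra hcon
      push_neg at hcon
      exact absurd (Nat.pow_le_pow_left hcon 2) (by omega)
    obtain ⟨A, hA⟩ : ∃ A, t = s + 2*A := ⟨(t-s)/2, by omega⟩
    have hA1 : 1 ≤ A := by
      rcases Nat.eq_zero_or_pos A with h | h
      · exfalso
        rw [h] at hA
        simp at hA
        have hts2 : t^2 = s^2 := by rw [hA]
        have hu2' : 1 ≤ u^2 := Nat.one_le_pow _ _ (by omega)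
        omega
      · exact h
    have hAB : A * (s + A) = u^2 := by
      have h4 : 4*(A*(s+A)) = 4*u^2 := by
        zify at hts hA ⊢
        linear_combination -hts - ((t:ℤ)+(s:ℤ)+2*(A:ℤ))*hA
      omega
    have hgAB : Nat.gcd A (s+A) = 1 := by
      apply gcd_one_of_no_prime
      intro p hp hpA hpsA
      have hps : p ∣ s := by simpa using Nat.dvd_sub hpsA hpA
      have hpu : p ∣ u := hp.dvd_of_dvd_pow (hAB ▸ Dvd.dvd.mul_right hpA (s+A))
      have hpv : p ∣ v := by
        have h1 : p ∣ u^2 + S := Nat.dvd_add (dvd_pow hpu (by norm_num))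
          (hs ▸ dvd_pow hps (by norm_num))
        exact hp.dvd_of_dvd_pow (hS ▸ h1)
      have := Nat.le_of_dvd one_pos (hguv ▸ Nat.dvd_gcd hpu hpv)
      have := hp.two_le; omega
    obtain ⟨γ, hγ⟩ := coprime_sq_split hgAB hAB
    obtain ⟨δ, hδ⟩ := coprime_sq_split (Nat.gcd_comm _ _ ▸ hgAB) (by rw [mul_comm]; exact hAB)
    have hγδ : γ * δ = u := by
      have h2 : (γ*δ)^2 = u^2 := by rw [← hAB, hδ, hγ]; ring
      exact Nat.pow_left_injective (by norm_num) h2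
    have hgγδ : Nat.gcd γ δ = 1 := by
      apply gcd_one_of_no_prime
      intro p hp hpγ hpδ
      have h1 : p ∣ A := hγ ▸ dvd_pow hpγ (by norm_num)
      have h2 : p ∣ s + A := hδ ▸ dvd_pow hpδ (by norm_num)
      have := Nat.le_of_dvd one_pos (hgAB ▸ Nat.dvd_gcd h1 h2)
      have := hp.two_le; omega
    have hsd : s + γ^2 = δ^2 := by omega
    have hv2 : u^2 + s^2 = v^2 := by omega
    have hnew : γ^4 + δ^4 = v^2 + γ^2*δ^2 := by
      zify at hv2 hγδ hsd ⊢
      linear_combination hv2 + ((γ:ℤ)*(δ:ℤ)+(u:ℤ))*hγδ - ((δ:ℤ)^2-(γ:ℤ)^2+(s:ℤ))*hsd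
    have hvz : v < z := by
      have h1 : v ≤ v^4 := Nat.le_self_pow (by norm_num) v
      omega
    rcases IH v hvz γ δ hgγδ hnew with h | h | h
    · rw [h] at hsd; omega
    · rw [h] at hγ; simp at hγ; omega
    · rw [h] at hδ; simp at hδ; omega

end aux

private theorem descent (z : ℕ) : ∀ x y : ℕ, Nat.gcd x y = 1 →
    x^4 + y^4 = z^2 + x^2*y^2 → x = y ∨ x = 0 ∨ y = 0 := by
  induction z using Nat.strong_induction_on with
  | _ z IH =>
  intro x y hg heq
  by_cases hx0 : x = 0
  · exact Or.inr (Or.inl hx0)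
  by_cases hy0 : y = 0
  · exact Or.inr (Or.inr hy0)
  by_cases hxy : x = y
  · exact Or.inl hxy
  exfalso
  have hx : 0 < x := Nat.pos_of_ne_zero hx0
  have hy : 0 < y := Nat.pos_of_ne_zero hy0
  -- not both even
  have hne2 : ¬ (x % 2 = 0 ∧ y % 2 = 0) := by
    rintro ⟨h1, h2⟩
    have : 2 ∣ Nat.gcd x y := Nat.dvd_gcd (by omega) (by omega)
    omega
  -- z is odd
  have hzo : z % 2 = 1 := by
    have hcast := congrArg (Nat.cast (R := ZMod 2)) heq
    push_cast at hcast
    have key : ∀ u v w : ZMod 2, u^4+v^4 = w^2+u^2*v^2 → (u = 0 ∧ v = 0) ∨ w = 1 := by decide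
    rcases key _ _ _ hcast with ⟨hu, hv⟩ | hw
    · have h2x : 2 ∣ x := (ZMod.natCast_eq_zero_iff x 2).mp hu
      have h2y : 2 ∣ y := (ZMod.natCast_eq_zero_iff y 2).mp hv
      exact absurd ⟨by omega, by omega⟩ hne2
    · have : (z : ZMod 2) ≠ 0 := by rw [hw]; decide
      have : ¬ 2 ∣ z := fun h => this ((ZMod.natCast_eq_zero_iff z 2).mpr h)
      omega
  -- 3 does not divide z
  have h3z : ¬ 3 ∣ z := by
    intro h3
    have hcast := congrArg (Nat.cast (R := ZMod 3)) heq
    push_cast at hcast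
    rw [(ZMod.natCast_eq_zero_iff z 3).mpr h3] at hcast
    have key : ∀ u v : ZMod 3, u^4 + v^4 = 0^2 + u^2*v^2 → u = 0 ∧ v = 0 := by decide
    obtain ⟨hu, hv⟩ := key _ _ hcast
    have h3x : 3 ∣ x := (ZMod.natCast_eq_zero_iff x 3).mp hu
    have h3y : 3 ∣ y := (ZMod.natCast_eq_zero_iff y 3).mp hv
    have : 3 ∣ Nat.gcd x y := Nat.dvd_gcd h3x h3y
    omega
  -- gcd z x = 1 and gcd z y = 1
  have hgz : ∀ u v : ℕ, Nat.gcd u v = 1 → u^4 + v^4 = z^2 + u^2*v^2 → Nat.gcd z u = 1 := by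
    intro u v hguv hequv
    apply gcd_one_of_no_prime
    intro p hp hpz hpu
    have h1 : p ∣ u^4 + v^4 := by
      rw [hequv]
      exact Nat.dvd_add (dvd_pow hpz (by norm_num))
        (Dvd.dvd.mul_right (dvd_pow hpu (by norm_num)) _)
    have h2 : p ∣ v^4 := (Nat.dvd_add_right (dvd_pow hpu (by norm_num))).mp h1
    have hpv : p ∣ v := hp.dvd_of_dvd_pow h2
    have := Nat.le_of_dvd one_pos (hguv ▸ Nat.dvd_gcd hpu hpv)
    have := hp.two_le
    omega
  have hgzx : Nat.gcd z x = 1 := hgz x y hg heq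
  have hgzy : Nat.gcd z y = 1 := hgz y x (Nat.gcd_comm x y ▸ hg) (by linear_combination heq)
  -- parity case split
  rcases Nat.mod_two_eq_zero_or_one x with hx2 | hx2 <;>
    rcases Nat.mod_two_eq_zero_or_one y with hy2 | hy2
  · exact hne2 ⟨hx2, hy2⟩
  · -- x even, y odd
    exact aux_even z x y hzo h3z hx hy hx2 hy2 hg hgzx hgzy heq (fun w hw => IH w hw)
  · -- x odd, y even : swap
    exact aux_even z y x hzo h3z hy hx hy2 hx2 (Nat.gcd_comm x y ▸ hg) hgzy hgzx
      (by linear_combination heq) (fun w hw => IH w hw)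
  · -- both odd
    rcases Nat.lt_or_ge y x with hyx | hge
    · exact aux_odd z x y hzo hy hyx hx2 hy2 hg hgzx hgzy heq (fun w hw => IH w hw)
    · have hxy' : x < y := by omega
      exact aux_odd z y x hzo hx hxy' hy2 hx2 (Nat.gcd_comm x y ▸ hg) hgzy hgzx
        (by linear_combination heq) (fun w hw => IH w hw)

theorem stmt_0 (a b : ℕ) (ha : 0 < a) (hb : 0 < b) (hcop : Nat.gcd a b = 1) :
    ¬ (IsSquare (a ^ 2 + b ^ 2 + a * b) ∧ IsSquare (a * (a + b))) := by
  rintro ⟨⟨k, hk⟩, ⟨s, hs⟩⟩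
  have hk' : a^2 + b^2 + a*b = k^2 := by rw [hk]; ring
  have hs' : a * (a + b) = s^2 := by rw [hs]; ring
  have hgab : Nat.gcd a (a + b) = 1 := by
    apply gcd_one_of_no_prime
    intro p hp hpa hpab
    have hpb : p ∣ b := (Nat.dvd_add_right hpa).mp hpab
    have := Nat.dvd_gcd hpa hpb
    rw [hcop] at this
    exact hp.one_lt.ne' (Nat.eq_one_of_dvd_one this ▸ rfl)
  obtain ⟨m, hm⟩ := coprime_sq_split hgab hs'
  obtain ⟨n, hn⟩ := coprime_sq_split (Nat.gcd_comm a (a+b) ▸ hgab) (by rw [mul_comm]; exact hs')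
  have hmn : m^2 + b = n^2 := by omega
  have heq : m^4 + n^4 = k^2 + m^2*n^2 := by
    zify
    zify at hk' hm hmn
    linear_combination hk' - (a + m^2 + b) * hm - (n^2 + b) * hmn
  have hgmn : Nat.gcd m n = 1 := by
    apply gcd_one_of_no_prime
    intro p hp hpm hpn
    have hpa : p ∣ a := hm ▸ dvd_pow hpm (by norm_num)
    have hpab : p ∣ a + b := hn ▸ dvd_pow hpn (by norm_num)
    have hpb : p ∣ b := (Nat.dvd_add_right hpa).mp hpab
    have := Nat.dvd_gcd hpa hpb
    rw [hcop] at this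
    have := Nat.le_of_dvd one_pos this
    exact absurd this (by have := hp.two_le; omega)
  rcases descent k m n hgmn heq with h | h | h
  · subst h; omega
  · subst h; simp at hm; omega
  · subst h; simp at hn; omega
end

section
/- If m and n are positive integers with gcd(m,n)=1 and n⁴ − m²n² + m⁴ is a perfect square, then m = n (and hence m = n = 1). -/
lemma sq_helper {a b c : ℕ} (h : Nat.Coprime a b)
    (heq : a * b = c ^ 2) : ∃ r s, a = r ^ 2 ∧ b = s ^ 2 ∧ r * s = c := by
  have hu : IsUnit (gcd a b) := by rw [Nat.isUnit_iff]; exact h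
  obtain ⟨r, hr⟩ := exists_eq_pow_of_mul_eq_pow hu heq
  have hu' : IsUnit (gcd b a) := by rw [Nat.isUnit_iff]; exact h.symm
  obtain ⟨s, hs⟩ := exists_eq_pow_of_mul_eq_pow hu' (by rw [mul_comm]; exact heq)
  refine ⟨r, s, hr, hs, ?_⟩
  have : (r * s) ^ 2 = c ^ 2 := by rw [mul_pow, ← hr, ← hs, heq]
  exact Nat.pow_left_injective (by norm_num) this

lemma cop_z {z x y : ℕ} (hcop : Nat.Coprime x y)
    (heq : z ^ 2 + x ^ 2 * y ^ 2 = x ^ 4 + y ^ 4) : Nat.Coprime z x := by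
  by_contra hne
  obtain ⟨p, pp, hp⟩ := Nat.exists_prime_and_dvd hne
  have hpz : p ∣ z := hp.trans (Nat.gcd_dvd_left _ _)
  have hpx : p ∣ x := hp.trans (Nat.gcd_dvd_right _ _)
  have h1 : p ∣ y ^ 4 := by
    have h2 : p ∣ z ^ 2 + x ^ 2 * y ^ 2 :=
      Nat.dvd_add (hpz.trans (dvd_pow_self z (by norm_num))) ((hpx.trans (dvd_pow_self x (by norm_num))).mul_right _)
    have h3 : p ∣ x ^ 4 := hpx.trans (dvd_pow_self x (by norm_num))
    exact (Nat.dvd_add_right h3).mp (heq ▸ h2)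
  have hpy : p ∣ y := pp.dvd_of_dvd_pow h1
  exact pp.one_lt.ne' (Nat.eq_one_of_dvd_coprimes hcop hpx hpy)

lemma case1 {z x y : ℕ}
    (IH : ∀ w, w < z → ∀ a b : ℕ, 0 < a → 0 < b → Nat.Coprime a b →
      w ^ 2 + a ^ 2 * b ^ 2 = a ^ 4 + b ^ 4 → a = b)
    (hy : 0 < y) (hcop : Nat.Coprime x y) (hlt : y < x)
    (hox : Odd x) (hoy : Odd y)
    (heq : z ^ 2 + x ^ 2 * y ^ 2 = x ^ 4 + y ^ 4) : False := by
  have hx : 0 < x := hy.trans hlt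
  -- D with x^2 = y^2 + 2*D, D ≥ 1
  obtain ⟨D, hD, hD1⟩ : ∃ D, x ^ 2 = y ^ 2 + 2 * D ∧ 1 ≤ D := by
    obtain ⟨i, hi⟩ := hox
    obtain ⟨j, hj⟩ := hoy
    have h1 : x ^ 2 = 4 * (i * i + i) + 1 := by subst hi; ring
    have h2 : y ^ 2 = 4 * (j * j + j) + 1 := by subst hj; ring
    have hij : j < i := by omega
    have h3 : j * j + j < i * i + i := by nlinarith
    exact ⟨2 * (i * i + i) - 2 * (j * j + j), by omega, by omega⟩
  -- parity of z
  have hoz : z % 2 = 1 := by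
    have h1 : x ^ 4 % 2 = 1 := Nat.odd_iff.mp (hox.pow)
    have h2 : y ^ 4 % 2 = 1 := Nat.odd_iff.mp (hoy.pow)
    have h3 : (x ^ 2 * y ^ 2) % 2 = 1 := Nat.odd_iff.mp ((hox.pow).mul (hoy.pow))
    have h4 : z ^ 2 % 2 = z % 2 := Nat.pow_mod z 2 2 ▸ by rcases Nat.mod_two_eq_zero_or_one z with h | h <;> simp [h]
    omega
  have hz2 : z ^ 2 = (x * y) ^ 2 + 4 * D ^ 2 := by
    zify at heq hD ⊢
    linear_combination heq + ((x:ℤ) ^ 2 - (y:ℤ) ^ 2 + 2 * D) * hD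
  have hxyz : x * y < z := by
    have : (x * y) ^ 2 < z ^ 2 := by nlinarith
    exact (Nat.pow_lt_pow_iff_left (by norm_num)).mp this
  have hxyodd : (x * y) % 2 = 1 := Nat.odd_iff.mp (hox.mul hoy)
  obtain ⟨u, hu⟩ : ∃ u, z = x * y + 2 * u := ⟨(z - x * y) / 2, by omega⟩
  have hu1 : 1 ≤ u := by omega
  set v := x * y + u with hv
  have huv : u * v = D ^ 2 := by
    have h4 : 4 * (u * v) = 4 * D ^ 2 := by
      zify [hv] at hz2 hu ⊢
      linear_combination hz2 - ((z:ℤ) + (x:ℤ) * y + 2 * u) * hu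
    omega
  -- u, v coprime
  have hcopz : Nat.Coprime z (x * y) :=
    (cop_z hcop heq).mul_right (cop_z (Nat.coprime_comm.mp hcop) (by linarith [heq]))
  have hcopuv : Nat.Coprime u v := by
    have g1 : Nat.gcd u v ∣ x * y := by
      have := Nat.dvd_sub (Nat.gcd_dvd_right u v) (Nat.gcd_dvd_left u v)
      simpa [hv] using this
    have g2 : Nat.gcd u v ∣ z := by
      have := Nat.dvd_add (Nat.gcd_dvd_left u v) (Nat.gcd_dvd_right u v)
      have h2 : u + v = z := by omega
      rwa [h2] at this
    have : Nat.gcd u v ∣ 1 := hcopz ▸ Nat.dvd_gcd g2 g1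
    exact Nat.dvd_one.mp this
  obtain ⟨c, d, hc2, hd2, hcd⟩ := sq_helper hcopuv huv
  have hc1 : 1 ≤ c := by
    rcases Nat.eq_zero_or_pos c with h | h
    · subst h; simp at hc2; omega
    · exact h
  have hd1 : 1 ≤ d := by
    rcases Nat.eq_zero_or_pos d with h | h
    · subst h; simp at hd2; omega
    · exact h
  have hcopcd : Nat.Coprime c d := by
    have h := hcopuv
    rw [hc2, hd2] at h
    exact Nat.Coprime.coprime_dvd_left (dvd_pow_self c (by norm_num))
      (Nat.Coprime.coprime_dvd_right (dvd_pow_self d (by norm_num)) h)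
  have hkey : c ^ 2 + x * y = d ^ 2 := by omega
  set w := y ^ 2 + D with hw
  have hw2 : w ^ 2 + c ^ 2 * d ^ 2 = c ^ 4 + d ^ 4 := by
    have hwx : w ^ 2 = D ^ 2 + x ^ 2 * y ^ 2 := by
      zify [hw] at hD ⊢
      linear_combination (-(y:ℤ) ^ 2) * hD
    have hDcd : D = c * d := hcd.symm
    zify [hwx, hDcd] at hkey ⊢
    linear_combination ((x:ℤ) * y + (d:ℤ) ^ 2 - (c:ℤ) ^ 2) * hkey
  have hwz : w < z := by
    have h1 : w ^ 2 < z ^ 2 := by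
      have hwx : w ^ 2 = D ^ 2 + x ^ 2 * y ^ 2 := by
        zify [hw] at hD ⊢
        linear_combination (-(y:ℤ) ^ 2) * hD
      have hpow : (x * y) ^ 2 = x ^ 2 * y ^ 2 := by ring
      have hDD : 1 ≤ D ^ 2 := Nat.one_le_pow _ _ hD1
      linarith [hwx, hz2, hpow, hDD]
    exact (Nat.pow_lt_pow_iff_left (by norm_num)).mp h1
  have hda := IH w hwz c d hc1 hd1 hcopcd hw2
  rw [hda] at hkey
  have hxy0 : x * y = 0 := by linarith
  exact Nat.mul_ne_zero (by omega) (by omega) hxy0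

lemma z_gt {z x Y : ℕ} (hx : 0 < x) (hY : 0 < Y) (hne : x ≠ Y)
    (heq : z ^ 2 + x ^ 2 * Y ^ 2 = x ^ 4 + Y ^ 4) : Y < z := by
  have h1 : Y ^ 2 < z ^ 2 := by
    have hx4 : x ^ 4 = x ^ 2 * x ^ 2 := by ring
    have hY4 : Y ^ 4 = Y ^ 2 * Y ^ 2 := by ring
    have hx2 : 1 ≤ x ^ 2 := Nat.one_le_pow _ _ hx
    have hY2 : 1 ≤ Y ^ 2 := Nat.one_le_pow _ _ hY
    rcases Nat.lt_or_ge x Y with hc | hc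
    · have h2 : x + 1 ≤ Y := hc
      have h3 : x ^ 2 + 1 ≤ Y ^ 2 := by nlinarith
      have h4 : (x ^ 2 + 1) * Y ^ 2 ≤ Y ^ 2 * Y ^ 2 := Nat.mul_le_mul_right _ h3
      nlinarith
    · have h2 : Y + 1 ≤ x := by omega
      have h3 : Y ^ 2 + 1 ≤ x ^ 2 := by nlinarith
      have h4 : x ^ 2 * (Y ^ 2 + 1) ≤ x ^ 2 * x ^ 2 := Nat.mul_le_mul_left _ h3
      nlinarith
  exact (Nat.pow_lt_pow_iff_left (by norm_num)).mp h1

set_option maxHeartbeats 1000000 in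
lemma case2 {z x y : ℕ}
    (IH : ∀ w, w < z → ∀ a b : ℕ, 0 < a → 0 < b → Nat.Coprime a b →
      w ^ 2 + a ^ 2 * b ^ 2 = a ^ 4 + b ^ 4 → a = b)
    (hx : 0 < x) (hy : 0 < y) (hcop : Nat.Coprime x y)
    (hox : Odd x) (hey : Even y)
    (heq : z ^ 2 + x ^ 2 * y ^ 2 = x ^ 4 + y ^ 4) : False := by
  obtain ⟨v, rfl⟩ : ∃ v, y = 2 * v := ⟨y / 2, by rcases hey with ⟨w, hw⟩; omega⟩
  have hv : 0 < v := by omega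
  -- z is odd
  have hoz : z % 2 = 1 := by
    have h1 : x ^ 4 % 2 = 1 := Nat.odd_iff.mp (hox.pow)
    have h2 : (2 * v) ^ 4 % 2 = 0 := by
      have : (2 * v) ^ 4 = 2 * (8 * v ^ 4) := by ring
      omega
    have h3 : (x ^ 2 * (2 * v) ^ 2) % 2 = 0 := by
      have : x ^ 2 * (2 * v) ^ 2 = 2 * (2 * (x ^ 2 * v ^ 2)) := by ring
      omega
    have h4 : z ^ 2 % 2 = z % 2 := Nat.pow_mod z 2 2 ▸ by
      rcases Nat.mod_two_eq_zero_or_one z with h | h <;> simp [h]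
    omega
  -- z < x^2 + y^2, and obtain s with x^2+y^2 = z + 2*s
  have hsq : (x ^ 2 + (2 * v) ^ 2) ^ 2 = z ^ 2 + 3 * (x ^ 2 * (2 * v) ^ 2) := by
    zify at heq ⊢
    linear_combination -heq
  have hzlt : z < x ^ 2 + (2 * v) ^ 2 := by
    have h1 : z ^ 2 < (x ^ 2 + (2 * v) ^ 2) ^ 2 := by
      have : 0 < x ^ 2 * (2 * v) ^ 2 := by positivity
      linarith
    exact (Nat.pow_lt_pow_iff_left (by norm_num)).mp h1
  have hx2odd : (x ^ 2 + (2 * v) ^ 2) % 2 = 1 := by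
    have h1 : x ^ 2 % 2 = 1 := Nat.odd_iff.mp (hox.pow)
    have h2 : (2 * v) ^ 2 = 2 * (2 * v ^ 2) := by ring
    omega
  obtain ⟨s, hs⟩ : ∃ s, x ^ 2 + (2 * v) ^ 2 = z + 2 * s := ⟨(x ^ 2 + (2 * v) ^ 2 - z) / 2, by omega⟩
  have hs1 : 1 ≤ s := by omega
  set t := z + s with ht
  have hst : s * t = 3 * (x * v) ^ 2 := by
    have h4 : 4 * (s * t) = 4 * (3 * (x * v) ^ 2) := by
      zify [ht] at hsq hs ⊢
      linear_combination hsq - ((x:ℤ) ^ 2 + (2 * (v:ℤ)) ^ 2 + (z:ℤ) + 2 * s) * hs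
    omega
  -- s and t are coprime
  have hczx : Nat.Coprime z x := cop_z hcop heq
  have hczv : Nat.Coprime z v := by
    have h1 : Nat.Coprime z (2 * v) := cop_z (x := 2 * v) (y := x) (Nat.coprime_comm.mp hcop) (by linarith [heq])
    exact h1.coprime_dvd_right ⟨2, by ring⟩
  have hczxv : Nat.Coprime z (x * v) := hczx.mul_right hczv
  have hcopst : Nat.Coprime s t := by
    have g1 : Nat.gcd s t ∣ z := by
      have h := Nat.dvd_sub (Nat.gcd_dvd_right s t) (Nat.gcd_dvd_left s t)
      have h2 : t - s = z := by omega
      rwa [h2] at h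
    have g3 : Nat.gcd s t * Nat.gcd s t ∣ 3 * (x * v) ^ 2 :=
      hst ▸ mul_dvd_mul (Nat.gcd_dvd_left s t) (Nat.gcd_dvd_right s t)
    have g4 : Nat.Coprime (Nat.gcd s t * Nat.gcd s t) ((x * v) ^ 2) := by
      have h5 : Nat.Coprime (Nat.gcd s t) (x * v) := Nat.Coprime.coprime_dvd_left g1 hczxv
      exact (h5.mul h5).pow_right 2
    have g5 : Nat.gcd s t * Nat.gcd s t ∣ 3 := Nat.Coprime.dvd_of_dvd_mul_right g4 g3
    have g6 : Nat.gcd s t * Nat.gcd s t ≤ 3 := Nat.le_of_dvd (by norm_num) g5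
    have g7 : 1 ≤ Nat.gcd s t := Nat.gcd_pos_of_pos_left _ (by omega)
    have g8 : Nat.gcd s t ≤ 1 := by nlinarith
    exact le_antisymm g8 g7
  -- extract a, b with x^2 + (2v)^2 = a^2 + 3 b^2, a*b = x*v, coprime
  obtain ⟨a, b, hab, hsum, hcopab⟩ :
      ∃ a b, a * b = x * v ∧ x ^ 2 + (2 * v) ^ 2 = a ^ 2 + 3 * b ^ 2 ∧ Nat.Coprime a b := by
    have h3st : 3 ∣ s * t := by rw [hst]; exact Dvd.intro _ rfl
    rcases (Nat.Prime.dvd_mul Nat.prime_three).mp h3st with h3 | h3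
    · obtain ⟨s', rfl⟩ := h3
      have hst' : s' * t = (x * v) ^ 2 := by
        have : 3 * (s' * t) = 3 * (x * v) ^ 2 := by rw [← hst]; ring
        omega
      have hcop' : Nat.Coprime s' t := Nat.Coprime.coprime_dvd_left ⟨3, by ring⟩ hcopst
      obtain ⟨r0, s0, hr0, hs0, hrs0⟩ := sq_helper hcop' hst'
      refine ⟨s0, r0, by rw [mul_comm]; exact hrs0, ?_, ?_⟩
      · have : x ^ 2 + (2 * v) ^ 2 = 3 * s' + t := by omega
        rw [this, hr0, hs0]; ring
      · have h6 : Nat.Coprime r0 s0 := by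
          have h7 := hcop'
          rw [hr0, hs0] at h7
          exact Nat.Coprime.coprime_dvd_left (dvd_pow_self r0 (by norm_num))
            (Nat.Coprime.coprime_dvd_right (dvd_pow_self s0 (by norm_num)) h7)
        exact h6.symm
    · obtain ⟨t', ht'⟩ := h3
      have hst' : s * t' = (x * v) ^ 2 := by
        have h9 : 3 * (s * t') = 3 * (x * v) ^ 2 := by rw [← hst, ht']; ring
        omega
      have hcop' : Nat.Coprime s t' := Nat.Coprime.coprime_dvd_right ⟨3, by rw [ht']; ring⟩ hcopst
      obtain ⟨r0, s0, hr0, hs0, hrs0⟩ := sq_helper hcop' hst'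
      refine ⟨r0, s0, hrs0, ?_, ?_⟩
      · have h10 : x ^ 2 + (2 * v) ^ 2 = s + 3 * t' := by omega
        rw [h10, hr0, hs0]
      · rw [hr0, hs0] at hcop'
        exact Nat.Coprime.coprime_dvd_left (dvd_pow_self r0 (by norm_num))
          (Nat.Coprime.coprime_dvd_right (dvd_pow_self s0 (by norm_num)) hcop')
  have ha1 : 1 ≤ a := by
    rcases Nat.eq_zero_or_pos a with h | h
    · exfalso; rw [h, zero_mul] at hab; exact Nat.mul_ne_zero (by omega) (by omega) hab.symm
    · exact h
  have hb1 : 1 ≤ b := by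
    rcases Nat.eq_zero_or_pos b with h | h
    · exfalso; rw [h, mul_zero] at hab; exact Nat.mul_ne_zero (by omega) (by omega) hab.symm
    · exact h
  -- split a, b along x and v
  have hcopxv : Nat.Coprime x v := hcop.coprime_dvd_right ⟨2, by ring⟩
  obtain ⟨x1, y1, x2, y2, hx1y1, hx2y2, hx12, hy12⟩ :
      ∃ x1 y1 x2 y2, x1 * y1 = a ∧ x2 * y2 = b ∧ x1 * x2 = x ∧ y1 * y2 = v := by
    refine ⟨Nat.gcd a x, Nat.gcd a v, Nat.gcd b x, Nat.gcd b v, ?_, ?_, ?_, ?_⟩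
    · exact (Nat.gcd_mul_gcd_eq_iff_dvd_mul_of_coprime hcopxv).mpr (hab ▸ Dvd.intro b rfl)
    · exact (Nat.gcd_mul_gcd_eq_iff_dvd_mul_of_coprime hcopxv).mpr (hab ▸ Dvd.intro_left a rfl)
    · rw [Nat.gcd_comm a x, Nat.gcd_comm b x]
      exact (Nat.gcd_mul_gcd_eq_iff_dvd_mul_of_coprime hcopab).mpr (hab.symm ▸ Dvd.intro v rfl)
    · rw [Nat.gcd_comm a v, Nat.gcd_comm b v]
      exact (Nat.gcd_mul_gcd_eq_iff_dvd_mul_of_coprime hcopab).mpr (hab.symm ▸ Dvd.intro_left x rfl)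
  -- positivity and coprimality of the pieces
  have hx11 : 1 ≤ x1 := by
    rcases Nat.eq_zero_or_pos x1 with h | h
    · rw [h, zero_mul] at hx12; omega
    · exact h
  have hx21 : 1 ≤ x2 := by
    rcases Nat.eq_zero_or_pos x2 with h | h
    · rw [h, mul_zero] at hx12; omega
    · exact h
  have hy11 : 1 ≤ y1 := by
    rcases Nat.eq_zero_or_pos y1 with h | h
    · rw [h, zero_mul] at hy12; omega
    · exact h
  have hy21 : 1 ≤ y2 := by
    rcases Nat.eq_zero_or_pos y2 with h | h
    · rw [h, mul_zero] at hy12; omega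
    · exact h
  have c_x1y1 : Nat.Coprime x1 y1 :=
    Nat.Coprime.coprime_dvd_left (hx12 ▸ Dvd.intro x2 rfl)
      (Nat.Coprime.coprime_dvd_right (hy12 ▸ Dvd.intro y2 rfl) hcopxv)
  have c_x1y2 : Nat.Coprime x1 y2 :=
    Nat.Coprime.coprime_dvd_left (hx12 ▸ Dvd.intro x2 rfl)
      (Nat.Coprime.coprime_dvd_right (hy12 ▸ Dvd.intro_left y1 rfl) hcopxv)
  have c_x2y1 : Nat.Coprime x2 y1 :=
    Nat.Coprime.coprime_dvd_left (hx12 ▸ Dvd.intro_left x1 rfl)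
      (Nat.Coprime.coprime_dvd_right (hy12 ▸ Dvd.intro y2 rfl) hcopxv)
  have c_x1x2 : Nat.Coprime x1 x2 :=
    Nat.Coprime.coprime_dvd_left (hx1y1 ▸ Dvd.intro y1 rfl)
      (Nat.Coprime.coprime_dvd_right (hx2y2 ▸ Dvd.intro y2 rfl) hcopab)
  -- the main equation in the pieces
  have hmain : x1 ^ 2 * x2 ^ 2 + 4 * (y1 ^ 2 * y2 ^ 2) = x1 ^ 2 * y1 ^ 2 + 3 * (x2 ^ 2 * y2 ^ 2) := by
    have e1 : (x1 * x2) ^ 2 + 4 * (y1 * y2) ^ 2 = (x1 * y1) ^ 2 + 3 * (x2 * y2) ^ 2 := by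
      rw [hx12, hy12, hx1y1, hx2y2]
      zify at hsum ⊢
      linear_combination hsum
    zify at e1 ⊢
    linear_combination e1
  -- over ℤ, find k with x2^2 - y1^2 = y2^2 * k
  have h5 : (x1 : ℤ) ^ 2 * ((x2 : ℤ) ^ 2 - (y1 : ℤ) ^ 2)
      = (y2 : ℤ) ^ 2 * (3 * (x2 : ℤ) ^ 2 - 4 * (y1 : ℤ) ^ 2) := by
    zify at hmain
    linear_combination hmain
  have iC12 : IsCoprime ((y2 : ℤ) ^ 2) ((x1 : ℤ) ^ 2) := by
    have : IsCoprime ((y2 : ℤ)) ((x1 : ℤ)) := by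
      rw [Int.isCoprime_iff_gcd_eq_one, Int.gcd_natCast_natCast]
      exact c_x1y2.symm
    exact this.pow
  have hdvd : ((y2 : ℤ) ^ 2) ∣ ((x2 : ℤ) ^ 2 - (y1 : ℤ) ^ 2) := by
    refine IsCoprime.dvd_of_dvd_mul_left iC12 ?_
    exact ⟨3 * (x2 : ℤ) ^ 2 - 4 * (y1 : ℤ) ^ 2, by linear_combination h5⟩
  obtain ⟨k, hk0⟩ := hdvd
  have hy2ne : ((y2 : ℤ) ^ 2) ≠ 0 := by positivity
  have hk1 : (x1 : ℤ) ^ 2 * k = 3 * (x2 : ℤ) ^ 2 - 4 * (y1 : ℤ) ^ 2 := by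
    have h6 : (y2 : ℤ) ^ 2 * ((x1 : ℤ) ^ 2 * k) = (y2 : ℤ) ^ 2 * (3 * (x2 : ℤ) ^ 2 - 4 * (y1 : ℤ) ^ 2) := by
      linear_combination h5 - (x1 : ℤ) ^ 2 * hk0
    exact mul_left_cancel₀ hy2ne h6
  have hX2 : (x2 : ℤ) ^ 2 = k * (4 * (y2 : ℤ) ^ 2 - (x1 : ℤ) ^ 2) := by
    linear_combination 4 * hk0 + hk1
  have hY1 : (y1 : ℤ) ^ 2 = k * (3 * (y2 : ℤ) ^ 2 - (x1 : ℤ) ^ 2) := by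
    linear_combination 3 * hk0 + hk1
  have hkunit : IsUnit k := by
    have d1 : k ∣ (x2 : ℤ) ^ 2 := ⟨_, hX2⟩
    have d2 : k ∣ (y1 : ℤ) ^ 2 := ⟨_, hY1⟩
    have iC : IsCoprime ((x2 : ℤ) ^ 2) ((y1 : ℤ) ^ 2) := by
      have : IsCoprime ((x2 : ℤ)) ((y1 : ℤ)) := by
        rw [Int.isCoprime_iff_gcd_eq_one, Int.gcd_natCast_natCast]
        exact c_x2y1
      exact this.pow
    exact iC.isUnit_of_dvd' d1 d2
  rcases Int.isUnit_iff.mp hkunit with rfl | rfl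
  · -- k = 1 : contradiction mod 3
    have h31 : (x1 : ℤ) ^ 2 + (y1 : ℤ) ^ 2 = 3 * (y2 : ℤ) ^ 2 := by
      linear_combination hY1
    have hz3 : ((x1 : ZMod 3)) ^ 2 + ((y1 : ZMod 3)) ^ 2 = 0 := by
      have h32 := congrArg (fun m : ℤ => (m : ZMod 3)) h31
      push_cast at h32
      rw [h32, show (3 : ZMod 3) = 0 by decide, zero_mul]
    have hdec : ∀ u w : ZMod 3, u ^ 2 + w ^ 2 = 0 → u = 0 ∧ w = 0 := by decide
    obtain ⟨h3a, h3b⟩ := hdec _ _ hz3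
    have d1 : (3 : ℕ) ∣ x1 := (ZMod.natCast_eq_zero_iff x1 3).mp h3a
    have d2 : (3 : ℕ) ∣ y1 := (ZMod.natCast_eq_zero_iff y1 3).mp h3b
    have : (3 : ℕ) ∣ 1 := c_x1y1 ▸ Nat.dvd_gcd d1 d2
    omega
  · -- k = -1 : descend
    have hA : (x1 : ℤ) ^ 2 = (x2 : ℤ) ^ 2 + 4 * (y2 : ℤ) ^ 2 := by linear_combination -hX2
    have hCn : (x2 : ℤ) ^ 2 + (y2 : ℤ) ^ 2 = (y1 : ℤ) ^ 2 := by linear_combination -hY1 - hA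
    have nA : x1 ^ 2 = x2 ^ 2 + 4 * y2 ^ 2 := by exact_mod_cast hA
    have nC : x2 ^ 2 + y2 ^ 2 = y1 ^ 2 := by exact_mod_cast hCn
    have hoxx : Odd (x1 * x2) := by rw [hx12]; exact hox
    have hox1 : x1 % 2 = 1 := Nat.odd_iff.mp (Nat.odd_mul.mp hoxx).1
    have hox2 : x2 % 2 = 1 := Nat.odd_iff.mp (Nat.odd_mul.mp hoxx).2
    have hx2lt : x2 < x1 := by
      have h1 : x2 ^ 2 < x1 ^ 2 := by
        have h2 : 1 ≤ y2 ^ 2 := Nat.one_le_pow _ _ hy21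
        linarith
      exact (Nat.pow_lt_pow_iff_left (by norm_num)).mp h1
    obtain ⟨e, he⟩ : ∃ e, x1 = x2 + 2 * e := ⟨(x1 - x2) / 2, by omega⟩
    have he1 : 1 ≤ e := by omega
    have hef : e * (x2 + e) = y2 ^ 2 := by
      have h4 : 4 * (e * (x2 + e)) = 4 * y2 ^ 2 := by
        zify at nA he ⊢
        linear_combination nA - ((x1 : ℤ) + (x2 : ℤ) + 2 * e) * he
      omega
    have hcopef : Nat.Coprime e (x2 + e) := by
      have g1 : Nat.gcd e (x2 + e) ∣ x2 := by
        have h := Nat.dvd_sub (Nat.gcd_dvd_right e (x2 + e)) (Nat.gcd_dvd_left e (x2 + e))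
        have h2 : x2 + e - e = x2 := by omega
        rwa [h2] at h
      have g2 : Nat.gcd e (x2 + e) ∣ x1 := by
        have h := Nat.dvd_add (Nat.gcd_dvd_right e (x2 + e)) (Nat.gcd_dvd_left e (x2 + e))
        have h2 : x2 + e + e = x1 := by omega
        rwa [h2] at h
      have : Nat.gcd e (x2 + e) ∣ 1 := c_x1x2 ▸ Nat.dvd_gcd g2 g1
      exact Nat.dvd_one.mp this
    obtain ⟨r, s0, hr, hs0, hrs⟩ := sq_helper hcopef hef
    have hr1 : 1 ≤ r := by
      rcases Nat.eq_zero_or_pos r with h | h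
      · exfalso; rw [h] at hr; simp at hr; omega
      · exact h
    have hs01 : 1 ≤ s0 := by
      rcases Nat.eq_zero_or_pos s0 with h | h
      · exfalso; rw [h] at hs0; simp at hs0; omega
      · exact h
    have hcoprs : Nat.Coprime r s0 := by
      have h7 := hcopef
      rw [hs0, hr] at h7
      exact Nat.Coprime.coprime_dvd_left (dvd_pow_self r (by norm_num))
        (Nat.Coprime.coprime_dvd_right (dvd_pow_self s0 (by norm_num)) h7)
    have key : r ^ 2 + x2 = s0 ^ 2 := by omega
    rw [← hrs] at nC
    have hw2 : y1 ^ 2 + r ^ 2 * s0 ^ 2 = r ^ 4 + s0 ^ 4 := by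
      zify at nC key ⊢
      linear_combination -nC + ((x2 : ℤ) + (s0 : ℤ) ^ 2 - (r : ℤ) ^ 2) * key
    -- y1 < z
    have hy1v : y1 ≤ v := Nat.le_of_dvd hv (hy12 ▸ Dvd.intro y2 rfl)
    have hzy : 2 * v < z := by
      refine z_gt hx (by omega) ?_ heq
      intro hxeq
      rw [hxeq] at hox
      exact (Nat.not_odd_iff_even.mpr ⟨v, by ring⟩) hox
    have hy1z : y1 < z := by omega
    have hfin := IH y1 hy1z r s0 hr1 hs01 hcoprs hw2
    rw [hfin] at key
    have : x2 = 0 := by omega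
    omega

lemma main_aux : ∀ z x y : ℕ, 0 < x → 0 < y → Nat.Coprime x y →
    z ^ 2 + x ^ 2 * y ^ 2 = x ^ 4 + y ^ 4 → x = y := by
  intro z
  induction z using Nat.strong_induction_on with
  | _ z IH =>
    intro x y hx hy hcop heq
    by_cases hxy : x = y
    · exact hxy
    exfalso
    have heq' : z ^ 2 + y ^ 2 * x ^ 2 = y ^ 4 + x ^ 4 := by linarith
    rcases Nat.even_or_odd x with hex | hox
    · have hoy : Odd y := by
        rcases Nat.even_or_odd y with hey | hoy
        · exfalso
          obtain ⟨c, hc⟩ := hex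
          obtain ⟨d, hd⟩ := hey
          have h2 : 2 ∣ Nat.gcd x y := Nat.dvd_gcd ⟨c, by omega⟩ ⟨d, by omega⟩
          rw [hcop] at h2; omega
        · exact hoy
      exact case2 IH hy hx hcop.symm hoy hex heq'
    · rcases Nat.even_or_odd y with hey | hoy
      · exact case2 IH hx hy hcop hox hey heq
      · rcases Nat.lt_or_ge y x with h | h
        · exact case1 IH hy hcop h hox hoy heq
        · have h2 : x < y := by omega
          exact case1 IH hx hcop.symm h2 hoy hox heq'

theorem stmt_1 (m n : ℤ) (hm : 0 < m) (hn : 0 < n) (hcop : Int.gcd m n = 1)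
    (h : IsSquare (n ^ 4 - m ^ 2 * n ^ 2 + m ^ 4)) : m = n ∧ m = 1 := by
  obtain ⟨r, hr⟩ := h
  have h1 : ((r.natAbs : ℤ)) ^ 2 = r * r := by
    rw [← Int.natAbs_mul_self]
    push_cast
    ring
  have key : ((r.natAbs : ℤ)) ^ 2 + m ^ 2 * n ^ 2 = m ^ 4 + n ^ 4 := by
    linear_combination h1 - hr
  have hma : ((m.natAbs : ℤ)) = m := Int.natAbs_of_nonneg hm.le
  have hnb : ((n.natAbs : ℤ)) = n := Int.natAbs_of_nonneg hn.le
  rw [← hma, ← hnb] at key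
  have heqn : r.natAbs ^ 2 + m.natAbs ^ 2 * n.natAbs ^ 2 = m.natAbs ^ 4 + n.natAbs ^ 4 := by
    exact_mod_cast key
  have hcopn : Nat.Coprime m.natAbs n.natAbs := hcop
  have hab : m.natAbs = n.natAbs :=
    main_aux r.natAbs m.natAbs n.natAbs (Int.natAbs_pos.mpr hm.ne') (Int.natAbs_pos.mpr hn.ne') hcopn heqn
  have hmn : m = n := by rw [← hma, ← hnb, hab]
  refine ⟨hmn, ?_⟩
  rw [hmn] at hcop ⊢
  have h2 : Int.gcd n n = n.natAbs := Nat.gcd_self _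
  have h3 : n.natAbs = 1 := by omega
  rw [← hnb, h3]
  norm_num
end

section
/- The only rational points on the elliptic curve y² = x³ + 10x² + x are (0, 0) and the point at infinity; equivalently, the only rational solution of y² = x(x² + 10x + 1) is x = y = 0. -/
private lemma z8a : ∀ k l j : ZMod 8,
    (2*k)^2 ≠ (2*l+1)^4 - 5*(2*l+1)^2*(2*j+1)^2 + 6*(2*j+1)^4 := by decide
private lemma z8b : ∀ l j f : ZMod 8, 2*(2*l+1)^2 - 3*(2*j+1)^2 ≠ f^2 := by decide
private lemma z16 : ∀ k l b : ZMod 16,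
    (2*k+1)^4 + 10*(2*k+1)^2*(2*l+1)^2 + (2*l+1)^4 ≠ b^2 := by decide
private lemma z3 : ∀ a b c : ZMod 3, (a^2+b^2)^2 + c^2 = 0 → a = 0 ∧ b = 0 := by decide

private lemma odd_cast_zmod (n : ℕ) {e : ℤ} (he : Odd e) :
    ∃ k : ZMod n, (e : ZMod n) = 2 * k + 1 := by
  obtain ⟨t, rfl⟩ := he
  exact ⟨(t : ZMod n), by push_cast; ring⟩

private lemma even_cast_zmod (n : ℕ) {e : ℤ} (he : Even e) :
    ∃ k : ZMod n, (e : ZMod n) = 2 * k := by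
  obtain ⟨t, rfl⟩ := he
  exact ⟨(t : ZMod n), by push_cast; ring⟩

private lemma kill16 {A e1 e2 : ℤ} (hA : Even A) (h1 : Odd e1) (h2 : Odd e2)
    (h : A^2 = e1^4 - 5*e1^2*e2^2 + 6*e2^4) : False := by
  obtain ⟨k, hk⟩ := even_cast_zmod 8 hA
  obtain ⟨l, hl⟩ := odd_cast_zmod 8 h1
  obtain ⟨j, hj⟩ := odd_cast_zmod 8 h2
  apply z8a k l j
  have hc := congrArg (fun z : ℤ => (z : ZMod 8)) h
  push_cast at hc
  rw [hk, hl, hj] at hc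
  exact hc

private lemma kill23 {e1 e2 f : ℤ} (h1 : Odd e1) (h2 : Odd e2)
    (h : 2*e1^2 - 3*e2^2 = f^2) : False := by
  obtain ⟨l, hl⟩ := odd_cast_zmod 8 h1
  obtain ⟨j, hj⟩ := odd_cast_zmod 8 h2
  apply z8b l j (f : ZMod 8)
  have hc := congrArg (fun z : ℤ => (z : ZMod 8)) h
  push_cast at hc
  rw [hl, hj] at hc
  exact hc

private lemma kill_oddodd {A E B : ℤ} (hA : Odd A) (hE : Odd E)
    (h : A^4+10*A^2*E^2+E^4 = B^2) : False := by
  obtain ⟨k, hk⟩ := odd_cast_zmod 16 hA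
  obtain ⟨l, hl⟩ := odd_cast_zmod 16 hE
  apply z16 k l (B : ZMod 16)
  have hc := congrArg (fun z : ℤ => (z : ZMod 16)) h
  push_cast at hc
  rw [hk, hl] at hc
  exact hc

private lemma kill3 {A e B : ℤ} (hcop : IsCoprime A e)
    (h : A^4 - 10*A^2*e^2 + e^4 = -B^2) : False := by
  have hc := congrArg (fun z : ℤ => (z : ZMod 3)) h
  push_cast at hc
  have h30 : (3 : ZMod 3) = 0 := by decide
  have h3 := z3 (A : ZMod 3) (e : ZMod 3) (B : ZMod 3)
    (by linear_combination hc + 4*(A:ZMod 3)^2*(e:ZMod 3)^2*h30)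
  have hdA : (3:ℤ) ∣ A := by
    have := h3.1
    exact_mod_cast (ZMod.intCast_zmod_eq_zero_iff_dvd A 3).mp this
  have hde : (3:ℤ) ∣ e := by
    have := h3.2
    exact_mod_cast (ZMod.intCast_zmod_eq_zero_iff_dvd e 3).mp this
  have := hcop.isUnit_of_dvd' hdA hde
  rw [Int.isUnit_iff] at this
  omega

private lemma fourth_split {M₁ N₁ E : ℤ} (hM : 0 < M₁) (hN : 0 < N₁)
    (hcop : IsCoprime M₁ N₁) (h : M₁ * N₁ = E^4) :
    ∃ e1 e2 : ℕ, M₁ = (e1:ℤ)^4 ∧ N₁ = (e2:ℤ)^4 ∧ E.natAbs = e1*e2 := by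
  have hnat : M₁.natAbs * N₁.natAbs = E.natAbs^4 := by
    rw [← Int.natAbs_mul, h, Int.natAbs_pow]
  have hcn : Nat.Coprime M₁.natAbs N₁.natAbs := Int.isCoprime_iff_gcd_eq_one.mp hcop
  obtain ⟨e1, he1⟩ := exists_eq_pow_of_mul_eq_pow (Nat.isUnit_iff.mpr hcn) hnat
  obtain ⟨e2, he2⟩ := exists_eq_pow_of_mul_eq_pow (Nat.isUnit_iff.mpr hcn.symm)
      (by rw [mul_comm]; exact hnat)
  refine ⟨e1, e2, ?_, ?_, ?_⟩
  · rw [← Int.natAbs_of_nonneg hM.le, he1]; push_cast; ring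
  · rw [← Int.natAbs_of_nonneg hN.le, he2]; push_cast; ring
  · have h4 : (e1*e2)^4 = E.natAbs^4 := by rw [mul_pow, ← he1, ← he2, hnat]
    exact (Nat.pow_left_injective (by norm_num) h4).symm


private lemma pyth_step (u v g f : ℤ) (hu : u % 2 = 1) (hvpos : 0 < v)
    (hcop : IsCoprime u v) (h1 : u^2 + g^2 = v^2) (h2 : 3*v^2 - 2*u^2 = f^2)
    (hg : g ≠ 0)
    (ih : ∀ m n ff : ℤ, m.natAbs^2 + n.natAbs^2 ≤ v.natAbs → IsCoprime m n →
       m^4 + 10*m^2*n^2 + n^4 = ff^2 → m = 0 ∨ n = 0) : False := by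
  have hgcd : Int.gcd u g = 1 := by
    have h3 : (Int.gcd u g : ℤ) ∣ u := Int.gcd_dvd_left u g
    have h4 : (Int.gcd u g : ℤ) ∣ g := Int.gcd_dvd_right u g
    have h5 : ((Int.gcd u g : ℤ))^2 ∣ v^2 := by
      rw [← h1]; exact dvd_add (pow_dvd_pow_of_dvd h3 2) (pow_dvd_pow_of_dvd h4 2)
    have h6 : (Int.gcd u g : ℤ) ∣ v := (Int.pow_dvd_pow_iff two_ne_zero).mp h5
    have h7 := hcop.isUnit_of_dvd' h3 h6
    rw [Int.isUnit_iff] at h7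
    omega
  have ht : PythagoreanTriple u g v := by
    unfold PythagoreanTriple; linear_combination h1
  obtain ⟨m, n, hu', hg', hv', hmn, -, -⟩ := ht.coprime_classification' hgcd hu hvpos
  have heq : m^4 + 10*m^2*n^2 + n^4 = f^2 := by
    rw [hu', hv'] at h2; linear_combination h2
  have hm0 : m ≠ 0 := by rintro rfl; simp at hg'; exact hg hg'
  have hn0 : n ≠ 0 := by rintro rfl; simp at hg'; exact hg hg'
  have hmeas : m.natAbs^2 + n.natAbs^2 ≤ v.natAbs := by
    have hcast : ((m.natAbs^2 + n.natAbs^2 : ℕ) : ℤ) = ((v.natAbs : ℕ) : ℤ) := by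
      push_cast
      rw [sq_abs, sq_abs, abs_of_pos hvpos, hv']
    exact le_of_eq (Nat.cast_injective hcast)
  rcases ih m n f hmeas (Int.isCoprime_iff_gcd_eq_one.mpr hmn) heq with h | h
  · exact hm0 h
  · exact hn0 h

private lemma core' (A E B : ℤ) (hA0 : A ≠ 0) (hE0 : E ≠ 0) (hAe : Even A) (hEo : Odd E)
    (hcop : IsCoprime A E) (heq : A^4 + 10*A^2*E^2 + E^4 = B^2)
    (ih : ∀ m n ff : ℤ, m.natAbs^2 + n.natAbs^2 ≤ E.natAbs → IsCoprime m n →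
        m^4+10*m^2*n^2+n^4 = ff^2 → m = 0 ∨ n = 0) : False := by
  have hA2 : 0 < A^2 := by positivity
  have hE2 : 0 < E^2 := by positivity
  obtain ⟨C, hCdef⟩ : ∃ C : ℤ, C = |B| := ⟨|B|, rfl⟩
  have hC2 : C^2 = A^4 + 10*A^2*E^2 + E^4 := by rw [hCdef, sq_abs]; exact heq.symm
  have hCnn : 0 ≤ C := hCdef ▸ abs_nonneg B
  have hsodd : Odd (A^2 + 5*E^2) :=
    (hAe.pow_of_ne_zero (by norm_num : (2:ℕ) ≠ 0)).add_odd ((by decide : Odd (5:ℤ)).mul hEo.pow)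
  have hCodd : Odd C := by
    have hB2 : Odd (B^2) := by
      rw [← heq]
      have h1 : Even (A^4 + 10*A^2*E^2) := by
        have := hAe.pow_of_ne_zero (by norm_num : (4:ℕ) ≠ 0)
        have h2 : Even (10*A^2*E^2) := by
          have := hAe.pow_of_ne_zero (by norm_num : (2:ℕ) ≠ 0)
          exact ((this.mul_left 10).mul_right (E^2))
        exact (hAe.pow_of_ne_zero (by norm_num : (4:ℕ) ≠ 0)).add h2
      exact h1.add_odd hEo.pow
    have hBodd : Odd B := by
      rcases Int.even_or_odd B with h | h
      · exact absurd hB2 (Int.not_odd_iff_even.mpr (h.pow_of_ne_zero (by norm_num : (2:ℕ) ≠ 0)))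
      · exact h
    exact hCdef ▸ odd_abs.mpr hBodd
  have h24 : (A^2+5*E^2)^2 - C^2 = 24*E^4 := by linear_combination -hC2
  have hspos : 0 < A^2+5*E^2 := by positivity
  have hE4 : 0 < E^4 := by positivity
  have hCs : C < A^2+5*E^2 := by
    rcases lt_or_ge C (A^2+5*E^2) with h | h
    · exact h
    · exfalso; nlinarith [hCnn]
  obtain ⟨M, hM⟩ : Even (A^2+5*E^2 - C) := hsodd.sub_odd hCodd
  obtain ⟨N, hN⟩ : Even (A^2+5*E^2 + C) := hsodd.add_odd hCodd
  have hMpos : 0 < M := by linarith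
  have hNpos : 0 < N := by linarith
  have hsum : M + N = A^2+5*E^2 := by linarith
  have hMN : M * N = 6*E^4 := by
    have h4 : 4*(M*N) = 4*(6*E^4) := by
      linear_combination (-(A^2+5*E^2+C))*hM - 2*M*hN + h24
    exact mul_left_cancel₀ (by norm_num : (4:ℤ) ≠ 0) h4
  -- gcd of s and C is 1
  have hgcd_sC : Int.gcd (A^2+5*E^2) C = 1 := by
    set t := Int.gcd (A^2+5*E^2) C with htdef
    have h1 : (t:ℤ) ∣ A^2+5*E^2 := Int.gcd_dvd_left _ _
    have h2 : (t:ℤ) ∣ C := Int.gcd_dvd_right _ _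
    have htodd : ¬ 2 ∣ t := by
      intro hdvd
      have : (2:ℤ) ∣ A^2+5*E^2 := dvd_trans (by exact_mod_cast Int.natCast_dvd_natCast.mpr hdvd) h1
      rw [Int.odd_iff] at hsodd
      omega
    have htE : Nat.Coprime t E.natAbs := by
      set u := Nat.gcd t E.natAbs with hudef
      have hu1 : (u:ℤ) ∣ E := by
        have h' : (u:ℤ) ∣ (E.natAbs:ℤ) := Int.natCast_dvd_natCast.mpr (Nat.gcd_dvd_right _ _)
        exact h'.trans (Int.natAbs_dvd.mpr dvd_rfl)
      have hu2 : (u:ℤ) ∣ (t:ℤ) := Int.natCast_dvd_natCast.mpr (Nat.gcd_dvd_left _ _)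
      have hu3 : (u:ℤ) ∣ A^2 := by
        have h5E : (u:ℤ) ∣ 5*E^2 := by
          have := hu1.mul_left (5*E)
          have heq' : 5*E*E = 5*E^2 := by ring
          rwa [heq'] at this
        have hsub : A^2 = (A^2+5*E^2) - 5*E^2 := by ring
        rw [hsub]
        exact dvd_sub (hu2.trans h1) h5E
      have h7 := (hcop.pow_left : IsCoprime (A^2) E).isUnit_of_dvd' hu3 hu1
      rw [Int.isUnit_iff] at h7
      have : u = 1 := by omega
      exact this
    have h24' : ((t:ℤ))^2 ∣ 24 * E^4 := by
      rw [← h24]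
      exact dvd_sub (pow_dvd_pow_of_dvd h1 2) (pow_dvd_pow_of_dvd h2 2)
    have h24n : t^2 ∣ 24 * E.natAbs^4 := by
      have hcast : ((t^2 : ℕ) : ℤ) ∣ ((24 * E.natAbs^4 : ℕ) : ℤ) := by
        push_cast
        have habs : (|E|:ℤ)^4 = E^4 := by
          rcases abs_choice E with h | h <;> rw [h] <;> ring
        calc ((t:ℤ))^2 ∣ 24 * E^4 := h24'
          _ = 24 * |E|^4 := by rw [habs]
      exact_mod_cast hcast
    have ht24 : t^2 ∣ 24 := Nat.Coprime.dvd_of_dvd_mul_right (htE.pow 2 4) h24n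
    have ht4 : t ≤ 4 := by nlinarith [Nat.le_of_dvd (by norm_num) ht24]
    interval_cases t <;> revert ht24 htodd <;> decide
  have hcopMN : IsCoprime M N := by
    rw [Int.isCoprime_iff_gcd_eq_one]
    have h1 : (Int.gcd M N : ℤ) ∣ M := Int.gcd_dvd_left M N
    have h2 : (Int.gcd M N : ℤ) ∣ N := Int.gcd_dvd_right M N
    have hds : (Int.gcd M N : ℤ) ∣ A^2+5*E^2 := by
      rw [← hsum]; exact dvd_add h1 h2
    have hdC : (Int.gcd M N : ℤ) ∣ C := by
      have hCeq : C = N - M := by linarith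
      rw [hCeq]; exact dvd_sub h2 h1
    have hd1 := Int.dvd_gcd hds hdC
    rw [hgcd_sC] at hd1
    exact Nat.dvd_one.mp (by exact_mod_cast hd1)
  have h2MN : (2:ℤ) ∣ M * N := by rw [hMN]; exact ⟨3*E^4, by ring⟩
  have h3MN : (3:ℤ) ∣ M * N := by rw [hMN]; exact ⟨2*E^4, by ring⟩
  have h2or := (Int.prime_two.dvd_mul).mp h2MN
  have h3or := (Int.prime_three.dvd_mul).mp h3MN
  have hEabs : Odd (E.natAbs) := Int.natAbs_odd.mpr hEo
  have habsE : ((E.natAbs : ℤ))^2 = E^2 := Int.natAbs_sq E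
  rcases h2or with h2M | h2N <;> rcases h3or with h3M | h3N
  · -- 6 ∣ M : case (6,1)
    obtain ⟨M₁, hM₁⟩ : ∃ M₁, M = 6*M₁ := by
      have : (6:ℤ) ∣ M := by omega
      exact this
    have hM₁pos : 0 < M₁ := by linarith
    have hM₁N : M₁ * N = E^4 := by
      have h6 : 6*(M₁*N) = 6*E^4 := by rw [← hMN, hM₁]; ring
      exact mul_left_cancel₀ (by norm_num : (6:ℤ) ≠ 0) h6
    have hcop₁ : IsCoprime M₁ N := hcopMN.of_isCoprime_of_dvd_left ⟨6, by rw [hM₁]; ring⟩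
    obtain ⟨e1, e2, hfe1, hfe2, hEe⟩ := fourth_split hM₁pos hNpos hcop₁ hM₁N
    obtain ⟨ho1, ho2⟩ := (Nat.odd_mul).mp (hEe ▸ hEabs)
    have hEsq : E^2 = ((e1:ℤ)*(e2:ℤ))^2 := by
      rw [← habsE, hEe]; push_cast; ring
    have hkey : A^2 = 6*(e1:ℤ)^4 - 5*(e1:ℤ)^2*(e2:ℤ)^2 + (e2:ℤ)^4 := by
      linear_combination -hsum + hM₁ + 6*hfe1 + hfe2 - 5*hEsq
    exact kill16 hAe (Int.odd_coe_nat e2 |>.mpr ho2) (Int.odd_coe_nat e1 |>.mpr ho1)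
      (by linear_combination hkey)
  · -- M = 2M₁, N = 3N₁ : case (2,3)
    obtain ⟨M₁, hM₁⟩ := h2M
    obtain ⟨N₁, hN₁⟩ := h3N
    have hM₁pos : 0 < M₁ := by linarith
    have hN₁pos : 0 < N₁ := by linarith
    have hM₁N : M₁ * N₁ = E^4 := by
      have h6 : 6*(M₁*N₁) = 6*E^4 := by rw [← hMN, hM₁, hN₁]; ring
      exact mul_left_cancel₀ (by norm_num : (6:ℤ) ≠ 0) h6
    have hcop₁ : IsCoprime M₁ N₁ :=
      (hcopMN.of_isCoprime_of_dvd_left ⟨2, by rw [hM₁]; ring⟩).of_isCoprime_of_dvd_right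
        ⟨3, by rw [hN₁]; ring⟩
    obtain ⟨e1, e2, hfe1, hfe2, hEe⟩ := fourth_split hM₁pos hN₁pos hcop₁ hM₁N
    obtain ⟨ho1, ho2⟩ := (Nat.odd_mul).mp (hEe ▸ hEabs)
    have hoz1 : Odd ((e1:ℤ)) := Int.odd_coe_nat e1 |>.mpr ho1
    have hoz2 : Odd ((e2:ℤ)) := Int.odd_coe_nat e2 |>.mpr ho2
    have hEsq : E^2 = ((e1:ℤ)*(e2:ℤ))^2 := by
      rw [← habsE, hEe]; push_cast; ring
    have hkey : A^2 = 2*(e1:ℤ)^4 - 5*(e1:ℤ)^2*(e2:ℤ)^2 + 3*(e2:ℤ)^4 := by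
      linear_combination -hsum + hM₁ + 2*hfe1 + hN₁ + 3*hfe2 - 5*hEsq
    have hPQ : ((e1:ℤ)^2 - (e2:ℤ)^2) * (2*(e1:ℤ)^2 - 3*(e2:ℤ)^2) = A^2 := by
      linear_combination -hkey
    have hce : IsCoprime ((e1:ℤ)) ((e2:ℤ)) := by
      have h4 : IsCoprime ((e1:ℤ)^4) ((e2:ℤ)^4) := by rw [← hfe1, ← hfe2]; exact hcop₁
      exact ((IsCoprime.pow_left_iff (by norm_num)).mp
        ((IsCoprime.pow_right_iff (by norm_num)).mp h4))
    obtain ⟨u, v, huv⟩ := hce.pow (m := 2) (n := 2)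
    have hcopPQ : IsCoprime ((e1:ℤ)^2 - (e2:ℤ)^2) (2*(e1:ℤ)^2 - 3*(e2:ℤ)^2) :=
      ⟨3*u+2*v, -u-v, by linear_combination huv⟩
    obtain ⟨g, hg | hg⟩ := Int.sq_of_isCoprime hcopPQ hPQ
    <;> obtain ⟨f, hf | hf⟩ := Int.sq_of_isCoprime hcopPQ.symm (by rw [mul_comm]; exact hPQ)
    · -- P = g², Q = f² : mod 8 kill
      exact kill23 (f := f) hoz1 hoz2 (by linear_combination hf)
    · -- P = g², Q = -f²
      have hcontr : A^2 = -(g*f)^2 := by rw [← hPQ, hg, hf]; ring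
      linarith [sq_nonneg (g*f), hA2]
    · have hcontr : A^2 = -(g*f)^2 := by rw [← hPQ, hg, hf]; ring
      linarith [sq_nonneg (g*f), hA2]
    · -- P = -g², Q = -f² : descent
      have he2ne : e2 ≠ 0 := by
        rintro rfl
        simp at hEe
        exact hE0 hEe
      have he1ne : e1 ≠ 0 := by
        rintro rfl
        simp at hEe
        exact hE0 hEe
      have hgne : g ≠ 0 := by
        rintro rfl
        have hP0 : (e1:ℤ)^2 - (e2:ℤ)^2 = 0 := by simpa using hg
        rw [hP0, zero_mul] at hPQ
        linarith [hA2]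
      refine pyth_step (e1:ℤ) (e2:ℤ) g f (Int.odd_iff.mp hoz1)
        (by exact_mod_cast Nat.pos_of_ne_zero he2ne) hce
        (by linear_combination hg) (by linear_combination -hf) hgne ?_
      intro m n ff hle hc he
      refine ih m n ff ?_ hc he
      have : (e2:ℤ).natAbs = e2 := Int.natAbs_natCast e2
      rw [this] at hle
      calc m.natAbs^2 + n.natAbs^2 ≤ e2 := hle
        _ ≤ e1 * e2 := Nat.le_mul_of_pos_left e2 (Nat.pos_of_ne_zero he1ne)
        _ = E.natAbs := hEe.symm
  · -- M = 3M₁, N = 2N₁ : case (3,2)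
    obtain ⟨M₁, hM₁⟩ := h3M
    obtain ⟨N₁, hN₁⟩ := h2N
    have hM₁pos : 0 < M₁ := by linarith
    have hN₁pos : 0 < N₁ := by linarith
    have hM₁N : M₁ * N₁ = E^4 := by
      have h6 : 6*(M₁*N₁) = 6*E^4 := by rw [← hMN, hM₁, hN₁]; ring
      exact mul_left_cancel₀ (by norm_num : (6:ℤ) ≠ 0) h6
    have hcop₁ : IsCoprime M₁ N₁ :=
      (hcopMN.of_isCoprime_of_dvd_left ⟨3, by rw [hM₁]; ring⟩).of_isCoprime_of_dvd_right
        ⟨2, by rw [hN₁]; ring⟩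
    obtain ⟨e1, e2, hfe1, hfe2, hEe⟩ := fourth_split hM₁pos hN₁pos hcop₁ hM₁N
    obtain ⟨ho1, ho2⟩ := (Nat.odd_mul).mp (hEe ▸ hEabs)
    have hoz1 : Odd ((e1:ℤ)) := Int.odd_coe_nat e1 |>.mpr ho1
    have hoz2 : Odd ((e2:ℤ)) := Int.odd_coe_nat e2 |>.mpr ho2
    have hEsq : E^2 = ((e1:ℤ)*(e2:ℤ))^2 := by
      rw [← habsE, hEe]; push_cast; ring
    have hkey : A^2 = 3*(e1:ℤ)^4 - 5*(e1:ℤ)^2*(e2:ℤ)^2 + 2*(e2:ℤ)^4 := by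
      linear_combination -hsum + hM₁ + 3*hfe1 + hN₁ + 2*hfe2 - 5*hEsq
    have hPQ : ((e1:ℤ)^2 - (e2:ℤ)^2) * (3*(e1:ℤ)^2 - 2*(e2:ℤ)^2) = A^2 := by
      linear_combination -hkey
    have hce : IsCoprime ((e1:ℤ)) ((e2:ℤ)) := by
      have h4 : IsCoprime ((e1:ℤ)^4) ((e2:ℤ)^4) := by rw [← hfe1, ← hfe2]; exact hcop₁
      exact ((IsCoprime.pow_left_iff (by norm_num)).mp
        ((IsCoprime.pow_right_iff (by norm_num)).mp h4))
    obtain ⟨u, v, huv⟩ := hce.pow (m := 2) (n := 2)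
    have hcopPQ : IsCoprime ((e1:ℤ)^2 - (e2:ℤ)^2) (3*(e1:ℤ)^2 - 2*(e2:ℤ)^2) :=
      ⟨-2*u-3*v, u+v, by linear_combination huv⟩
    obtain ⟨g, hg | hg⟩ := Int.sq_of_isCoprime hcopPQ hPQ
    <;> obtain ⟨f, hf | hf⟩ := Int.sq_of_isCoprime hcopPQ.symm (by rw [mul_comm]; exact hPQ)
    · -- P = g², Q = f² : descent with roles swapped
      have he2ne : e2 ≠ 0 := by
        rintro rfl
        simp at hEe
        exact hE0 hEe
      have he1ne : e1 ≠ 0 := by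
        rintro rfl
        simp at hEe
        exact hE0 hEe
      have hgne : g ≠ 0 := by
        rintro rfl
        have hP0 : (e1:ℤ)^2 - (e2:ℤ)^2 = 0 := by simpa using hg
        rw [hP0, zero_mul] at hPQ
        linarith [hA2]
      refine pyth_step (e2:ℤ) (e1:ℤ) g f (Int.odd_iff.mp hoz2)
        (by exact_mod_cast Nat.pos_of_ne_zero he1ne) hce.symm
        (by linear_combination -hg) (by linear_combination hf) hgne ?_
      intro m n ff hle hc he
      refine ih m n ff ?_ hc he
      have : (e1:ℤ).natAbs = e1 := Int.natAbs_natCast e1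
      rw [this] at hle
      calc m.natAbs^2 + n.natAbs^2 ≤ e1 := hle
        _ ≤ e1 * e2 := Nat.le_mul_of_pos_right e1 (Nat.pos_of_ne_zero he2ne)
        _ = E.natAbs := hEe.symm
    · have hcontr : A^2 = -(g*f)^2 := by rw [← hPQ, hg, hf]; ring
      linarith [sq_nonneg (g*f), hA2]
    · have hcontr : A^2 = -(g*f)^2 := by rw [← hPQ, hg, hf]; ring
      linarith [sq_nonneg (g*f), hA2]
    · -- P = -g², Q = -f² : mod 8 kill with swapped roles
      exact kill23 (f := f) hoz2 hoz1 (by linear_combination -hf)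
  · -- 6 ∣ N : case (1,6)
    obtain ⟨N₁, hN₁⟩ : ∃ N₁, N = 6*N₁ := by
      have : (6:ℤ) ∣ N := by omega
      exact this
    have hN₁pos : 0 < N₁ := by linarith
    have hMN₁ : M * N₁ = E^4 := by
      have h6 : 6*(M*N₁) = 6*E^4 := by rw [← hMN, hN₁]; ring
      exact mul_left_cancel₀ (by norm_num : (6:ℤ) ≠ 0) h6
    have hcop₁ : IsCoprime M N₁ := hcopMN.of_isCoprime_of_dvd_right ⟨6, by rw [hN₁]; ring⟩
    obtain ⟨e1, e2, hfe1, hfe2, hEe⟩ := fourth_split hMpos hN₁pos hcop₁ hMN₁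
    obtain ⟨ho1, ho2⟩ := (Nat.odd_mul).mp (hEe ▸ hEabs)
    have hEsq : E^2 = ((e1:ℤ)*(e2:ℤ))^2 := by
      rw [← habsE, hEe]; push_cast; ring
    have hkey : A^2 = (e1:ℤ)^4 - 5*(e1:ℤ)^2*(e2:ℤ)^2 + 6*(e2:ℤ)^4 := by
      linear_combination -hsum + hfe1 + hN₁ + 6*hfe2 - 5*hEsq
    exact kill16 hAe (Int.odd_coe_nat e1 |>.mpr ho1) (Int.odd_coe_nat e2 |>.mpr ho2) hkey

private lemma quartic : ∀ N : ℕ, ∀ A E B : ℤ, A.natAbs^2 + E.natAbs^2 ≤ N →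
    IsCoprime A E → A^4 + 10*A^2*E^2 + E^4 = B^2 → A = 0 ∨ E = 0 := by
  intro N
  induction N using Nat.strong_induction_on with
  | _ N IH =>
    intro A E B hN hcop heq
    by_contra hcon
    push_neg at hcon
    obtain ⟨hA0, hE0⟩ := hcon
    have hAn : 1 ≤ A.natAbs := Nat.one_le_iff_ne_zero.mpr (Int.natAbs_ne_zero.mpr hA0)
    have hEn : 1 ≤ E.natAbs := Nat.one_le_iff_ne_zero.mpr (Int.natAbs_ne_zero.mpr hE0)
    have hsqA : 1 ≤ A.natAbs^2 := Nat.one_le_pow _ _ hAn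
    have hsqE : 1 ≤ E.natAbs^2 := Nat.one_le_pow _ _ hEn
    have hleA : A.natAbs ≤ A.natAbs^2 := Nat.le_self_pow (by norm_num) _
    have hleE : E.natAbs ≤ E.natAbs^2 := Nat.le_self_pow (by norm_num) _
    rcases Int.even_or_odd A with hA | hA <;> rcases Int.even_or_odd E with hE | hE
    · -- both even
      have h2A : (2:ℤ) ∣ A := hA.two_dvd
      have h2E : (2:ℤ) ∣ E := hE.two_dvd
      have := hcop.isUnit_of_dvd' h2A h2E
      rw [Int.isUnit_iff] at this
      omega
    · -- A even, E odd
      refine core' A E B hA0 hE0 hA hE hcop heq ?_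
      intro m n ff hle hc he
      exact IH E.natAbs (by omega) m n ff hle hc he
    · -- A odd, E even
      refine core' E A B hE0 hA0 hE hA hcop.symm (by linear_combination heq) ?_
      intro m n ff hle hc he
      exact IH A.natAbs (by omega) m n ff hle hc he
    · exact kill_oddodd hA hE heq

theorem stmt_7 (x y : ℚ) (h : y ^ 2 = x ^ 3 + 10 * x ^ 2 + x) : x = 0 ∧ y = 0 := by
  have hx0 : x = 0 := by
    have hxd : ((x.den:ℚ)) ≠ 0 := by exact_mod_cast x.den_nz
    have hyd : ((y.den:ℚ)) ≠ 0 := by exact_mod_cast y.den_nz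
    have hq : ((y.num:ℚ)/y.den)^2 = ((x.num:ℚ)/x.den)^3 + 10*((x.num:ℚ)/x.den)^2 + ((x.num:ℚ)/x.den) := by
      rw [Rat.num_div_den, Rat.num_div_den]; exact h
    field_simp at hq
    have hn0 : (x.den:ℤ) ≠ 0 := by exact_mod_cast x.den_nz
    have hqZ : y.num ^ 2 * ((x.den:ℤ) ^ 3 * (x.den:ℤ) ^ 2 * (x.den:ℤ)) =
        ((x.num ^ 3 * (x.den:ℤ) ^ 2 + 10 * x.num ^ 2 * (x.den:ℤ) ^ 3) * (x.den:ℤ) +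
          x.num * ((x.den:ℤ) ^ 3 * (x.den:ℤ) ^ 2)) * (y.den:ℤ) ^ 2 := by
        have h' : y.num ^ 2 * (x.den:ℤ) ^ 3 = (y.den:ℤ) ^ 2 * x.num * (x.num * (x.num + (x.den:ℤ) * 10) + (x.den:ℤ) ^ 2) := by
          exact_mod_cast hq
        linear_combination (x.den:ℤ) ^ 3 * h'
    have keyZ : y.num^2 * (x.den:ℤ)^3 =
        (y.den:ℤ)^2 * (x.num^3 + 10*x.num^2*(x.den:ℤ) + x.num*(x.den:ℤ)^2) := by
      apply mul_right_cancel₀ (pow_ne_zero 3 hn0)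
      linear_combination hqZ
    have hcmn : IsCoprime x.num ((x.den:ℤ)) := by
      rw [Int.isCoprime_iff_gcd_eq_one]
      simpa [Int.gcd, Int.natAbs_natCast] using x.reduced
    have hcpq : IsCoprime y.num ((y.den:ℤ)) := by
      rw [Int.isCoprime_iff_gcd_eq_one]
      simpa [Int.gcd, Int.natAbs_natCast] using y.reduced
    have hqdvd : ((y.den:ℤ))^2 ∣ ((x.den:ℤ))^3 := by
      have h1 : ((y.den:ℤ))^2 ∣ y.num^2 * (x.den:ℤ)^3 := ⟨_, keyZ⟩
      exact (hcpq.symm.pow :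
        IsCoprime ((y.den:ℤ)^2) (y.num^2)).dvd_of_dvd_mul_left h1
    have hK : IsCoprime (((x.den:ℤ))^3)
        (x.num^3 + 10*x.num^2*(x.den:ℤ) + x.num*(x.den:ℤ)^2) := by
      have h1 : IsCoprime ((x.den:ℤ)) (x.num) := hcmn.symm
      have h2 : IsCoprime ((x.den:ℤ)) (x.num^3) := h1.pow_right
      have h3 := h2.add_mul_left_right (10*x.num^2 + x.num*(x.den:ℤ))
      have h4 : x.num^3 + (x.den:ℤ)*(10*x.num^2 + x.num*(x.den:ℤ)) =
          x.num^3 + 10*x.num^2*(x.den:ℤ) + x.num*(x.den:ℤ)^2 := by ring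
      rw [h4] at h3
      exact h3.pow_left
    have hndvd : ((x.den:ℤ))^3 ∣ ((y.den:ℤ))^2 := by
      have h1 : ((x.den:ℤ))^3 ∣
          ((y.den:ℤ))^2 * (x.num^3 + 10*x.num^2*(x.den:ℤ) + x.num*(x.den:ℤ)^2) :=
        ⟨y.num^2, by linear_combination -keyZ⟩
      exact hK.dvd_of_dvd_mul_right h1
    have hq2n3 : ((y.den:ℤ))^2 = ((x.den:ℤ))^3 :=
      Int.dvd_antisymm (by positivity) (by positivity) hqdvd hndvd
    have hndvdq : ((x.den:ℤ)) ∣ ((y.den:ℤ)) := by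
      have h1 : ((x.den:ℤ))^2 ∣ ((y.den:ℤ))^2 := by
        rw [hq2n3]; exact pow_dvd_pow _ (by norm_num)
      exact (Int.pow_dvd_pow_iff two_ne_zero).mp h1
    obtain ⟨e, he⟩ := hndvdq
    have he2 : e^2 = ((x.den:ℤ)) := by
      have h1 : ((x.den:ℤ))^2 * e^2 = ((x.den:ℤ))^2 * (x.den:ℤ) := by
        rw [← mul_pow, ← he, hq2n3]; ring
      exact mul_left_cancel₀ (pow_ne_zero 2 hn0) h1
    have he0 : e ≠ 0 := by rintro rfl; exact hn0 (by simpa using he2.symm)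
    have hp2 : y.num^2 = x.num^3 + 10*x.num^2*(x.den:ℤ) + x.num*(x.den:ℤ)^2 := by
      rw [hq2n3] at keyZ
      exact mul_right_cancel₀ (pow_ne_zero 3 hn0) (by linear_combination keyZ)
    rw [← he2] at hp2
    have hp2' : x.num * (x.num^2 + 10*x.num*e^2 + e^4) = y.num^2 := by
      linear_combination -hp2
    have hcme : IsCoprime x.num e := by
      have h1 : IsCoprime x.num (e^2) := by rw [he2]; exact hcmn
      exact h1.of_isCoprime_of_dvd_right (dvd_pow_self e two_ne_zero)
    have hcK : IsCoprime x.num (x.num^2 + 10*x.num*e^2 + e^4) := by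
      have h1 : IsCoprime x.num (e^4) := hcme.pow_right
      have h2 := h1.add_mul_left_right (x.num + 10*e^2)
      have h3 : e^4 + x.num*(x.num + 10*e^2) = x.num^2 + 10*x.num*e^2 + e^4 := by ring
      rwa [h3] at h2
    obtain ⟨a, ha | ha⟩ := Int.sq_of_isCoprime hcK hp2'
    · -- x.num = a^2
      obtain ⟨b, hb | hb⟩ := Int.sq_of_isCoprime hcK.symm (by rw [mul_comm]; exact hp2')
      · -- positive case: quartic descent
        have hcae : IsCoprime a e := by
          have h1 : IsCoprime (a^2) e := by rw [← ha]; exact hcme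
          exact h1.of_isCoprime_of_dvd_left (dvd_pow_self a two_ne_zero)
        have heq4 : a^4 + 10*a^2*e^2 + e^4 = b^2 := by
          linear_combination hb - (x.num + a^2 + 10*e^2)*ha
        rcases quartic (a.natAbs^2 + e.natAbs^2) a e b le_rfl hcae heq4 with h0 | h0
        · rw [h0] at ha
          exact Rat.num_eq_zero.mp (by simpa using ha)
        · exact absurd h0 he0
      · -- x.num = a², K = -b²
        have h1 : y.num^2 = -(a*b)^2 := by
          linear_combination -hp2' - b^2*ha + x.num*hb
        have hab : (a*b)^2 = 0 := by nlinarith [sq_nonneg (a*b), sq_nonneg y.num]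
        rcases mul_eq_zero.mp (pow_eq_zero_iff two_ne_zero |>.mp hab) with h0 | h0
        · rw [h0] at ha
          exact Rat.num_eq_zero.mp (by simpa using ha)
        · exfalso
          rw [h0] at hb
          have hm0 : 0 ≤ x.num := ha ▸ sq_nonneg a
          have he4 : 0 < e^4 := by positivity
          nlinarith [sq_nonneg x.num, mul_nonneg hm0 (sq_nonneg e)]
    · -- x.num = -a^2
      rcases eq_or_ne a 0 with rfl | ha0
      · exact Rat.num_eq_zero.mp (by simpa using ha)
      · exfalso
        have hcae : IsCoprime a e := by
          have h1 : IsCoprime (a^2) e := by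
            have := hcme.neg_left
            rwa [ha, neg_neg] at this
          exact h1.of_isCoprime_of_dvd_left (dvd_pow_self a two_ne_zero)
        obtain ⟨b, hb | hb⟩ := Int.sq_of_isCoprime hcK.symm (by rw [mul_comm]; exact hp2')
        · -- K = b²: force b = 0
          have h1 : y.num^2 = -(a*b)^2 := by
            linear_combination -hp2' + b^2*ha + x.num*hb
          have hab : (a*b)^2 = 0 := by nlinarith [sq_nonneg (a*b), sq_nonneg y.num]
          rcases mul_eq_zero.mp (pow_eq_zero_iff two_ne_zero |>.mp hab) with h0 | h0
          · exact ha0 h0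
          · rw [h0] at hb
            refine kill3 (B := 0) hcae ?_
            linear_combination hb + (a^2 - x.num - 10*e^2)*ha
        · refine kill3 (B := b) hcae ?_
          linear_combination hb + (a^2 - x.num - 10*e^2)*ha
  refine ⟨hx0, ?_⟩
  rw [hx0] at h
  norm_num at h
  exact h
end

section
/- The only rational solution of y² = (x² + 18x − 27)·x (that is, the only rational point on the curve y² = x³ + 18x² − 27x) is (x, y) = (0, 0). -/
set_option maxHeartbeats 1000000

private lemma primeNotCoprime' {a b q : ℤ} (hq : Prime q) (ha : q ∣ a) (hb : q ∣ b)
    (h : IsCoprime a b) : False :=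
  hq.not_unit (h.isUnit_of_dvd' ha hb)

private lemma noPrimeCommon (a b : ℤ)
    (H : ∀ q : ℤ, Prime q → q ∣ a → q ∣ b → False) : IsCoprime a b := by
  rw [Int.isCoprime_iff_gcd_eq_one]
  by_contra hg
  obtain ⟨p, pp, pd⟩ := Nat.exists_prime_and_dvd hg
  have hpz : Prime (p : ℤ) := Nat.prime_iff_prime_int.mp pp
  exact H _ hpz ((Int.natCast_dvd_natCast.mpr pd).trans (Int.gcd_dvd_left _ _))
    ((Int.natCast_dvd_natCast.mpr pd).trans (Int.gcd_dvd_right _ _))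

private lemma pow4_split (a b S : ℤ) (ha : 0 < a) (hb : 0 < b) (hco : IsCoprime a b)
    (h : a * b = S ^ 4) :
    ∃ g h' : ℤ, 0 ≤ g ∧ 0 ≤ h' ∧ IsCoprime g h' ∧ g * h' = |S| ∧ a = g ^ 4 ∧ b = h' ^ 4 := by
  obtain ⟨d, hd⟩ := exists_associated_pow_of_mul_eq_pow' hco h
  obtain ⟨e, he⟩ := exists_associated_pow_of_mul_eq_pow' hco.symm (by rw [mul_comm]; exact h)
  rw [Int.associated_iff] at hd he
  have hda : a = d ^ 4 := by
    rcases hd with hd | hd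
    · exact hd.symm
    · exfalso; have h4 : 0 ≤ d ^ 4 := by positivity
      linarith
  have heb : b = e ^ 4 := by
    rcases he with he | he
    · exact he.symm
    · exfalso; have h4 : 0 ≤ e ^ 4 := by positivity
      linarith
  have hd4 : |d| ^ 4 = d ^ 4 := by rw [← abs_pow]; exact abs_of_nonneg (by positivity)
  have he4 : |e| ^ 4 = e ^ 4 := by rw [← abs_pow]; exact abs_of_nonneg (by positivity)
  have hS4 : |S| ^ 4 = S ^ 4 := by rw [← abs_pow]; exact abs_of_nonneg (by positivity)
  have hco4 : IsCoprime (|d| ^ 4) (|e| ^ 4) := by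
    rw [hd4, he4, ← hda, ← heb]; exact hco
  have hcogh : IsCoprime |d| |e| :=
    (IsCoprime.pow_left_iff (by norm_num)).mp ((IsCoprime.pow_right_iff (by norm_num)).mp hco4)
  have hP : (|d| * |e|) ^ 4 = |S| ^ 4 := by
    rw [mul_pow, hd4, he4, ← hda, ← heb, h, hS4]
  have hprod : |d| * |e| = |S| := by
    rcases lt_trichotomy (|d| * |e|) |S| with hlt | heq | hlt
    · exact absurd hP (ne_of_lt (pow_lt_pow_left₀ hlt (by positivity) (by norm_num)))
    · exact heq
    · exact absurd hP.symm (ne_of_lt (pow_lt_pow_left₀ hlt (abs_nonneg S) (by norm_num)))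
  exact ⟨|d|, |e|, abs_nonneg d, abs_nonneg e, hcogh, hprod,
    by rw [hd4]; exact hda, by rw [he4]; exact heb⟩

private lemma factor432_aux (α β S : ℤ) (hα : 0 < α) (hβ : 0 < β) (hco : IsCoprime α β)
    (h : α * β = 432 * S ^ 4) (h3 : (3:ℤ) ∣ α) :
    ∃ g h' : ℤ, 0 ≤ g ∧ 0 ≤ h' ∧ IsCoprime g h' ∧ g * h' = |S| ∧
      ((α = 27 * g ^ 4 ∧ β = 16 * h' ^ 4) ∨ (α = 432 * g ^ 4 ∧ β = h' ^ 4)) := by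
  have h3β : ¬ (3:ℤ) ∣ β := fun hd => primeNotCoprime' Int.prime_three h3 hd hco
  have hco27 : IsCoprime (27:ℤ) β := by
    have h3c : IsCoprime (3:ℤ) β := (Int.prime_three.coprime_iff_not_dvd).mpr h3β
    rw [show (27:ℤ) = 3 ^ 3 by norm_num]
    exact IsCoprime.pow_left h3c
  obtain ⟨α₁, rfl⟩ : (27:ℤ) ∣ α :=
    hco27.dvd_of_dvd_mul_right ⟨16 * S ^ 4, by linear_combination h⟩
  have hα₁β : α₁ * β = 16 * S ^ 4 := by
    have h27 : 27 * (α₁ * β) = 27 * (16 * S ^ 4) := by linear_combination h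
    linarith
  have hcoα₁β : IsCoprime α₁ β := hco.of_mul_left_right
  have hα₁pos : 0 < α₁ := by nlinarith
  have h2d : (2:ℤ) ∣ α₁ * β := ⟨8 * S ^ 4, by linear_combination hα₁β⟩
  rcases Int.prime_two.dvd_mul.mp h2d with h2α | h2β
  · -- 2 ∣ α₁, so 16 ∣ α₁
    have h2nβ : ¬ (2:ℤ) ∣ β := fun hd =>
      primeNotCoprime' Int.prime_two (h2α.mul_left 27) hd hco
    have hco16 : IsCoprime (16:ℤ) β := by
      have h2c : IsCoprime (2:ℤ) β := (Int.prime_two.coprime_iff_not_dvd).mpr h2nβ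
      rw [show (16:ℤ) = 2 ^ 4 by norm_num]
      exact IsCoprime.pow_left h2c
    obtain ⟨α₂, rfl⟩ : (16:ℤ) ∣ α₁ :=
      hco16.dvd_of_dvd_mul_right ⟨S ^ 4, by linear_combination hα₁β⟩
    have hfin : α₂ * β = S ^ 4 := by
      have h16 : 16 * (α₂ * β) = 16 * S ^ 4 := by linear_combination hα₁β
      linarith
    have hα₂pos : 0 < α₂ := by nlinarith
    obtain ⟨g, h', hg, hh, hcogh, hghS, hag, hbh⟩ :=
      pow4_split α₂ β S hα₂pos hβ hcoα₁β.of_mul_left_right hfin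
    exact ⟨g, h', hg, hh, hcogh, hghS, Or.inr ⟨by rw [hag]; ring, hbh⟩⟩
  · -- 2 ∣ β, so 16 ∣ β
    have h2nα : ¬ (2:ℤ) ∣ α₁ := fun hd => primeNotCoprime' Int.prime_two hd h2β hcoα₁β
    have hco16 : IsCoprime (16:ℤ) α₁ := by
      have h2c : IsCoprime (2:ℤ) α₁ := (Int.prime_two.coprime_iff_not_dvd).mpr h2nα
      rw [show (16:ℤ) = 2 ^ 4 by norm_num]
      exact IsCoprime.pow_left h2c
    obtain ⟨β₁, rfl⟩ : (16:ℤ) ∣ β :=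
      hco16.dvd_of_dvd_mul_right ⟨S ^ 4, by linear_combination hα₁β⟩
    have hfin : α₁ * β₁ = S ^ 4 := by
      have h16 : 16 * (α₁ * β₁) = 16 * S ^ 4 := by linear_combination hα₁β
      linarith
    have hβ₁pos : 0 < β₁ := by nlinarith
    obtain ⟨g, h', hg, hh, hcogh, hghS, hag, hbh⟩ :=
      pow4_split α₁ β₁ S hα₁pos hβ₁pos hcoα₁β.of_mul_right_right hfin
    exact ⟨g, h', hg, hh, hcogh, hghS, Or.inl ⟨by rw [hag], by rw [hbh]⟩⟩

private lemma factor432 (α β S : ℤ) (hα : 0 < α) (hβ : 0 < β) (hco : IsCoprime α β)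
    (h : α * β = 432 * S ^ 4) :
    ∃ g h' : ℤ, 0 ≤ g ∧ 0 ≤ h' ∧ IsCoprime g h' ∧ g * h' = |S| ∧
      ((α = g ^ 4 ∧ β = 432 * h' ^ 4) ∨ (α = 16 * g ^ 4 ∧ β = 27 * h' ^ 4) ∨
       (α = 27 * g ^ 4 ∧ β = 16 * h' ^ 4) ∨ (α = 432 * g ^ 4 ∧ β = h' ^ 4)) := by
  have h3d : (3:ℤ) ∣ α * β := ⟨144 * S ^ 4, by linear_combination h⟩
  rcases Int.prime_three.dvd_mul.mp h3d with h3 | h3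
  · obtain ⟨g, h', hg, hh, hcogh, hghS, hc⟩ := factor432_aux α β S hα hβ hco h h3
    exact ⟨g, h', hg, hh, hcogh, hghS, by tauto⟩
  · obtain ⟨g, h', hg, hh, hcogh, hghS, hc⟩ :=
      factor432_aux β α S hβ hα hco.symm (by rw [mul_comm]; exact h) h3
    refine ⟨h', g, hh, hg, hcogh.symm, by rw [mul_comm]; exact hghS, ?_⟩
    rcases hc with ⟨hb, ha⟩ | ⟨hb, ha⟩
    · exact Or.inr (Or.inl ⟨ha, hb⟩)
    · exact Or.inl ⟨ha, hb⟩

private lemma Z2a : ∀ t e : ZMod 2, t ^ 2 = 16 * e → t = 0 := by decide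
private lemma Z2b : ∀ t e : ZMod 2, t ^ 2 = 4 * e → t = 0 := by decide
private lemma Z4a : ∀ c a b : ZMod 4,
    c ^ 2 ≠ a ^ 4 - 9 * a ^ 2 * (2 * b + 1) ^ 2 + 27 * (2 * b + 1) ^ 4 := by decide
private lemma Z16par : ∀ t a b : ZMod 16,
    t ^ 2 ≠ (2 * a + 1) ^ 4 - 36 * (2 * a + 1) ^ 2 * (2 * b + 1) ^ 2
      + 432 * (2 * b + 1) ^ 4 := by decide
private lemma Z4t : ∀ c a s : ZMod 4,
    (c + c) ^ 2 ≠ (2 * a + 1) ^ 4 - 36 * (2 * a + 1) ^ 2 * s ^ 2 + 432 * s ^ 4 := by decide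
private lemma Z3a : ∀ x y z : ZMod 3,
    x ^ 2 = 432 * z ^ 4 - y ^ 4 + 72 * (y * z) ^ 2 → x = 0 := by decide
private lemma Z3b : ∀ x y z : ZMod 3,
    x ^ 2 = 27 * z ^ 4 - 16 * y ^ 4 + 72 * (y * z) ^ 2 → x = 0 := by decide
private lemma Z16a : ∀ x z a : ZMod 16,
    x ^ 2 ≠ 16 * z ^ 4 - 27 * (2 * a + 1) ^ 4 + 72 * ((2 * a + 1) * z) ^ 2 := by decide
private lemma Z16b : ∀ x u b : ZMod 16,
    x ^ 2 ≠ 16 * u ^ 4 + 27 * (2 * b + 1) ^ 4 - 36 * (u * (2 * b + 1)) ^ 2 := by decide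
private lemma Z16c : ∀ x v a : ZMod 16,
    x ^ 2 ≠ 27 * (2 * a + 1) ^ 4 + 16 * v ^ 4 - 36 * ((2 * a + 1) * v) ^ 2 := by decide


private lemma cancel2 {x y : ℤ} (h : 2 * x = 2 * y) : x = y := by omega
private lemma cancel3 {x y : ℤ} (h : 3 * x = 3 * y) : x = y := by omega
private lemma cancel4 {x y : ℤ} (h : 4 * x = 4 * y) : x = y := by omega
private lemma cancel9 {x y : ℤ} (h : 9 * x = 9 * y) : x = y := by omega

private lemma keyA : ∀ n : ℕ, ∀ s r t : ℤ, s.natAbs = n → s ≠ 0 → IsCoprime r s →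
    t ^ 2 ≠ r ^ 4 - 36 * r ^ 2 * s ^ 2 + 432 * s ^ 4 := by
  intro n
  induction n using Nat.strong_induction_on with
  | _ n IH =>
  intro s r t hn hs hco heq
  rcases Int.even_or_odd r with ⟨a, ha⟩ | ⟨a, ha⟩
  · -- r even
    rcases Int.even_or_odd s with ⟨b, hb⟩ | ⟨b, hb⟩
    · -- both even : contradicts coprimality
      exact primeNotCoprime' Int.prime_two ⟨a, by omega⟩ ⟨b, by omega⟩ hco
    · -- r even, s odd
      subst ha hb
      have h16 : t ^ 2 = 16 * (a ^ 4 - 9 * a ^ 2 * (2 * b + 1) ^ 2 + 27 * (2 * b + 1) ^ 4) := by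
        linear_combination heq
      have ht2 : ((2:ℕ):ℤ) ∣ t := by
        rw [← ZMod.intCast_zmod_eq_zero_iff_dvd]
        have hz := congrArg (fun m : ℤ => (m : ZMod 2)) h16
        push_cast at hz
        exact Z2a _ _ hz
      obtain ⟨c, rfl⟩ : (2:ℤ) ∣ t := by exact_mod_cast ht2
      have h4 : c ^ 2 = 4 * (a ^ 4 - 9 * a ^ 2 * (2 * b + 1) ^ 2 + 27 * (2 * b + 1) ^ 4) :=
        cancel4 (by linear_combination h16)
      have hc2 : ((2:ℕ):ℤ) ∣ c := by
        rw [← ZMod.intCast_zmod_eq_zero_iff_dvd]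
        have hz := congrArg (fun m : ℤ => (m : ZMod 2)) h4
        push_cast at hz
        exact Z2b _ _ hz
      obtain ⟨d, rfl⟩ : (2:ℤ) ∣ c := by exact_mod_cast hc2
      have hd2 : d ^ 2 = a ^ 4 - 9 * a ^ 2 * (2 * b + 1) ^ 2 + 27 * (2 * b + 1) ^ 4 :=
        cancel4 (by linear_combination h4)
      have hz := congrArg (fun m : ℤ => (m : ZMod 4)) hd2
      push_cast at hz
      exact Z4a _ _ _ hz
  · -- r odd
    have hoddr : Odd r := ⟨a, ha⟩
    rcases Int.even_or_odd s with ⟨s₁, hb⟩ | ⟨b, hb⟩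
    swap
    · -- both odd
      rw [ha, hb] at heq
      have hz := congrArg (fun m : ℤ => (m : ZMod 16)) heq
      push_cast at hz
      exact Z16par _ _ _ hz
    -- MAIN CASE : r odd, s = s₁ + s₁
    subst hb
    have hs₁ : s₁ ≠ 0 := by omega
    -- 3 does not divide r
    have hr3 : ¬ (3:ℤ) ∣ r := by
      rintro ⟨r₂, hr₂⟩
      rw [hr₂] at heq
      have h1 : t ^ 2 = 3 * (27 * r₂ ^ 4 - 108 * r₂ ^ 2 * (s₁ + s₁) ^ 2
          + 144 * (s₁ + s₁) ^ 4) := by linear_combination heq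
      obtain ⟨t₂, rfl⟩ : (3:ℤ) ∣ t := Int.prime_three.dvd_of_dvd_pow (n := 2) ⟨_, h1⟩
      have h2 : t₂ ^ 2 = 9 * r₂ ^ 4 - 36 * r₂ ^ 2 * (s₁ + s₁) ^ 2 + 48 * (s₁ + s₁) ^ 4 :=
        cancel9 (by linear_combination h1)
      obtain ⟨t₃, rfl⟩ : (3:ℤ) ∣ t₂ := Int.prime_three.dvd_of_dvd_pow (n := 2)
        ⟨3 * r₂ ^ 4 - 12 * r₂ ^ 2 * (s₁ + s₁) ^ 2 + 16 * (s₁ + s₁) ^ 4, by linear_combination h2⟩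
      have h3 : 3 * t₃ ^ 2 = 3 * r₂ ^ 4 - 12 * r₂ ^ 2 * (s₁ + s₁) ^ 2 + 16 * (s₁ + s₁) ^ 4 :=
        cancel3 (by linear_combination h2)
      have h3s : (3:ℤ) ∣ 16 * (s₁ + s₁) ^ 4 :=
        ⟨t₃ ^ 2 - r₂ ^ 4 + 4 * r₂ ^ 2 * (s₁ + s₁) ^ 2, by linear_combination -h3⟩
      rcases Int.prime_three.dvd_mul.mp h3s with hdd | hdd
      · norm_num at hdd
      · exact primeNotCoprime' Int.prime_three ⟨r₂, hr₂⟩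
          (Int.prime_three.dvd_of_dvd_pow hdd) hco
    -- t is odd
    rcases Int.even_or_odd t with ⟨c, hcv⟩ | hoddt
    · rw [hcv, ha] at heq
      have hz := congrArg (fun m : ℤ => (m : ZMod 4)) heq
      push_cast at hz
      exact Z4t _ _ _ hz
    have htne : t ≠ 0 := by rintro rfl; exact (Int.not_odd_iff_even.mpr Even.zero) hoddt
    -- pass to T = |t| > 0, odd
    have hTodd : Odd |t| := by
      rcases abs_choice t with hab | hab <;> rw [hab]
      · exact hoddt
      · exact hoddt.neg
    have hTpos : 0 < |t| := abs_pos.mpr htne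
    have hT2 : |t| ^ 2 = r ^ 4 - 36 * r ^ 2 * (s₁ + s₁) ^ 2 + 432 * (s₁ + s₁) ^ 4 := by
      rw [sq_abs]; exact heq
    -- w = r^2 - 18 s^2 is odd
    have hwodd : Odd (r ^ 2 - 18 * (s₁ + s₁) ^ 2) :=
      (hoddr.pow).sub_even ⟨9 * (s₁ + s₁) ^ 2, by ring⟩
    obtain ⟨A, hA⟩ : Even (|t| - (r ^ 2 - 18 * (s₁ + s₁) ^ 2)) := hTodd.sub_odd hwodd
    obtain ⟨B, hB⟩ : Even (|t| + (r ^ 2 - 18 * (s₁ + s₁) ^ 2)) := hTodd.add_odd hwodd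
    have hprod : A * B = 432 * s₁ ^ 4 :=
      cancel4 (by
        linear_combination (-(|t| + (r ^ 2 - 18 * (s₁ + s₁) ^ 2))) * hA + (-(A + A)) * hB + hT2)
    have hsum : A + B = |t| := cancel2 (by linear_combination (-1) * hA + (-1) * hB)
    have hdiff : B - A = r ^ 2 - 18 * (s₁ + s₁) ^ 2 :=
      cancel2 (by linear_combination hA - hB)
    have hs₁4 : 0 < s₁ ^ 4 := by
      have h2 : 0 < s₁ ^ 2 := lt_of_le_of_ne (sq_nonneg s₁) (Ne.symm (pow_ne_zero 2 hs₁))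
      have h44 : s₁ ^ 4 = (s₁ ^ 2) ^ 2 := by ring
      rw [h44]; exact pow_pos h2 2
    have hABpos : 0 < A * B := by rw [hprod]; exact mul_pos (by norm_num) hs₁4
    have hApos : 0 < A := by
      rcases le_or_gt A 0 with hle | hlt
      · exfalso
        have hBnn : 0 ≤ B := by linarith only [hsum, hTpos, hle]
        have hnp : A * B ≤ 0 := mul_nonpos_iff.mpr (Or.inr ⟨hle, hBnn⟩)
        linarith only [hnp, hABpos]
      · exact hlt
    have hBpos : 0 < B := by
      rcases le_or_gt B 0 with hle | hlt
      · exfalso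
        have hnp : A * B ≤ 0 := mul_nonpos_iff.mpr (Or.inl ⟨hApos.le, hle⟩)
        linarith only [hnp, hABpos]
      · exact hlt
    have h2T : ¬ (2:ℤ) ∣ |t| := by
      rintro ⟨k, hk⟩
      exact (Int.not_even_iff_odd.mpr hTodd) ⟨k, by linarith only [hk]⟩
    -- A, B coprime
    have hcoAB : IsCoprime A B := by
      apply noPrimeCommon
      intro q hq hqA hqB
      have hqT : q ∣ |t| := by rw [← hsum]; exact dvd_add hqA hqB
      have hqw : q ∣ r ^ 2 - 18 * (s₁ + s₁) ^ 2 := by rw [← hdiff]; exact dvd_sub hqB hqA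
      have hq1728 : q ∣ 1728 * s₁ ^ 4 := by
        have he : |t| ^ 2 - (r ^ 2 - 18 * (s₁ + s₁) ^ 2) ^ 2 = 1728 * s₁ ^ 4 := by
          linear_combination hT2
        rw [← he]
        exact dvd_sub (hqT.pow (by norm_num)) (hqw.pow (by norm_num))
      rcases hq.dvd_mul.mp hq1728 with hd | hd
      · -- q ∣ 1728 = 2^6*3^3
        rw [show (1728:ℤ) = 2 ^ 6 * 3 ^ 3 by norm_num] at hd
        rcases hq.dvd_mul.mp hd with hd2 | hd3
        · have h2q : q ∣ (2:ℤ) := hq.dvd_of_dvd_pow hd2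
          have hqn : q.natAbs = 2 := by
            have := Int.natAbs_dvd_natAbs.mpr h2q
            exact (Nat.prime_dvd_prime_iff_eq (Int.prime_iff_natAbs_prime.mp hq)
              Nat.prime_two).mp this
          apply h2T
          have : ((q.natAbs : ℤ)) ∣ |t| := Int.natAbs_dvd.mpr hqT
          rw [hqn] at this; exact_mod_cast this
        · have h3q : q ∣ (3:ℤ) := hq.dvd_of_dvd_pow hd3
          have hqn : q.natAbs = 3 := by
            have := Int.natAbs_dvd_natAbs.mpr h3q
            exact (Nat.prime_dvd_prime_iff_eq (Int.prime_iff_natAbs_prime.mp hq)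
              Nat.prime_three).mp this
          have h3w : (3:ℤ) ∣ r ^ 2 - 18 * (s₁ + s₁) ^ 2 := by
            have : ((q.natAbs : ℤ)) ∣ r ^ 2 - 18 * (s₁ + s₁) ^ 2 := Int.natAbs_dvd.mpr hqw
            rw [hqn] at this; exact_mod_cast this
          have h3r : (3:ℤ) ∣ r := by
            apply Int.prime_three.dvd_of_dvd_pow (n := 2)
            have : r ^ 2 = (r ^ 2 - 18 * (s₁ + s₁) ^ 2) + 3 * (6 * (s₁ + s₁) ^ 2) := by ring
            rw [this]
            exact dvd_add h3w ⟨6 * (s₁ + s₁) ^ 2, rfl⟩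
          exact hr3 h3r
      · -- q ∣ s₁^4
        have hqs₁ : q ∣ s₁ := hq.dvd_of_dvd_pow hd
        have hqs : q ∣ s₁ + s₁ := dvd_add hqs₁ hqs₁
        have hqr : q ∣ r := by
          apply hq.dvd_of_dvd_pow (n := 2)
          have : r ^ 2 = (r ^ 2 - 18 * (s₁ + s₁) ^ 2) + 18 * (s₁ + s₁) ^ 2 := by ring
          rw [this]
          exact dvd_add hqw (Dvd.dvd.mul_left (hqs.pow (by norm_num)) 18)
        exact primeNotCoprime' hq hqr hqs hco
    obtain ⟨g, h₁, hg0, hh0, hcogh, hgh, hcases⟩ := factor432 A B s₁ hApos hBpos hcoAB hprod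
    have hs1sq : (g * h₁) ^ 2 = s₁ ^ 2 := by rw [hgh]; exact sq_abs s₁
    rcases hcases with ⟨rfl, rfl⟩ | ⟨rfl, rfl⟩ | ⟨rfl, rfl⟩ | ⟨rfl, rfl⟩
    · -- (g^4, 432 h₁^4) : impossible mod 3
      have E1 : r ^ 2 = 432 * h₁ ^ 4 - g ^ 4 + 72 * (g * h₁) ^ 2 := by
        linear_combination (-1) * hdiff + (-72) * hs1sq
      have hz := congrArg (fun m : ℤ => (m : ZMod 3)) E1
      push_cast at hz
      have := Z3a _ _ _ hz
      rw [ZMod.intCast_zmod_eq_zero_iff_dvd] at this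
      exact hr3 (by exact_mod_cast this)
    · -- (16 g^4, 27 h₁^4) : impossible mod 3
      have E2 : r ^ 2 = 27 * h₁ ^ 4 - 16 * g ^ 4 + 72 * (g * h₁) ^ 2 := by
        linear_combination (-1) * hdiff + (-72) * hs1sq
      have hz := congrArg (fun m : ℤ => (m : ZMod 3)) E2
      push_cast at hz
      have := Z3b _ _ _ hz
      rw [ZMod.intCast_zmod_eq_zero_iff_dvd] at this
      exact hr3 (by exact_mod_cast this)
    · -- (27 g^4, 16 h₁^4) : impossible mod 16
      rcases Int.even_or_odd g with ⟨g₀, hg₀⟩ | ⟨g₀, hg₀⟩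
      · exfalso
        subst hg₀
        have hTev : Even |t| := by
          rw [← hsum]; exact ⟨216 * g₀ ^ 4 + 8 * h₁ ^ 4, by ring⟩
        exact (Int.not_even_iff_odd.mpr hTodd) hTev
      · subst hg₀
        have E3 : r ^ 2 = 16 * h₁ ^ 4 - 27 * (2 * g₀ + 1) ^ 4
            + 72 * ((2 * g₀ + 1) * h₁) ^ 2 := by
          linear_combination (-1) * hdiff + (-72) * hs1sq
        have hz := congrArg (fun m : ℤ => (m : ZMod 16)) E3
        push_cast at hz
        exact Z16a _ _ _ hz
    · -- (432 g^4, h₁^4) : the surviving case; do the second descent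
      have hodd₁ : Odd h₁ := by
        rcases Int.even_or_odd h₁ with ⟨e₀, he₀⟩ | ho
        · exfalso
          subst he₀
          have hTev : Even |t| := by
            rw [← hsum]; exact ⟨216 * g ^ 4 + 8 * e₀ ^ 4, by ring⟩
          exact (Int.not_even_iff_odd.mpr hTodd) hTev
        · exact ho
      have hgpos : 0 < g := by
        rcases hg0.lt_or_eq with hlt | hzero
        · exact hlt
        · exfalso; rw [← hzero] at hApos; norm_num at hApos
      have hh₁pos : 0 < h₁ := by
        rcases hh0.lt_or_eq with hlt | hzero
        · exact hlt
        · exfalso; rw [← hzero] at hBpos; norm_num at hBpos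
      have E4 : r ^ 2 = h₁ ^ 4 - 432 * g ^ 4 + 72 * (g * h₁) ^ 2 := by
        linear_combination (-1) * hdiff + (-72) * hs1sq
      have hr3h : ¬ (3:ℤ) ∣ h₁ := by
        rintro ⟨k, hk⟩
        apply hr3
        apply Int.prime_three.dvd_of_dvd_pow (n := 2)
        rw [hk] at E4
        exact ⟨27 * k ^ 4 - 144 * g ^ 4 + 216 * (g * k) ^ 2, by linear_combination E4⟩
      -- second descent
      have hw2odd : Odd (h₁ ^ 2 + 36 * g ^ 2) := (hodd₁.pow).add_even ⟨18 * g ^ 2, by ring⟩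
      have hρodd : Odd |r| := by
        rcases abs_choice r with hab | hab <;> rw [hab]
        · exact hoddr
        · exact hoddr.neg
      obtain ⟨A₂, hA₂⟩ : Even ((h₁ ^ 2 + 36 * g ^ 2) - |r|) := hw2odd.sub_odd hρodd
      obtain ⟨B₂, hB₂⟩ : Even ((h₁ ^ 2 + 36 * g ^ 2) + |r|) := hw2odd.add_odd hρodd
      have hrr : |r| ^ 2 = r ^ 2 := sq_abs r
      have hprod₂ : A₂ * B₂ = 432 * g ^ 4 :=
        cancel4 (by
          linear_combination (-(h₁ ^ 2 + 36 * g ^ 2 + |r|)) * hA₂ + (-(A₂ + A₂)) * hB₂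
            - E4 - hrr)
      have hsum₂ : A₂ + B₂ = h₁ ^ 2 + 36 * g ^ 2 :=
        cancel2 (by linear_combination (-1) * hA₂ + (-1) * hB₂)
      have hdiff₂ : B₂ - A₂ = |r| := cancel2 (by linear_combination hA₂ - hB₂)
      have hg4pos : 0 < g ^ 4 := pow_pos hgpos 4
      have hABpos₂ : 0 < A₂ * B₂ := by rw [hprod₂]; exact mul_pos (by norm_num) hg4pos
      have hw2pos : 0 < h₁ ^ 2 + 36 * g ^ 2 := by
        linarith only [pow_pos hgpos 2, sq_nonneg h₁]
      have hA₂pos : 0 < A₂ := by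
        rcases le_or_gt A₂ 0 with hle | hlt
        · exfalso
          have hBnn : 0 ≤ B₂ := by linarith only [hsum₂, hw2pos, hle]
          have hnp : A₂ * B₂ ≤ 0 := mul_nonpos_iff.mpr (Or.inr ⟨hle, hBnn⟩)
          linarith only [hnp, hABpos₂]
        · exact hlt
      have hB₂pos : 0 < B₂ := by
        rcases le_or_gt B₂ 0 with hle | hlt
        · exfalso
          have hnp : A₂ * B₂ ≤ 0 := mul_nonpos_iff.mpr (Or.inl ⟨hA₂pos.le, hle⟩)
          linarith only [hnp, hABpos₂]
        · exact hlt
      have h2w₂ : ¬ (2:ℤ) ∣ (h₁ ^ 2 + 36 * g ^ 2) := by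
        rintro ⟨k, hk⟩
        exact (Int.not_even_iff_odd.mpr hw2odd) ⟨k, by linarith only [hk]⟩
      have hcoAB₂ : IsCoprime A₂ B₂ := by
        apply noPrimeCommon
        intro q hq hqA hqB
        have hqw₂ : q ∣ h₁ ^ 2 + 36 * g ^ 2 := by rw [← hsum₂]; exact dvd_add hqA hqB
        have hqρ : q ∣ |r| := by rw [← hdiff₂]; exact dvd_sub hqB hqA
        have hq1728 : q ∣ 1728 * g ^ 4 := by
          have he : (h₁ ^ 2 + 36 * g ^ 2) ^ 2 - |r| ^ 2 = 1728 * g ^ 4 := by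
            linear_combination (-1) * E4 - hrr
          rw [← he]
          exact dvd_sub (hqw₂.pow (by norm_num)) (hqρ.pow (by norm_num))
        rcases hq.dvd_mul.mp hq1728 with hd | hd
        · rw [show (1728:ℤ) = 2 ^ 6 * 3 ^ 3 by norm_num] at hd
          rcases hq.dvd_mul.mp hd with hd2 | hd3
          · have h2q : q ∣ (2:ℤ) := hq.dvd_of_dvd_pow hd2
            have hqn : q.natAbs = 2 := by
              have := Int.natAbs_dvd_natAbs.mpr h2q
              exact (Nat.prime_dvd_prime_iff_eq (Int.prime_iff_natAbs_prime.mp hq)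
                Nat.prime_two).mp this
            apply h2w₂
            have : ((q.natAbs : ℤ)) ∣ h₁ ^ 2 + 36 * g ^ 2 := Int.natAbs_dvd.mpr hqw₂
            rw [hqn] at this; exact_mod_cast this
          · have h3q : q ∣ (3:ℤ) := hq.dvd_of_dvd_pow hd3
            have hqn : q.natAbs = 3 := by
              have := Int.natAbs_dvd_natAbs.mpr h3q
              exact (Nat.prime_dvd_prime_iff_eq (Int.prime_iff_natAbs_prime.mp hq)
                Nat.prime_three).mp this
            apply hr3
            have h3ρ : (3:ℤ) ∣ |r| := by
              have : ((q.natAbs : ℤ)) ∣ |r| := Int.natAbs_dvd.mpr hqρ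
              rw [hqn] at this; exact_mod_cast this
            exact (dvd_abs 3 r).mp h3ρ
        · have hqg : q ∣ g := hq.dvd_of_dvd_pow hd
          have hqh₁ : q ∣ h₁ := by
            apply hq.dvd_of_dvd_pow (n := 2)
            have : h₁ ^ 2 = (h₁ ^ 2 + 36 * g ^ 2) - 36 * g ^ 2 := by ring
            rw [this]
            exact dvd_sub hqw₂ (Dvd.dvd.mul_left (hqg.pow (by norm_num)) 36)
          exact primeNotCoprime' hq hqg hqh₁ hcogh
      obtain ⟨u, v, hu0, hv0, hcouv, huv, hcases₂⟩ :=
        factor432 A₂ B₂ g hA₂pos hB₂pos hcoAB₂ hprod₂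
      have hgg : u * v = g := by rw [huv]; exact abs_of_pos hgpos
      have hupos : 0 < u := by
        rcases hu0.lt_or_eq with hlt | hzero
        · exact hlt
        · exfalso; rw [← hzero] at hgg; simp at hgg; omega
      have hvpos : 0 < v := by
        rcases hv0.lt_or_eq with hlt | hzero
        · exact hlt
        · exfalso; rw [← hzero] at hgg; simp at hgg; omega
      -- size bound
      have hband : v ≤ (s₁.natAbs : ℤ) ∧ u ≤ (s₁.natAbs : ℤ) := by
        have h4 : g * h₁ = (s₁.natAbs : ℤ) := by rw [hgh]; exact Int.abs_eq_natAbs s₁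
        have h3 : g ≤ g * h₁ := le_mul_of_one_le_right hg0 (by omega)
        have h1 : v ≤ u * v := le_mul_of_one_le_left hv0 (by omega)
        have h2 : u ≤ u * v := le_mul_of_one_le_right hu0 (by omega)
        rw [hgg] at h1 h2
        constructor <;> linarith only [h1, h2, h3, h4]
      rcases hcases₂ with ⟨rfl, rfl⟩ | ⟨rfl, rfl⟩ | ⟨rfl, rfl⟩ | ⟨rfl, rfl⟩
      · -- (u^4, 432 v^4) : recursion with (r,s,t) = (u,v,h₁)
        have E5 : h₁ ^ 2 = u ^ 4 - 36 * u ^ 2 * v ^ 2 + 432 * v ^ 4 := by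
          linear_combination (-1) * hsum₂ + (36 * (u * v + g)) * hgg
        have hlt : v.natAbs < n := by
          have := hband.1
          omega
        exact IH v.natAbs hlt v u h₁ rfl hvpos.ne' hcouv E5
      · -- (16 u^4, 27 v^4) : impossible mod 16
        have hvodd : Odd v := by
          rcases Int.even_or_odd v with ⟨k, hk⟩ | ho
          · exfalso
            subst hk
            have : Even (h₁ ^ 2 + 36 * g ^ 2) := by
              rw [← hsum₂]; exact ⟨8 * u ^ 4 + 216 * k ^ 4, by ring⟩
            exact (Int.not_even_iff_odd.mpr hw2odd) this
          · exact ho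
        obtain ⟨k, rfl⟩ := hvodd
        have E6 : h₁ ^ 2 = 16 * u ^ 4 + 27 * (2 * k + 1) ^ 4
            - 36 * (u * (2 * k + 1)) ^ 2 := by
          linear_combination (-1) * hsum₂ + (36 * (u * (2 * k + 1) + g)) * hgg
        have hz := congrArg (fun m : ℤ => (m : ZMod 16)) E6
        push_cast at hz
        exact Z16b _ _ _ hz
      · -- (27 u^4, 16 v^4) : impossible mod 16
        have huodd : Odd u := by
          rcases Int.even_or_odd u with ⟨k, hk⟩ | ho
          · exfalso
            subst hk
            have : Even (h₁ ^ 2 + 36 * g ^ 2) := by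
              rw [← hsum₂]; exact ⟨216 * k ^ 4 + 8 * v ^ 4, by ring⟩
            exact (Int.not_even_iff_odd.mpr hw2odd) this
          · exact ho
        obtain ⟨k, rfl⟩ := huodd
        have E7 : h₁ ^ 2 = 27 * (2 * k + 1) ^ 4 + 16 * v ^ 4
            - 36 * ((2 * k + 1) * v) ^ 2 := by
          linear_combination (-1) * hsum₂ + (36 * ((2 * k + 1) * v + g)) * hgg
        have hz := congrArg (fun m : ℤ => (m : ZMod 16)) E7
        push_cast at hz
        exact Z16c _ _ _ hz
      · -- (432 u^4, v^4) : recursion with (r,s,t) = (v,u,h₁)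
        have E8 : h₁ ^ 2 = v ^ 4 - 36 * v ^ 2 * u ^ 2 + 432 * u ^ 4 := by
          linear_combination (-1) * hsum₂ + (36 * (u * v + g)) * hgg
        have hlt : u.natAbs < n := by
          have := hband.2
          omega
        exact IH u.natAbs hlt u v h₁ rfl hupos.ne' hcouv.symm E8

private lemma ratsq_helper (q : ℚ) (n : ℤ) (h : q ^ 2 = (n : ℚ)) : ∃ t : ℤ, t ^ 2 = n := by
  have hden : q.den = 1 := by
    have h1 : (q ^ 2).den = 1 := by rw [h]; exact Rat.den_intCast n
    rw [Rat.den_pow] at h1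
    exact (pow_eq_one_iff.mp h1).resolve_right two_ne_zero
  refine ⟨q.num, ?_⟩
  have hq : (q.num : ℚ) = q := Rat.coe_int_num_of_den_eq_one hden
  have h2 : ((q.num : ℚ)) ^ 2 = (n : ℚ) := by rw [hq]; exact h
  exact_mod_cast h2

theorem stmt_8 (x y : ℚ) (h : y ^ 2 = x ^ 3 + 18 * x ^ 2 - 27 * x) : x = 0 ∧ y = 0 := by
  by_cases hx : x = 0
  · subst hx
    refine ⟨rfl, ?_⟩
    have hy : y ^ 2 = 0 := by rw [h]; ring
    exact pow_eq_zero_iff (two_ne_zero) |>.mp hy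
  · exfalso
    set k : ℚ := y / x with hk
    set r : ℤ := k.num with hrdef
    set s : ℤ := (k.den : ℤ) with hsdef
    have hs0 : s ≠ 0 := by
      rw [hsdef]
      exact_mod_cast k.den_ne_zero
    have hsQ : (s : ℚ) ≠ 0 := Int.cast_ne_zero.mpr hs0
    have hdenQ : ((k.den : ℚ)) ≠ 0 := by exact_mod_cast k.den_ne_zero
    have hrs : (r : ℚ) = k * (k.den : ℚ) := by
      have h0 := Rat.num_div_den k
      rw [div_eq_iff hdenQ] at h0
      exact h0
    have hk2 : (r : ℚ) * x = y * (s : ℚ) := by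
      rw [hrs, hk, hsdef]
      push_cast
      field_simp
      rfl
    have hsq : (r : ℚ) ^ 2 * x ^ 2 = y ^ 2 * (s : ℚ) ^ 2 := by
      linear_combination ((r : ℚ) * x + y * (s : ℚ)) * hk2
    have h2 : (r : ℚ) ^ 2 * x = (x ^ 2 + 18 * x - 27) * (s : ℚ) ^ 2 := by
      apply mul_right_cancel₀ hx
      linear_combination hsq + (s : ℚ) ^ 2 * h
    have E1' : ((x ^ 2 + 27) * (s : ℚ) ^ 2 / x) ^ 2
        = (r : ℚ) ^ 4 - 36 * (r : ℚ) ^ 2 * (s : ℚ) ^ 2 + 432 * (s : ℚ) ^ 4 := by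
      rw [div_pow, div_eq_iff (pow_ne_zero 2 hx)]
      linear_combination
        (-((r : ℚ) ^ 2 * x) - (x ^ 2 + 18 * x - 27) * (s : ℚ) ^ 2 + 36 * x * (s : ℚ) ^ 2) * h2
    have E1 : ((x ^ 2 + 27) * (s : ℚ) ^ 2 / x) ^ 2
        = ((r ^ 4 - 36 * r ^ 2 * s ^ 2 + 432 * s ^ 4 : ℤ) : ℚ) := by
      push_cast
      linear_combination E1'
    obtain ⟨t, ht⟩ := ratsq_helper _ _ E1
    have hcop : IsCoprime r s := by
      rw [Int.isCoprime_iff_gcd_eq_one]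
      have hred := k.reduced
      have : Int.gcd r s = Nat.gcd r.natAbs s.natAbs := rfl
      rw [this, hrdef, hsdef]
      simpa using hred
    exact keyA s.natAbs s r t rfl hs0 hcop ht
end

section
/- Every rational point (x, y) on the curve y² = x³ + 6x² − 3x satisfies x ≤ 1; in fact the only rational points are (−3, ±6), (1, ±2), and (0, 0). -/
set_option maxRecDepth 100000
set_option maxHeartbeats 1000000

section Helpers

private lemma zCqOdd : ∀ Q S T : ZMod 16, (2*Q+1)^2 ≠ 3*S^4+6*S^2*T^2-T^4 := by decide
private lemma zCq4 : ∀ Q S T : ZMod 16, 4*(2*Q+1)^2 ≠ 3*S^4+6*S^2*T^2-T^4 := by decide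
private lemma zC1 : ∀ A B C : ZMod 16, C^2 ≠ (2*B)^4+6*(2*A+1)^2*(2*B)^2-3*(2*A+1)^4 := by decide
private lemma zL1a : ∀ A B C : ZMod 16, C^2 ≠ 3*(2*A+1)^4+6*(2*A+1)^2*B^2-B^4 := by decide
private lemma zL1b : ∀ A B C : ZMod 16, C^2 ≠ 3*A^4+6*A^2*(2*B+1)^2-(2*B+1)^4 := by decide
private lemma zC3 : ∀ P Q B : ZMod 4, B^2 ≠ 3*(2*P+1)^4-3*(2*P+1)^2*(2*Q)^2+(2*Q)^4 := by decide

private lemma CqOddkill (q s t : ℤ) (hq : Odd q) (h : q^2 = 3*s^4+6*s^2*t^2-t^4) : False := by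
  obtain ⟨k, rfl⟩ := hq
  apply zCqOdd (k : ZMod 16) (s : ZMod 16) (t : ZMod 16)
  have := congrArg (fun z : ℤ => (z : ZMod 16)) h
  push_cast at this
  convert this using 1

private lemma Cq4kill (q s t : ℤ) (hq : Odd q) (h : 4*q^2 = 3*s^4+6*s^2*t^2-t^4) : False := by
  obtain ⟨k, rfl⟩ := hq
  apply zCq4 (k : ZMod 16) (s : ZMod 16) (t : ZMod 16)
  have := congrArg (fun z : ℤ => (z : ZMod 16)) h
  push_cast at this
  convert this using 1

private lemma C1kill (a b c : ℤ) (ha : Odd a) (hb : Even b) (h : c^2 = b^4+6*a^2*b^2-3*a^4) : False := by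
  obtain ⟨k, rfl⟩ := ha
  obtain ⟨l, rfl⟩ := hb
  apply zC1 (k : ZMod 16) (l : ZMod 16) (c : ZMod 16)
  have := congrArg (fun z : ℤ => (z : ZMod 16)) h
  push_cast at this
  convert this using 1 <;> ring

private lemma L1kill (a b c : ℤ) (hodd : Odd a ∨ Odd b) (h : c^2 = 3*a^4+6*a^2*b^2-b^4) : False := by
  rcases hodd with ⟨k, rfl⟩ | ⟨k, rfl⟩
  · apply zL1a (k : ZMod 16) (b : ZMod 16) (c : ZMod 16)
    have := congrArg (fun z : ℤ => (z : ZMod 16)) h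
    push_cast at this
    convert this using 1
  · apply zL1b (a : ZMod 16) (k : ZMod 16) (c : ZMod 16)
    have := congrArg (fun z : ℤ => (z : ZMod 16)) h
    push_cast at this
    convert this using 1

private lemma C3kill (p q b : ℤ) (hp : Odd p) (hq : Even q) (h : b^2 = 3*p^4-3*p^2*q^2+q^4) : False := by
  obtain ⟨k, rfl⟩ := hp
  obtain ⟨l, rfl⟩ := hq
  apply zC3 (k : ZMod 4) (l : ZMod 4) (b : ZMod 4)
  have := congrArg (fun z : ℤ => (z : ZMod 4)) h
  push_cast at this
  convert this using 1 <;> ring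

private lemma int_of_sq_int (r : ℚ) (N : ℤ) (h : r^2 = (N:ℚ)) : ∃ z : ℤ, (z:ℚ) = r := by
  have hd : (r*r).den = 1 := by rw [← sq, h]; exact Rat.den_intCast N
  rw [Rat.mul_self_den] at hd
  have : r.den = 1 := by nlinarith [r.den_pos]
  exact ⟨r.num, Rat.coe_int_num_of_den_eq_one this⟩

private lemma no_common_prime (a b P : ℤ) (hc : IsCoprime a b) (hP : Prime P)
    (h1 : P ∣ a) (h2 : P ∣ b) : False := by
  obtain ⟨u, v, huv⟩ := hc
  exact hP.not_unit (isUnit_of_dvd_one (huv ▸ dvd_add (Dvd.dvd.mul_left h1 u) (Dvd.dvd.mul_left h2 v)))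

private lemma exists_common_prime (f1 f2 : ℤ) (h1 : f1 ≠ 0) (hnc : ¬ IsCoprime f1 f2) :
    ∃ P : ℤ, Prime P ∧ 0 < P ∧ P ∣ f1 ∧ P ∣ f2 := by
  have hg : Int.gcd f1 f2 ≠ 1 := fun hg => hnc (Int.isCoprime_iff_gcd_eq_one.mpr hg)
  obtain ⟨p, pp, pdvd⟩ := Nat.exists_prime_and_dvd hg
  refine ⟨(p:ℤ), Int.prime_iff_natAbs_prime.mpr (by simpa using pp), by exact_mod_cast pp.pos, ?_, ?_⟩
  · exact dvd_trans (Int.natCast_dvd_natCast.mpr pdvd) (Int.gcd_dvd_left f1 f2)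
  · exact dvd_trans (Int.natCast_dvd_natCast.mpr pdvd) (Int.gcd_dvd_right f1 f2)

private lemma prime_dvd_3A4 (P A : ℤ) (hP : Prime P) (hPpos : 0 < P) (h : P ∣ 3*A^4) :
    P = 3 ∨ P ∣ A := by
  rcases hP.dvd_mul.mp h with h3|h4
  · left
    have hle := Int.le_of_dvd (by norm_num) h3
    interval_cases P
    · exact absurd hP (by norm_num)
    · exact absurd h3 (by decide)
    · rfl
  · exact Or.inr (hP.dvd_of_dvd_pow h4)

private lemma sq_ne_three (z : ℤ) : z^2 ≠ 3 := by
  intro h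
  have h1 : z ≤ -2 ∨ z = -1 ∨ z = 0 ∨ z = 1 ∨ 2 ≤ z := by omega
  rcases h1 with h1|h1|h1|h1|h1 <;> nlinarith

private lemma three_dvd_sq (z : ℤ) (h : (3:ℤ) ∣ z^2) : (3:ℤ) ∣ z :=
  Int.prime_three.dvd_of_dvd_pow h

private lemma three_dvd_four (z : ℤ) (h : (3:ℤ) ∣ 4*z) : (3:ℤ) ∣ z := by
  rcases (Int.prime_three.dvd_mul.mp h) with h|h
  · omega
  · exact h

private lemma aux_ne (m n : ℤ) (hc : IsCoprime m n) (h0 : m^2+6*m*n-3*n^2 = 0) : False := by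
  have hd : (m+3*n)^2 = 12*n^2 := by linear_combination h0
  have h3d : (3:ℤ) ∣ (m+3*n) := three_dvd_sq _ ⟨4*n^2, by linarith⟩
  obtain ⟨e, he⟩ := h3d
  have h9 : 9*e^2 = 12*n^2 := by rw [← hd, he]; ring
  have hn3 : (3:ℤ) ∣ n := three_dvd_sq _ ⟨e^2 - n^2, by linarith⟩
  have hm3 : (3:ℤ) ∣ m := by obtain ⟨k, hk⟩ := hn3; exact ⟨e - 3*k, by linarith [he]⟩
  exact no_common_prime m n 3 hc Int.prime_three hm3 hn3

private lemma aux_ne2 (m n : ℤ) (hc : IsCoprime m n) (h0 : 3*m^2+6*m*n-n^2 = 0) : False := by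
  have hd : 3*(m+n)^2 = 4*n^2 := by linear_combination h0
  have hn3 : (3:ℤ) ∣ n := three_dvd_sq _ (three_dvd_four _ ⟨(m+n)^2, hd.symm⟩)
  obtain ⟨k, hk⟩ := hn3
  have hmn : (m+n)^2 = 12*k^2 := by
    have h9 : 3*(m+n)^2 = 36*k^2 := by rw [hd, hk]; ring
    linarith
  have h3mn : (3:ℤ) ∣ (m+n) := three_dvd_sq _ ⟨4*k^2, by linarith⟩
  have hm3 : (3:ℤ) ∣ m := by obtain ⟨e, he⟩ := h3mn; exact ⟨e-k, by linarith⟩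
  exact no_common_prime m n 3 hc Int.prime_three hm3 ⟨k, hk⟩

private lemma fourth_of_coprime (e f A : ℤ) (he : 0 < e) (hcop : IsCoprime e f) (hprod : e * f = A^4) :
    ∃ s : ℤ, 0 < s ∧ e = s^4 := by
  obtain ⟨d, u, hu⟩ := exists_associated_pow_of_mul_eq_pow' hcop hprod
  rcases Int.units_eq_one_or u with h|h <;> rw [h] at hu
  · refine ⟨|d|, ?_, ?_⟩
    · rcases abs_nonneg d |>.lt_or_eq with h'|h'
      · exact h'
      · exfalso; simp at hu; nlinarith [abs_eq_zero.mp h'.symm ▸ hu]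
    · rw [← hu]; simp [abs_pow]; rw [← abs_pow]; rw [abs_of_nonneg (by positivity : (0:ℤ) ≤ d^4)]
  · exfalso; simp at hu; nlinarith [sq_nonneg (d^2), hu]

private lemma pow4_inj (a b : ℤ) (ha : 0 < a) (hb : 0 < b) (h : a^4 = b^4) : a = b := by
  rcases lt_trichotomy a b with h'|h'|h'
  · have := pow_lt_pow_left₀ h' ha.le (by norm_num : 4 ≠ 0); omega
  · exact h'
  · have := pow_lt_pow_left₀ h' hb.le (by norm_num : 4 ≠ 0); omega

private lemma sq_eq_pos (a b : ℤ) (ha : 0 < a) (hb : 0 < b) (h : a^2 = b^2) : a = b := by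
  rcases lt_trichotomy a b with h'|h'|h'
  · nlinarith
  · exact h'
  · nlinarith

private lemma split3aux (A f1 f2 : ℤ) (hA : 0 < A) (h1 : 0 < f1) (h2 : 0 < f2)
    (hcop : IsCoprime f1 f2) (hprod : f1*f2 = 3*A^4) (h3 : (3:ℤ) ∣ f1) :
    ∃ s t : ℤ, 0 < s ∧ 0 < t ∧ IsCoprime s t ∧ A = s*t ∧ f1 = 3*s^4 ∧ f2 = t^4 := by
  obtain ⟨e, rfl⟩ := h3
  have he : 0 < e := by nlinarith
  have hcop' : IsCoprime e f2 := hcop.of_isCoprime_of_dvd_left ⟨3, by ring⟩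
  have hprod' : e * f2 = A^4 := by linarith
  obtain ⟨s, hs, hes⟩ := fourth_of_coprime e f2 A he hcop' hprod'
  obtain ⟨t, ht, hft⟩ := fourth_of_coprime f2 e A h2 hcop'.symm (by linarith [hprod'])
  have hA4 : A^4 = (s*t)^4 := by rw [← hprod', hes, hft]; ring
  have hAst : A = s*t := pow4_inj A (s*t) hA (by positivity) hA4
  refine ⟨s, t, hs, ht, ?_, hAst, by rw [hes], hft⟩
  have : IsCoprime (s^4) (t^4) := hes ▸ hft ▸ hcop'
  exact (this.of_isCoprime_of_dvd_left (dvd_pow_self s (by norm_num))).of_isCoprime_of_dvd_right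
    (dvd_pow_self t (by norm_num))

private lemma split3 (A f1 f2 : ℤ) (hA : 0 < A) (h1 : 0 < f1) (h2 : 0 < f2)
    (hcop : IsCoprime f1 f2) (hprod : f1*f2 = 3*A^4) :
    ∃ s t : ℤ, 0 < s ∧ 0 < t ∧ IsCoprime s t ∧ A = s*t ∧
      ((f1 = 3*s^4 ∧ f2 = t^4) ∨ (f1 = t^4 ∧ f2 = 3*s^4)) := by
  have h3 : (3:ℤ) ∣ f1 * f2 := ⟨A^4, hprod⟩
  rcases (Int.prime_three.dvd_mul.mp h3) with h|h
  · obtain ⟨s, t, hs, ht, hc, hst, e1, e2⟩ := split3aux A f1 f2 hA h1 h2 hcop hprod h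
    exact ⟨s, t, hs, ht, hc, hst, Or.inl ⟨e1, e2⟩⟩
  · obtain ⟨s, t, hs, ht, hc, hst, e1, e2⟩ :=
      split3aux A f2 f1 hA h2 h1 hcop.symm (by linarith [hprod]) h
    exact ⟨s, t, hs, ht, hc, hst, Or.inr ⟨e2, e1⟩⟩

private lemma odd3a4 (a : ℤ) (ha : Odd a) : Odd (3*a^4) := by
  obtain ⟨k, rfl⟩ := ha
  exact ⟨24*k^4+48*k^3+36*k^2+12*k+1, by ring⟩

private lemma odd_prime_dvd_halve (P z : ℤ) (hP : Prime P) (hPpos : 0 < P) (hP2 : P ≠ 2)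
    (h : P ∣ 2*z) : P ∣ z := by
  rcases hP.dvd_mul.mp h with h|h
  · exfalso
    have hle := Int.le_of_dvd (by norm_num) h
    interval_cases P
    · exact absurd hP (by norm_num)
    · exact hP2 rfl
  · exact h

end Helpers

private lemma descentA (N : ℕ) : ∀ (a b c : ℤ), a.natAbs ≤ N → 0 < a → IsCoprime a b →
    c^2 = b^4 + 6*a^2*b^2 - 3*a^4 → a^2 = b^2 := by
  induction N with
  | zero => intro a b c hN ha _ _; exfalso; omega
  | succ N IH =>
    intro a b c hN ha hab h
    -- Stage 1 : find f1 f2 with f1+f2 = b^2+3a^2, f1*f2 = 3a^4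
    obtain ⟨f1, f2, hsum, hprod, hpar⟩ :
        ∃ f1 f2 : ℤ, f1+f2 = b^2+3*a^2 ∧ f1*f2 = 3*a^4 ∧ (Odd (f1+f2) ∨ Odd (f1*f2)) := by
      rcases Int.even_or_odd a with haE|haO
      · -- a even, hence b odd
        have hbO : Odd b := by
          rcases Int.even_or_odd b with hbE|hbO
          · exfalso
            obtain ⟨r, hr⟩ := haE; obtain ⟨w, hw⟩ := hbE
            exact no_common_prime a b 2 hab Int.prime_two ⟨r, by linarith⟩ ⟨w, by linarith⟩
          · exact hbO
        have hcO : Odd c := by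
          have h2 : Odd (c^2) := by
            obtain ⟨k, hk⟩ := haE; obtain ⟨l, rfl⟩ := hbO
            rw [h, show a = 2*k from by linarith]
            exact ⟨4*l + 12*l^2 + 16*l^3 + 8*l^4 + 12*k^2 + 48*k^2*l + 48*k^2*l^2
              - 24*k^4, by ring⟩
          simpa [Int.odd_pow] using h2
        have huO : Odd (b^2+3*a^2) := by
          obtain ⟨k, hk⟩ := haE; obtain ⟨l, rfl⟩ := hbO
          rw [show a = 2*k from by linarith]
          exact ⟨2*l^2+2*l+6*k^2, by ring⟩
        obtain ⟨γ, rfl⟩ := hcO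
        obtain ⟨ν, hν⟩ := huO
        have hp2 : (ν-γ)*(ν+γ+1) = 3*a^4 := by
          have h4 : 4*((ν-γ)*(ν+γ+1)) = 4*(3*a^4) := by
            linear_combination (-1)*h - (b^2+3*a^2+2*ν+1)*hν
          linarith
        exact ⟨ν-γ, ν+γ+1, by linarith, hp2, Or.inl (by rw [show ν-γ+(ν+γ+1) = 2*ν+1 from by ring]; exact ⟨ν, by ring⟩)⟩
      · -- a odd
        rcases Int.even_or_odd b with hbE|hbO
        · exact absurd h (fun h => C1kill a b c haO hbE h)
        · have hcE : Even c := by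
            have h2 : Even (c^2) := by
              obtain ⟨k, rfl⟩ := haO; obtain ⟨l, rfl⟩ := hbO
              rw [h]
              exact ⟨2 + 16*l + 24*l^2 + 16*l^3 + 8*l^4 + 48*k*l + 48*k*l^2 - 24*k^2 +
                48*k^2*l + 48*k^2*l^2 - 48*k^3 - 24*k^4, by ring⟩
            simpa [Int.even_pow] using h2
          have huE : Even (b^2+3*a^2) := by
            obtain ⟨k, rfl⟩ := haO; obtain ⟨l, rfl⟩ := hbO
            exact ⟨2*l^2+2*l+6*k^2+6*k+2, by ring⟩
          obtain ⟨γ, hγ⟩ := hcE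
          obtain ⟨μ, hμ⟩ := huE
          have hγ' : c = 2*γ := by linarith
          have hμ' : b^2+3*a^2 = 2*μ := by linarith
          have hp2 : (μ-γ)*(μ+γ) = 3*a^4 := by
            have h4 : 4*((μ-γ)*(μ+γ)) = 4*(3*a^4) := by
              linear_combination (-1)*h - (b^2+3*a^2+2*μ)*hμ' + (c+2*γ)*hγ'
            linarith
          exact ⟨μ-γ, μ+γ, by linarith, hp2, Or.inr (by rw [hp2]; exact odd3a4 a haO)⟩
    -- positivity of f1 f2
    have hppos : 0 < f1*f2 := by rw [hprod]; positivity
    obtain ⟨hf1, hf2⟩ : 0 < f1 ∧ 0 < f2 := by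
      rcases mul_pos_iff.mp hppos with ⟨h1,h2⟩|⟨h1,h2⟩
      · exact ⟨h1, h2⟩
      · exfalso; nlinarith [sq_nonneg b]
    -- coprimality of f1 f2
    have hcop12 : IsCoprime f1 f2 := by
      by_contra hnc
      obtain ⟨P, hP, hPpos, hd1, hd2⟩ := exists_common_prime f1 f2 (by linarith) hnc
      have hdsum : P ∣ b^2+3*a^2 := hsum ▸ dvd_add hd1 hd2
      have hdprod : P ∣ 3*a^4 := hprod ▸ Dvd.dvd.mul_right hd1 f2
      rcases prime_dvd_3A4 P a hP hPpos hdprod with h3|hda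
      · subst h3
        have h9 : (9:ℤ) ∣ 3*a^4 := hprod ▸ mul_dvd_mul hd1 hd2
        obtain ⟨k, hk⟩ := h9
        have ha4 : a^4 = 3*k := by linarith
        have hda : (3:ℤ) ∣ a := three_dvd_sq _ (three_dvd_sq _ ⟨k, by linear_combination ha4⟩)
        have hdb : (3:ℤ) ∣ b := by
          obtain ⟨w, hw⟩ := hdsum
          exact three_dvd_sq _ ⟨w - a^2, by linear_combination hw⟩
        exact no_common_prime a b 3 hab Int.prime_three hda hdb
      · have hdb : P ∣ b := by
          obtain ⟨r, hr⟩ := hda; obtain ⟨w, hw⟩ := hdsum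
          exact hP.dvd_of_dvd_pow (n := 2) ⟨w - 3*P*r^2, by linear_combination hw - 3*(a+P*r)*hr⟩
        exact no_common_prime a b P hab hP hda hdb
    -- split into 3p^4, q^4
    obtain ⟨p, q, hp, hq, hpq, haeq, hor⟩ := split3 a f1 f2 ha hf1 hf2 hcop12 hprod
    have hb2 : b^2 = 3*p^4 - 3*p^2*q^2 + q^4 := by
      rcases hor with ⟨e1,e2⟩|⟨e1,e2⟩ <;> rw [e1, e2] at hsum <;>
        linear_combination (-1)*hsum - (3*a+3*p*q)*haeq
    -- b ≠ 0, pass to B = |b|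
    have hbne : b ≠ 0 := by
      intro h0; rw [h0] at hb2
      nlinarith [sq_nonneg (2*q^2-3*p^2), pow_pos hp 4, hb2]
    set B := |b| with hBdef
    have hBpos : 0 < B := abs_pos.mpr hbne
    have hB2 : B^2 = 3*p^4 - 3*p^2*q^2 + q^4 := by rw [hBdef, sq_abs]; exact hb2
    have hgoal : a^2 = B^2 → a^2 = b^2 := by rw [hBdef, sq_abs]; exact id
    clear hb2 hsum hprod hpar hppos hf1 hf2 hcop12 hor h
    -- Stage 2 parity split
    rcases Int.even_or_odd p with hpE|hpO
    · rcases Int.even_or_odd q with hqE|hqO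
      · -- both even: impossible
        exfalso
        obtain ⟨r, hr⟩ := hpE; obtain ⟨w, hw⟩ := hqE
        exact no_common_prime p q 2 hpq Int.prime_two ⟨r, by linarith⟩ ⟨w, by linarith⟩
      · -- p even, q odd : branch (iii)
        obtain ⟨r0, hr0⟩ := hpE
        have hp2r : p = 2*r0 := by linarith
        have hrpos : 0 < r0 := by linarith
        have hBodd : Odd B := by
          have h2 : Odd (B^2) := by
            obtain ⟨l, hl⟩ := hqO
            rw [hB2, hp2r, hl]
            exact ⟨4*l + 12*l^2 + 16*l^3 + 8*l^4 - 6*r0^2 - 24*r0^2*l - 24*r0^2*l^2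
              + 24*r0^4, by ring⟩
          simpa [Int.odd_pow] using h2
        have hw : B^2 = (q^2-6*r0^2)^2+12*r0^4 := by
          linear_combination hB2 + (p+2*r0)*(3*p^2+12*r0^2-3*q^2)*hp2r
        have hwodd : Odd (q^2-6*r0^2) := by
          obtain ⟨l, rfl⟩ := hqO
          exact ⟨2*l^2+2*l-3*r0^2, by ring⟩
        obtain ⟨β, hβ⟩ := hBodd
        obtain ⟨ω, hω⟩ := hwodd
        have hg : (β-ω)*(β+ω+1) = 3*r0^4 := by
          have h4 : 4*((β-ω)*(β+ω+1)) = 4*(3*r0^4) := by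
            rw [hβ] at hw; rw [hω] at hw; linear_combination hw
          linarith
        have hgpos : 0 < (β-ω)*(β+ω+1) := by rw [hg]; positivity
        obtain ⟨hg1, hg2⟩ : 0 < β-ω ∧ 0 < β+ω+1 := by
          rcases mul_pos_iff.mp hgpos with ⟨h1,h2⟩|⟨h1,h2⟩
          · exact ⟨h1, h2⟩
          · exfalso; linarith [hBpos, hβ]
        have hrq : IsCoprime r0 q := hpq.of_isCoprime_of_dvd_left ⟨2, by linarith⟩
        have hcopg : IsCoprime (β-ω) (β+ω+1) := by
          by_contra hnc
          obtain ⟨P, hP, hPpos, hd1, hd2⟩ := exists_common_prime _ _ (by linarith) hnc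
          have hdB : P ∣ B := by
            have := dvd_add hd1 hd2; rw [hβ]
            obtain ⟨k, hk⟩ := this; exact ⟨k, by linarith⟩
          have hdw : P ∣ (q^2-6*r0^2) := by
            have := dvd_sub hd2 hd1; rw [hω]
            obtain ⟨k, hk⟩ := this; exact ⟨k, by linarith⟩
          have hdprod : P ∣ 3*r0^4 := hg ▸ Dvd.dvd.mul_right hd1 _
          rcases prime_dvd_3A4 P r0 hP hPpos hdprod with h3|hdr
          · subst h3
            have h9 : (9:ℤ) ∣ 3*r0^4 := hg ▸ mul_dvd_mul hd1 hd2
            obtain ⟨k, hk⟩ := h9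
            have hr4 : r0^4 = 3*k := by linarith
            have hdr : (3:ℤ) ∣ r0 := three_dvd_sq _ (three_dvd_sq _ ⟨k, by linear_combination hr4⟩)
            have hdq : (3:ℤ) ∣ q := by
              obtain ⟨e, he⟩ := hdr; obtain ⟨w, hww⟩ := hdw
              exact three_dvd_sq _ ⟨w + 18*e^2, by linear_combination hww + 6*(r0+3*e)*he⟩
            exact no_common_prime r0 q 3 hrq Int.prime_three hdr hdq
          · have hdq : P ∣ q := by
              obtain ⟨e, he⟩ := hdr; obtain ⟨w, hww⟩ := hdw
              exact hP.dvd_of_dvd_pow (n := 2) ⟨w + 6*P*e^2, by linear_combination hww + 6*(r0+P*e)*he⟩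
            exact no_common_prime r0 q P hrq hP hdr hdq
        obtain ⟨s, t, hs, ht, hst, hrst, hor2⟩ :=
          split3 r0 (β-ω) (β+ω+1) hrpos hg1 hg2 hcopg hg
        rcases hor2 with ⟨e1,e2⟩|⟨e1,e2⟩
        · -- descent case
          have hq2 : q^2 = t^4+6*s^2*t^2-3*s^4 := by
            linear_combination hω + e2 - e1 + 6*(r0+s*t)*hrst
          have hsr : s ≤ r0 := Int.le_of_dvd hrpos ⟨t, hrst⟩
          have hra : r0 < a := by rw [haeq, hp2r]; nlinarith
          have hs2t2 : s^2 = t^2 := by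
            apply IH s t q (by omega) hs hst (by linear_combination hq2)
          have hst1 : s = t := sq_eq_pos s t hs ht hs2t2
          have hs1 : s = 1 := by
            have hu : IsUnit s := hst.isUnit_of_dvd' dvd_rfl (hst1 ▸ dvd_rfl)
            rcases Int.isUnit_iff.mp hu with h1|h1
            · exact h1
            · omega
          exfalso
          have hq4 : q^2 = 4 := by rw [hs1] at hst1; rw [hs1, ← hst1] at hq2; linarith
          have : q = 2 := sq_eq_pos q 2 hq (by norm_num) (by rw [hq4]; norm_num)
          obtain ⟨l, hl⟩ := hqO; omega
        · -- congruence kill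
          exfalso
          have hq2 : q^2 = 3*s^4+6*s^2*t^2-t^4 := by
            linear_combination hω + e2 - e1 + 6*(r0+s*t)*hrst
          exact CqOddkill q s t hqO hq2
    · rcases Int.even_or_odd q with hqE|hqO
      · -- p odd, q even : impossible mod 4
        exact absurd hB2 (fun h => C3kill p q B hpO hqE h)
      · -- p odd q odd : branch (ii)
        have hBodd : Odd B := by
          have h2 : Odd (B^2) := by
            obtain ⟨k, rfl⟩ := hpO; obtain ⟨l, rfl⟩ := hqO
            rw [hB2]
            exact ⟨-2*l + 6*l^2 + 16*l^3 + 8*l^4 + 6*k - 24*k*l - 24*k*l^2 + 30*k^2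
              - 24*k^2*l - 24*k^2*l^2 + 48*k^3 + 24*k^4, by ring⟩
          simpa [Int.odd_pow] using h2
        have hprod2 : (2*B-(2*q^2-3*p^2))*(2*B+(2*q^2-3*p^2)) = 3*p^4 := by
          linear_combination 4*hB2
        have hppos2 : 0 < (2*B-(2*q^2-3*p^2))*(2*B+(2*q^2-3*p^2)) := by
          rw [hprod2]; positivity
        obtain ⟨he1, he2⟩ : 0 < 2*B-(2*q^2-3*p^2) ∧ 0 < 2*B+(2*q^2-3*p^2) := by
          rcases mul_pos_iff.mp hppos2 with ⟨h1,h2⟩|⟨h1,h2⟩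
          · exact ⟨h1, h2⟩
          · exfalso; linarith
        have hope : Odd (3*p^4) := odd3a4 p hpO
        have hcope : IsCoprime (2*B-(2*q^2-3*p^2)) (2*B+(2*q^2-3*p^2)) := by
          by_contra hnc
          obtain ⟨P, hP, hPpos, hd1, hd2⟩ := exists_common_prime _ _ (by linarith) hnc
          have hP2 : P ≠ 2 := by
            intro h2; subst h2
            have : (2:ℤ) ∣ 3*p^4 := hprod2 ▸ Dvd.dvd.mul_right hd1 _
            obtain ⟨k, hk⟩ := this; obtain ⟨w, hw⟩ := hope; omega
          have hdB : P ∣ B := by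
            have h4 : P ∣ 2*(2*B) := by
              have hadd := dvd_add hd1 hd2
              exact (show (2*B-(2*q^2-3*p^2)) + (2*B+(2*q^2-3*p^2)) = 2*(2*B) from by ring) ▸ hadd
            exact odd_prime_dvd_halve P B hP hPpos hP2 (odd_prime_dvd_halve P (2*B) hP hPpos hP2 h4)
          have hdv : P ∣ (2*q^2-3*p^2) := by
            have h2v : P ∣ 2*(2*q^2-3*p^2) := by
              have hsub := dvd_sub hd2 hd1
              exact (show (2*B+(2*q^2-3*p^2)) - (2*B-(2*q^2-3*p^2)) = 2*(2*q^2-3*p^2) from by ring) ▸ hsub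
            exact odd_prime_dvd_halve P _ hP hPpos hP2 h2v
          have hdprod : P ∣ 3*p^4 := hprod2 ▸ Dvd.dvd.mul_right hd1 _
          rcases prime_dvd_3A4 P p hP hPpos hdprod with h3|hdp
          · subst h3
            have hdq : (3:ℤ) ∣ q := by
              obtain ⟨w, hww⟩ := hdv
              have h2q : (3:ℤ) ∣ 2*q^2 := ⟨w+p^2, by linear_combination hww⟩
              rcases Int.prime_three.dvd_mul.mp h2q with h|h
              · omega
              · exact three_dvd_sq _ h
            have h9 : (9:ℤ) ∣ 3*p^4 := hprod2 ▸ mul_dvd_mul hd1 hd2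
            obtain ⟨k, hk⟩ := h9
            have hp4 : p^4 = 3*k := by linarith
            have hdp : (3:ℤ) ∣ p := three_dvd_sq _ (three_dvd_sq _ ⟨k, by linear_combination hp4⟩)
            exact no_common_prime p q 3 hpq Int.prime_three hdp hdq
          · have hdq : P ∣ q := by
              obtain ⟨e, he⟩ := hdp; obtain ⟨w, hww⟩ := hdv
              have h2q : P ∣ 2*q^2 := ⟨w + 3*P*e^2, by linear_combination hww + 3*(p+P*e)*he⟩
              exact hP.dvd_of_dvd_pow (odd_prime_dvd_halve P _ hP hPpos hP2 h2q)
            exact no_common_prime p q P hpq hP hdp hdq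
        obtain ⟨s, t, hs, ht, hst, hpst, hor2⟩ :=
          split3 p (2*B-(2*q^2-3*p^2)) (2*B+(2*q^2-3*p^2)) hp he1 he2 hcope hprod2
        rcases hor2 with ⟨e1,e2⟩|⟨e1,e2⟩
        · -- descent case
          have hq4 : 4*q^2 = t^4+6*s^2*t^2-3*s^4 := by
            linear_combination e2 - e1 + 6*(p+s*t)*hpst
          have hsa : s ≤ a := Int.le_of_dvd ha ⟨t*q, by rw [haeq, hpst]; ring⟩
          rcases lt_or_eq_of_le hsa with hlt|heq2
          · have hs2t2 : s^2 = t^2 := by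
              apply IH s t (2*q) (by omega) hs hst (by linear_combination hq4)
            have hst1 : s = t := sq_eq_pos s t hs ht hs2t2
            have hs1 : s = 1 := by
              have hu : IsUnit s := hst.isUnit_of_dvd' dvd_rfl (hst1 ▸ dvd_rfl)
              rcases Int.isUnit_iff.mp hu with h1|h1
              · exact h1
              · omega
            have hq1 : q = 1 := by
              have hqq : q^2 = 1 := by rw [hs1] at hst1; rw [hs1, ← hst1] at hq4; linarith
              exact sq_eq_pos q 1 hq (by norm_num) (by rw [hqq]; norm_num)
            have hp1 : p = 1 := by rw [hpst, hs1, ← hst1, hs1]; ring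
            have ha1 : a = 1 := by rw [haeq, hp1, hq1]; ring
            apply hgoal
            rw [hB2, ha1, hp1, hq1]; ring
          · -- s = a forces everything = 1
            have htq : t*q = 1 := by
              have : a*(t*q) = a*1 := by
                linear_combination (-1)*haeq - q*hpst - t*q*heq2
              exact mul_left_cancel₀ (ne_of_gt ha) this
            have ht1 : t = 1 := by nlinarith [htq, ht, hq]
            have hq1 : q = 1 := by rw [ht1] at htq; linarith
            have hs30 : 3*(s^2-1)^2 = 0 := by
              rw [ht1, hq1] at hq4; linear_combination hq4
            have hs21 : s^2 = 1 := by nlinarith [sq_nonneg (s^2-1)]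
            have hs1 : s = 1 := sq_eq_pos s 1 hs (by norm_num) (by rw [hs21]; norm_num)
            have hp1 : p = 1 := by rw [hpst, hs1, ht1]; ring
            have ha1 : a = 1 := by rw [haeq, hp1, hq1]; ring
            apply hgoal
            rw [hB2, ha1, hp1, hq1]; ring
        · -- congruence kill
          exfalso
          have hq4 : 4*q^2 = 3*s^4+6*s^2*t^2-t^4 := by
            linear_combination e2 - e1 + 6*(p+s*t)*hpst
          exact Cq4kill q s t hqO hq4

private lemma classify (n m1 c0 Y0 : ℤ) (hn : 0 < n) (hm : m1 ≠ 0) (hc0 : c0 ≠ 0)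
    (h2 : IsCoprime n m1) (h3 : IsCoprime n c0) (h4 : IsCoprime m1 c0)
    (hY : Y0^2 = n * m1 * c0) :
    ∃ a b1 c1 : ℤ, 0 < a ∧ b1 ≠ 0 ∧ n = a^2 ∧
      ((m1 = b1^2 ∧ c0 = c1^2) ∨ (m1 = -b1^2 ∧ c0 = -c1^2)) := by
  have hcn : IsCoprime n (m1*c0) := h2.mul_right h3
  obtain ⟨a0, ha0⟩ := Int.sq_of_isCoprime hcn (show n*(m1*c0) = Y0^2 by linear_combination -hY)
  have hna0 : n = a0^2 := by
    rcases ha0 with h|h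
    · exact h
    · exfalso; nlinarith [sq_nonneg a0, hn]
  have ha0ne : a0 ≠ 0 := by intro h0; rw [h0] at hna0; nlinarith [hn]
  have hapos : 0 < |a0| := abs_pos.mpr ha0ne
  have hna : n = |a0|^2 := by rw [sq_abs]; exact hna0
  have haY : |a0| ∣ Y0 := by
    refine (Int.pow_dvd_pow_iff (two_ne_zero)).mp ⟨m1*c0, ?_⟩
    rw [hY, ← hna]; ring
  obtain ⟨Y1, rfl⟩ := haY
  have hY1 : m1*c0 = Y1^2 := by
    have hc : |a0|^2*(m1*c0) = |a0|^2*Y1^2 := by linear_combination -hY - (m1*c0)*hna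
    exact mul_left_cancel₀ (pow_ne_zero 2 (abs_ne_zero.mpr ha0ne)) hc
  obtain ⟨b1, hb1⟩ := Int.sq_of_isCoprime h4 hY1
  have hb1ne : b1 ≠ 0 := by
    intro h0
    rcases hb1 with hb|hb
    · apply hm; rw [h0] at hb; simpa using hb
    · apply hm; rw [h0] at hb; simpa using hb
  rcases hb1 with hb|hb
  · have hbY : b1 ∣ Y1 := by
      refine (Int.pow_dvd_pow_iff (two_ne_zero)).mp ⟨c0, ?_⟩
      linear_combination -hY1 + c0*hb
    obtain ⟨c1, rfl⟩ := hbY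
    refine ⟨|a0|, b1, c1, hapos, hb1ne, hna, Or.inl ⟨hb, ?_⟩⟩
    have hc : b1^2*c0 = b1^2*c1^2 := by rw [hb] at hY1; linear_combination hY1
    exact mul_left_cancel₀ (pow_ne_zero 2 hb1ne) hc
  · have hbY : b1 ∣ Y1 := by
      refine (Int.pow_dvd_pow_iff (two_ne_zero)).mp ⟨-c0, ?_⟩
      linear_combination -hY1 + c0*hb
    obtain ⟨c1, rfl⟩ := hbY
    refine ⟨|a0|, b1, c1, hapos, hb1ne, hna, Or.inr ⟨hb, ?_⟩⟩
    have hc : b1^2*(-c0) = b1^2*c1^2 := by rw [hb] at hY1; linear_combination hY1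
    have := mul_left_cancel₀ (pow_ne_zero 2 hb1ne) hc
    linarith

private lemma parity_or (a b : ℤ) (hc : IsCoprime a b) : Odd a ∨ Odd b := by
  rcases Int.even_or_odd a with hA|hA
  · rcases Int.even_or_odd b with hB|hB
    · exfalso
      obtain ⟨r, hr⟩ := hA; obtain ⟨w, hw⟩ := hB
      exact no_common_prime a b 2 hc Int.prime_two ⟨r, by linarith⟩ ⟨w, by linarith⟩
    · exact Or.inr hB
  · exact Or.inl hA


theorem stmt_9 (x y : ℚ) (h : y ^ 2 = x ^ 3 + 6 * x ^ 2 - 3 * x) :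
    x ≤ 1 ∧
      ((x = -3 ∧ (y = 6 ∨ y = -6)) ∨ (x = 1 ∧ (y = 2 ∨ y = -2)) ∨ (x = 0 ∧ y = 0)) := by
  by_cases hm0 : x.num = 0
  · have hx0 : x = 0 := by rwa [Rat.num_eq_zero] at hm0
    have hy0 : y = 0 := by
      have hyy : y^2 = 0 := by rw [h, hx0]; ring
      exact pow_eq_zero_iff (two_ne_zero) |>.mp hyy
    exact ⟨by rw [hx0]; norm_num, Or.inr (Or.inr ⟨hx0, hy0⟩)⟩
  obtain ⟨m, hm⟩ : ∃ z : ℤ, x.num = z := ⟨x.num, rfl⟩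
  obtain ⟨n, hn⟩ : ∃ z : ℤ, (x.den : ℤ) = z := ⟨_, rfl⟩
  have hnpos : 0 < n := by rw [← hn]; exact_mod_cast x.pos
  have hd0 : ((n:ℚ)) ≠ 0 := by
    intro h0
    have : n = 0 := by exact_mod_cast h0
    omega
  have hmne : m ≠ 0 := by rw [← hm]; exact hm0
  have hmn : IsCoprime m n := by
    rw [← hm, ← hn]
    rw [Int.isCoprime_iff_gcd_eq_one]
    simpa [Int.gcd] using x.reduced
  have hx : (m:ℚ) = x * (n:ℚ) := by
    rw [← hm, ← hn]
    push_cast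
    exact (div_eq_iff (by exact_mod_cast x.den_nz)).mp (Rat.num_div_den x)
  have hYq : (y*(n:ℚ)^2)^2 = ((n*m*(m^2+6*m*n-3*n^2) : ℤ) : ℚ) := by
    push_cast
    rw [hx]
    linear_combination ((n:ℚ))^4 * h
  obtain ⟨Y, hY⟩ := int_of_sq_int _ _ hYq
  have hZ : Y^2 = n*m*(m^2+6*m*n-3*n^2) := by
    have hq : ((Y:ℚ))^2 = ((n*m*(m^2+6*m*n-3*n^2) : ℤ) : ℚ) := by rw [hY]; exact hYq
    exact_mod_cast hq
  have hcne : m^2+6*m*n-3*n^2 ≠ 0 := fun h0 => aux_ne m n hmn h0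
  by_cases h3m : (3:ℤ) ∣ m
  · -- 3 | m : points with x = -3 (or contradiction)
    obtain ⟨m1, rfl⟩ := h3m
    have hm10 : m1 ≠ 0 := by intro h0; apply hmne; rw [h0]; ring
    have h3n : ¬ (3:ℤ) ∣ n := fun hdn =>
      no_common_prime (3*m1) n 3 hmn Int.prime_three ⟨m1, rfl⟩ hdn
    have hm1n : IsCoprime m1 n := hmn.of_isCoprime_of_dvd_left ⟨3, by ring⟩
    have hcne2 : 3*m1^2+6*m1*n-n^2 ≠ 0 := fun h0 => aux_ne2 m1 n hm1n h0
    have h3Y : (3:ℤ) ∣ Y := by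
      refine Int.prime_three.dvd_of_dvd_pow (n := 2) ⟨3*(n*m1*(3*m1^2+6*m1*n-n^2)), ?_⟩
      linear_combination hZ
    obtain ⟨Y0, rfl⟩ := h3Y
    have hZ0 : Y0^2 = n*m1*(3*m1^2+6*m1*n-n^2) := by
      have h9 : 9*Y0^2 = 9*(n*m1*(3*m1^2+6*m1*n-n^2)) := by linear_combination hZ
      linarith
    have hco_nc : IsCoprime n (3*m1^2+6*m1*n-n^2) := by
      have h3co : IsCoprime n 3 := ((Int.prime_three.coprime_iff_not_dvd).mpr h3n).symm
      have h1 : IsCoprime n (3*m1^2) := h3co.mul_right ((hm1n.symm).pow_right)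
      have h2 := h1.add_mul_left_right (6*m1-n)
      exact (show (3*m1^2+6*m1*n-n^2) = 3*m1^2 + n*(6*m1-n) from by ring) ▸ h2
    have hco_mc : IsCoprime m1 (3*m1^2+6*m1*n-n^2) := by
      have h1 : IsCoprime m1 (-(n^2)) := (hm1n.pow_right).neg_right
      have h2 := h1.add_mul_left_right (3*m1+6*n)
      exact (show (3*m1^2+6*m1*n-n^2) = -(n^2) + m1*(3*m1+6*n) from by ring) ▸ h2
    obtain ⟨a, b1, c1, hapos, hb1ne, hna, hcases⟩ :=
      classify n m1 _ Y0 hnpos hm10 hcne2 hm1n.symm hco_nc hco_mc hZ0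
    have hcoab : IsCoprime a b1 := by
      have h1 : IsCoprime (a^2) (b1^2) := by
        rcases hcases with ⟨hb,_⟩|⟨hb,_⟩
        · rw [← hna, ← hb]; exact hm1n.symm
        · rw [← hna]
          have h2 := hm1n.symm
          rw [hb] at h2
          exact h2.of_isCoprime_of_dvd_right ⟨-1, by ring⟩
      exact (h1.of_isCoprime_of_dvd_left (dvd_pow_self a two_ne_zero)).of_isCoprime_of_dvd_right
        (dvd_pow_self b1 two_ne_zero)
    rcases hcases with ⟨hbm, hcc⟩|⟨hbm, hcc⟩
    · -- m1 = b1^2 : impossible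
      exfalso
      rw [hbm, hna] at hcc
      have heq : c1^2 = 3*b1^4+6*b1^2*a^2-a^4 := by linear_combination (-1)*hcc
      exact L1kill b1 a c1 (parity_or b1 a hcoab.symm) heq
    · -- m1 = -b1^2 : x = -3
      rw [hbm, hna] at hcc
      have heq : c1^2 = a^4+6*b1^2*a^2-3*b1^4 := by linear_combination hcc
      have hbpos : 0 < |b1| := abs_pos.mpr hb1ne
      have hcob : IsCoprime |b1| a := by
        rcases abs_choice b1 with h'|h'
        · rw [h']; exact hcoab.symm
        · rw [h']; exact (hcoab.symm).neg_left
      have habs2 : |b1|^2 = b1^2 := sq_abs b1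
      have habs4 : |b1|^4 = b1^4 := by
        rcases abs_choice b1 with h'|h' <;> rw [h'] <;> ring
      have hba : |b1|^2 = a^2 :=
        descentA (|b1|).natAbs |b1| a c1 le_rfl hbpos hcob (by rw [habs2, habs4]; exact heq)
      have hb2a : b1^2 = a^2 := by rw [← habs2]; exact hba
      have hm1a : m1 = -n := by rw [hbm, hb2a, ← hna]
      have hx3 : x = -3 := by
        have hmq := hx
      
        rw [hm1a] at hmq
        push_cast at hmq
        have hcan := mul_right_cancel₀ hd0 (show x*(n:ℚ) = (-3)*(n:ℚ) from by linear_combination -hmq)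
        exact hcan
      have hy2 : y^2 = 36 := by rw [h, hx3]; norm_num
      have hfac : (y-6)*(y+6) = 0 := by linear_combination hy2
      rcases mul_eq_zero.mp hfac with h'|h'
      · exact ⟨by rw [hx3]; norm_num, Or.inl ⟨hx3, Or.inl (by linarith)⟩⟩
      · exact ⟨by rw [hx3]; norm_num, Or.inl ⟨hx3, Or.inr (by linarith)⟩⟩
  · -- 3 ∤ m : points with x = 1 (or contradiction)
    have h3co : IsCoprime m 3 := ((Int.prime_three.coprime_iff_not_dvd).mpr h3m).symm
    have hco_nc : IsCoprime n (m^2+6*m*n-3*n^2) := by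
      have h1 : IsCoprime n (m^2) := (hmn.symm).pow_right
      have h2 := h1.add_mul_left_right (6*m-3*n)
      exact (show (m^2+6*m*n-3*n^2) = m^2 + n*(6*m-3*n) from by ring) ▸ h2
    have hco_mc : IsCoprime m (m^2+6*m*n-3*n^2) := by
      have h1 : IsCoprime m ((-3)*n^2) := (h3co.neg_right).mul_right (hmn.pow_right)
      have h2 := h1.add_mul_left_right (m+6*n)
      exact (show (m^2+6*m*n-3*n^2) = (-3)*n^2 + m*(m+6*n) from by ring) ▸ h2
    obtain ⟨a, b1, c1, hapos, hb1ne, hna, hcases⟩ :=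
      classify n m _ Y hnpos hmne hcne hmn.symm hco_nc hco_mc (by linear_combination hZ)
    have hcoab : IsCoprime a b1 := by
      have h1 : IsCoprime (a^2) (b1^2) := by
        rcases hcases with ⟨hb,_⟩|⟨hb,_⟩
        · rw [← hna, ← hb]; exact hmn.symm
        · rw [← hna]
          have h2 := hmn.symm
          rw [hb] at h2
          exact h2.of_isCoprime_of_dvd_right ⟨-1, by ring⟩
      exact (h1.of_isCoprime_of_dvd_left (dvd_pow_self a two_ne_zero)).of_isCoprime_of_dvd_right
        (dvd_pow_self b1 two_ne_zero)
    rcases hcases with ⟨hbm, hcc⟩|⟨hbm, hcc⟩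
    · -- m = b1^2 : x = 1
      rw [hbm, hna] at hcc
      have heq : c1^2 = b1^4+6*a^2*b1^2-3*a^4 := by linear_combination (-1)*hcc
      have hab2 : a^2 = b1^2 := descentA (a.natAbs) a b1 c1 le_rfl hapos hcoab heq
      have hnm : m = n := by rw [hbm, ← hab2, ← hna]
      have hx1 : x = 1 := by
        have hmq := hx
        rw [hnm] at hmq
        have hcan := mul_right_cancel₀ hd0 (show x*(n:ℚ) = 1*(n:ℚ) from by linear_combination -hmq)
        exact hcan
      have hy2 : y^2 = 4 := by rw [h, hx1]; norm_num
      have hfac : (y-2)*(y+2) = 0 := by linear_combination hy2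
      rcases mul_eq_zero.mp hfac with h'|h'
      · exact ⟨by rw [hx1], Or.inr (Or.inl ⟨hx1, Or.inl (by linarith)⟩)⟩
      · exact ⟨by rw [hx1], Or.inr (Or.inl ⟨hx1, Or.inr (by linarith)⟩)⟩
    · -- m = -b1^2 : impossible
      exfalso
      rw [hbm, hna] at hcc
      have heq : c1^2 = 3*a^4+6*a^2*b1^2-b1^4 := by linear_combination hcc
      exact L1kill a b1 c1 (parity_or a b1 hcoab) heq
end

section
/- The only rational solutions (t, s) of s² = t⁴ − t² + 1 are t = 0, s = ±1 and t = ±1, s = ±1. -/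
/-- Splitting step: from the hypotheses extract a solution of the concordant
system `e^2+h^2 = g^2`, `e^2+4h^2 = f^2` with `g ≤ a`. -/
lemma lemD (a b c d : ℕ) (ha : 0 < a) (hb : 0 < b) (hco : Nat.gcd a b = 1)
    (heq : a ^ 2 + 4 * d ^ 2 = c ^ 2 + b ^ 2) (hm : c * d = a * b) :
    ∃ e h g f : ℕ, Nat.gcd e h = 1 ∧ 0 < e ∧ 0 < h ∧
      e ^ 2 + h ^ 2 = g ^ 2 ∧ e ^ 2 + 4 * h ^ 2 = f ^ 2 ∧ g ≤ a := by
  have hc0 : 0 < c := by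
    rcases Nat.eq_zero_or_pos c with hc | hc
    · exfalso; rw [hc, zero_mul] at hm; exact absurd hm.symm (by positivity)
    · exact hc
  set e := Nat.gcd c a with he_def
  have he0 : 0 < e := Nat.gcd_pos_of_pos_left a hc0
  obtain ⟨f, hf⟩ : e ∣ c := Nat.gcd_dvd_left c a
  obtain ⟨g, hg⟩ : e ∣ a := Nat.gcd_dvd_right c a
  have hfg : Nat.Coprime f g := by
    have h2 := Nat.coprime_div_gcd_div_gcd (m := c) (n := a) he0
    have hce : c / e = f := by rw [hf]; exact Nat.mul_div_cancel_left f he0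
    have hae : a / e = g := by rw [hg]; exact Nat.mul_div_cancel_left g he0
    rwa [← he_def, hce, hae] at h2
  have hf0 : 0 < f := by
    rcases Nat.eq_zero_or_pos f with h0 | h0
    · exfalso; rw [h0, mul_zero] at hf; omega
    · exact h0
  have hg0 : 0 < g := by
    rcases Nat.eq_zero_or_pos g with h0 | h0
    · exfalso; rw [h0, mul_zero] at hg; omega
    · exact h0
  -- f * d = g * b
  have hfd : f * d = g * b := by
    have : e * (f * d) = e * (g * b) := by
      rw [← mul_assoc, ← mul_assoc, ← hf, ← hg]; exact hm
    exact Nat.eq_of_mul_eq_mul_left he0 this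
  have hfb : f ∣ b := hfg.dvd_of_dvd_mul_left ⟨d, by omega⟩
  obtain ⟨h, hh⟩ := hfb
  have hh0 : 0 < h := by
    rcases Nat.eq_zero_or_pos h with h0 | h0
    · exfalso; rw [h0, mul_zero] at hh; omega
    · exact h0
  have hd : d = g * h := by
    have : f * d = f * (g * h) := by rw [hfd, hh]; ring
    exact Nat.eq_of_mul_eq_mul_left hf0 this
  -- key equation over ℤ
  have key : (g : ℤ) ^ 2 * ((e : ℤ) ^ 2 + 4 * (h : ℤ) ^ 2)
      = (f : ℤ) ^ 2 * ((e : ℤ) ^ 2 + (h : ℤ) ^ 2) := by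
    have hZ : ((e : ℤ) * g) ^ 2 + 4 * ((g : ℤ) * h) ^ 2
        = ((e : ℤ) * f) ^ 2 + ((f : ℤ) * h) ^ 2 := by
      have := heq
      rw [hg, hd, hf, hh] at this
      exact_mod_cast this
    linear_combination hZ
  have hcoeh : Nat.Coprime e h :=
    Nat.Coprime.coprime_dvd_left ⟨g, hg⟩
      (Nat.Coprime.coprime_dvd_right ⟨f, by rw [hh]; ring⟩ hco)
  have hcofg : IsCoprime (f : ℤ) (g : ℤ) := by
    rw [Int.isCoprime_iff_gcd_eq_one, Int.gcd_natCast_natCast]; exact hfg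
  have hfne : (f : ℤ) ≠ 0 := by exact_mod_cast hf0.ne'
  have hgne : (g : ℤ) ≠ 0 := by exact_mod_cast hg0.ne'
  have hdvd1 : (f : ℤ) ^ 2 ∣ (e : ℤ) ^ 2 + 4 * (h : ℤ) ^ 2 :=
    (hcofg.pow : IsCoprime ((f:ℤ)^2) ((g:ℤ)^2)).dvd_of_dvd_mul_left ⟨(e : ℤ) ^ 2 + (h : ℤ) ^ 2, by linear_combination key⟩
  have hdvd2 : (g : ℤ) ^ 2 ∣ (e : ℤ) ^ 2 + (h : ℤ) ^ 2 :=
    (hcofg.symm.pow : IsCoprime ((g:ℤ)^2) ((f:ℤ)^2)).dvd_of_dvd_mul_left ⟨(e : ℤ) ^ 2 + 4 * (h : ℤ) ^ 2, by linear_combination -key⟩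
  obtain ⟨K, hK1⟩ := hdvd1
  obtain ⟨K2, hK2⟩ := hdvd2
  have hKK : K = K2 := by
    have h4 : ((f : ℤ) ^ 2 * (g : ℤ) ^ 2) * K = ((f : ℤ) ^ 2 * (g : ℤ) ^ 2) * K2 := by
      linear_combination -((g : ℤ) ^ 2 * hK1) + (f : ℤ) ^ 2 * hK2 + key
    exact mul_left_cancel₀ (by positivity) h4
  subst hKK
  have hKpos : 0 < K := by nlinarith [sq_nonneg (e : ℤ), sq_nonneg (h : ℤ), sq_nonneg (g : ℤ),
    (by exact_mod_cast he0 : (0:ℤ) < e), (by exact_mod_cast hh0 : (0:ℤ) < h)]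
  have hK3 : K ∣ 3 := by
    have d1 : K ∣ 3 * (h : ℤ) ^ 2 := ⟨(f : ℤ) ^ 2 - (g : ℤ) ^ 2, by linear_combination hK1 - hK2⟩
    have d2 : K ∣ 3 * (e : ℤ) ^ 2 := ⟨4 * (g : ℤ) ^ 2 - (f : ℤ) ^ 2, by
      linear_combination 4 * hK2 - hK1⟩
    have hco2 : IsCoprime ((e : ℤ) ^ 2) ((h : ℤ) ^ 2) := by
      refine IsCoprime.pow ?_
      rw [Int.isCoprime_iff_gcd_eq_one, Int.gcd_natCast_natCast]; exact hcoeh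
    obtain ⟨u, v, huv⟩ := hco2
    have h3 : u * (3 * (e : ℤ) ^ 2) + v * (3 * (h : ℤ) ^ 2) = 3 := by linear_combination 3 * huv
    exact h3 ▸ dvd_add (d2.mul_left u) (d1.mul_left v)
  have hK13 : K = 1 ∨ K = 3 := by
    have hle : K ≤ 3 := Int.le_of_dvd (by norm_num) hK3
    interval_cases K <;> omega
  rcases hK13 with rfl | rfl
  · refine ⟨e, h, g, f, hcoeh, he0, hh0, ?_, ?_, ?_⟩
    · exact_mod_cast hK2.trans (mul_one _)
    · exact_mod_cast hK1.trans (mul_one _)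
    · exact Nat.le_of_dvd ha ⟨e, by rw [hg]; ring⟩
  · exfalso
    have hnat : e ^ 2 + h ^ 2 = 3 * g ^ 2 := by
      have hc : ((e ^ 2 + h ^ 2 : ℕ) : ℤ) = ((3 * g ^ 2 : ℕ) : ℤ) := by push_cast; linarith [hK2]
      exact_mod_cast hc
    have hz : ((e : ZMod 3)) ^ 2 + (h : ZMod 3) ^ 2 = 0 := by
      have := congrArg (Nat.cast : ℕ → ZMod 3) hnat
      push_cast at this
      have h30 : (3 : ZMod 3) = 0 := by decide
      rw [this, h30]; ring
    have hdec : ∀ x y : ZMod 3, x ^ 2 + y ^ 2 = 0 → x = 0 ∧ y = 0 := by decide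
    obtain ⟨hz1, hz2⟩ := hdec _ _ hz
    have d3e : 3 ∣ e := (ZMod.natCast_eq_zero_iff e 3).mp hz1
    have d3h : 3 ∣ h := (ZMod.natCast_eq_zero_iff h 3).mp hz2
    have := Nat.dvd_gcd d3e d3h
    rw [hcoeh] at this
    omega

lemma lemE' (m n r s : ℤ) (hm0 : m ≠ 0) (hn0 : n ≠ 0) (hco : Int.gcd m n = 1)
    (heq : m ^ 2 - n ^ 2 = r ^ 2 - s ^ 2) (hprod : r * s = 2 * (m * n))
    (hs : s % 2 = 0) :
    ∃ e h g f : ℕ, Nat.gcd e h = 1 ∧ 0 < e ∧ 0 < h ∧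
      e ^ 2 + h ^ 2 = g ^ 2 ∧ e ^ 2 + 4 * h ^ 2 = f ^ 2 ∧
      (e : ℤ) ^ 2 + (h : ℤ) ^ 2 < (m ^ 2 + n ^ 2) ^ 2 := by
  obtain ⟨σ, hσ⟩ : ∃ σ, s = 2 * σ := ⟨s / 2, by omega⟩
  have ha : 0 < m.natAbs := Int.natAbs_pos.mpr hm0
  have hb : 0 < n.natAbs := Int.natAbs_pos.mpr hn0
  have hrσ : r * σ = m * n := by
    have h2' : (2 : ℤ) * (r * σ) = 2 * (m * n) := by linear_combination hprod - r * hσ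
    exact mul_left_cancel₀ two_ne_zero h2'
  have heqD : m.natAbs ^ 2 + 4 * σ.natAbs ^ 2 = r.natAbs ^ 2 + n.natAbs ^ 2 := by
    have hZ : (m.natAbs : ℤ) ^ 2 + 4 * (σ.natAbs : ℤ) ^ 2
        = (r.natAbs : ℤ) ^ 2 + (n.natAbs : ℤ) ^ 2 := by
      rw [Int.natAbs_sq, Int.natAbs_sq, Int.natAbs_sq, Int.natAbs_sq]
      linear_combination heq - (s + 2 * σ) * hσ
    exact_mod_cast hZ
  have hmD : r.natAbs * σ.natAbs = m.natAbs * n.natAbs := by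
    rw [← Int.natAbs_mul, ← Int.natAbs_mul, hrσ]
  obtain ⟨e, h, g, f, hco', he, hh, h1, h2, hg⟩ :=
    lemD m.natAbs n.natAbs r.natAbs σ.natAbs ha hb hco heqD hmD
  refine ⟨e, h, g, f, hco', he, hh, h1, h2, ?_⟩
  have hgc : ((e : ℤ) ^ 2 + (h : ℤ) ^ 2) = (g : ℤ) ^ 2 := by exact_mod_cast h1
  have hgm : (g : ℤ) ^ 2 ≤ m ^ 2 := by
    calc (g : ℤ) ^ 2 ≤ (m.natAbs : ℤ) ^ 2 := by
          have : (g : ℤ) ≤ (m.natAbs : ℤ) := by exact_mod_cast hg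
          nlinarith [Int.natCast_nonneg g]
      _ = m ^ 2 := Int.natAbs_sq m
  have hm1 : (1 : ℤ) ≤ m ^ 2 := by
    have : (0:ℤ) < m ^ 2 := by positivity
    linarith
  have hn1 : (1 : ℤ) ≤ n ^ 2 := by
    have : (0:ℤ) < n ^ 2 := by positivity
    linarith
  nlinarith [hgc, hgm, hm1, hn1]

lemma lemE (m n r s : ℤ) (hm0 : m ≠ 0) (hn0 : n ≠ 0) (hco : Int.gcd m n = 1)
    (heq : m ^ 2 - n ^ 2 = r ^ 2 - s ^ 2) (hprod : r * s = 2 * (m * n))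
    (hpar : s % 2 = 0 ∨ r % 2 = 0) :
    ∃ e h g f : ℕ, Nat.gcd e h = 1 ∧ 0 < e ∧ 0 < h ∧
      e ^ 2 + h ^ 2 = g ^ 2 ∧ e ^ 2 + 4 * h ^ 2 = f ^ 2 ∧
      (e : ℤ) ^ 2 + (h : ℤ) ^ 2 < (m ^ 2 + n ^ 2) ^ 2 := by
  rcases hpar with hps | hpr
  · exact lemE' m n r s hm0 hn0 hco heq hprod hps
  · obtain ⟨e, h, g, f, hco', he, hh, h1, h2, hb⟩ :=
      lemE' n m s r hn0 hm0 (by rwa [Int.gcd_comm]) (by linear_combination -heq)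
        (by linear_combination hprod) hpr
    refine ⟨e, h, g, f, hco', he, hh, h1, h2, ?_⟩
    have : (n ^ 2 + m ^ 2) ^ 2 = (m ^ 2 + n ^ 2) ^ 2 := by ring
    linarith [hb, this]

lemma sqmod4odd (m : ℕ) (hm : m % 2 = 1) : m ^ 2 % 4 = 1 := by
  obtain ⟨j, hj⟩ : ∃ j, m = 2 * j + 1 := ⟨m / 2, by omega⟩
  have h2 : m ^ 2 = 4 * (j * j + j) + 1 := by rw [hj]; ring
  rw [h2, Nat.mul_add_mod]

lemma sqmod4even (m : ℕ) (hm : m % 2 = 0) : m ^ 2 % 4 = 0 := by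
  obtain ⟨j, hj⟩ : ∃ j, m = 2 * j := ⟨m / 2, by omega⟩
  have h2 : m ^ 2 = 4 * (j * j) := by rw [hj]; ring
  rw [h2, Nat.mul_mod_right]

/-- No nontrivial solution of the concordant system `e²+h²=g²`, `e²+4h²=f²`. -/
lemma lemC : ∀ N : ℕ, ∀ e h g f : ℕ, e ^ 2 + h ^ 2 ≤ N → Nat.gcd e h = 1 → 0 < e → 0 < h →
    e ^ 2 + h ^ 2 = g ^ 2 → e ^ 2 + 4 * h ^ 2 = f ^ 2 → False := by
  intro N
  induction N using Nat.strong_induction_on with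
  | _ N ih =>
  intro e h g f hle hco he hh h1 h2
  rcases Nat.even_or_odd e with heven | hodd
  · -- e even : halve it, swap roles
    obtain ⟨ε, hε⟩ := heven
    have he2 : e = 2 * ε := by omega
    have hε0 : 0 < ε := by omega
    have hfe : Even f := by
      have h4 : Even (f ^ 2) := by
        rw [← h2, he2]; exact ⟨2 * ε ^ 2 + 2 * h ^ 2, by ring⟩
      exact (Nat.even_pow.mp h4).1
    obtain ⟨φ, hφ⟩ := hfe
    have hf2 : f = 2 * φ := by omega
    have hZe : (e : ℤ) = 2 * (ε : ℤ) := by exact_mod_cast he2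
    have hZf : (f : ℤ) = 2 * (φ : ℤ) := by exact_mod_cast hf2
    have hnew1 : h ^ 2 + ε ^ 2 = φ ^ 2 := by
      have hZ2 : ((e : ℤ)) ^ 2 + 4 * (h : ℤ) ^ 2 = (f : ℤ) ^ 2 := by exact_mod_cast h2
      have h4 : (4 : ℤ) * ((h : ℤ) ^ 2 + (ε : ℤ) ^ 2) = 4 * (φ : ℤ) ^ 2 := by
        linear_combination hZ2 - ((e : ℤ) + 2 * ε) * hZe + ((f : ℤ) + 2 * φ) * hZf
      have := mul_left_cancel₀ (show (4:ℤ) ≠ 0 by norm_num) h4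
      exact_mod_cast this
    have hnew2 : h ^ 2 + 4 * ε ^ 2 = g ^ 2 := by
      have hZ1 : ((e : ℤ)) ^ 2 + (h : ℤ) ^ 2 = (g : ℤ) ^ 2 := by exact_mod_cast h1
      have : (h : ℤ) ^ 2 + 4 * (ε : ℤ) ^ 2 = (g : ℤ) ^ 2 := by
        linear_combination hZ1 - ((e : ℤ) + 2 * ε) * hZe
      exact_mod_cast this
    have hco' : Nat.gcd h ε = 1 :=
      Nat.Coprime.coprime_dvd_right ⟨2, by omega⟩ (Nat.Coprime.symm hco)
    have hlt : h ^ 2 + ε ^ 2 < e ^ 2 + h ^ 2 := by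
      have hεe : ε ^ 2 < e ^ 2 := Nat.pow_lt_pow_left (by omega) (by norm_num)
      linarith
    exact ih (h ^ 2 + ε ^ 2) (lt_of_lt_of_le hlt hle) h ε φ g le_rfl hco' hh hε0 hnew1 hnew2
  · rcases Nat.even_or_odd h with hheven | hhodd
    swap
    · -- both odd: impossible mod 4
      have hg4 : g ^ 2 % 4 = 2 := by
        rw [← h1, Nat.add_mod, sqmod4odd e (Nat.odd_iff.mp hodd), sqmod4odd h (Nat.odd_iff.mp hhodd)]
      rcases Nat.even_or_odd g with hg | hg
      · rw [sqmod4even g (Nat.even_iff.mp hg)] at hg4; omega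
      · rw [sqmod4odd g (Nat.odd_iff.mp hg)] at hg4; omega
    -- e odd, h even : the descent step
    have he1 : e % 2 = 1 := Nat.odd_iff.mp hodd
    have hPT1 : PythagoreanTriple (e : ℤ) (h : ℤ) (g : ℤ) := by
      show (e : ℤ) * e + (h : ℤ) * h = (g : ℤ) * g
      have hc : ((e : ℤ)) ^ 2 + (h : ℤ) ^ 2 = (g : ℤ) ^ 2 := by exact_mod_cast h1
      linear_combination hc
    have hco1 : Int.gcd (e : ℤ) (h : ℤ) = 1 := by rw [Int.gcd_natCast_natCast]; exact hco
    obtain ⟨m, n, hmn, hgz, hcomn, hpar⟩ :=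
      PythagoreanTriple.coprime_classification.mp ⟨hPT1, hco1⟩
    rcases hmn with ⟨hm1, hm2⟩ | ⟨hm1, hm2⟩
    swap
    · exfalso
      have hd : (2 : ℤ) ∣ (e : ℤ) := ⟨m * n, by linear_combination hm1⟩
      have : (2 : ℕ) ∣ e := by exact_mod_cast hd
      omega
    have hPT2 : PythagoreanTriple (e : ℤ) (2 * (h : ℤ)) (f : ℤ) := by
      show (e : ℤ) * e + (2 * (h : ℤ)) * (2 * (h : ℤ)) = (f : ℤ) * f
      have hc : ((e : ℤ)) ^ 2 + 4 * (h : ℤ) ^ 2 = (f : ℤ) ^ 2 := by exact_mod_cast h2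
      linear_combination hc
    have hco2' : Int.gcd (e : ℤ) (2 * (h : ℤ)) = 1 := by
      have hnatco : Nat.Coprime e (2 * h) :=
        Nat.Coprime.mul_right ((Nat.prime_two.coprime_iff_not_dvd).mpr (by omega)).symm hco
      rw [show (2 * (h : ℤ)) = ((2 * h : ℕ) : ℤ) by push_cast; ring, Int.gcd_natCast_natCast]
      exact hnatco
    obtain ⟨r, s', hrs, hfz, hcors, hpar2⟩ :=
      PythagoreanTriple.coprime_classification.mp ⟨hPT2, hco2'⟩
    rcases hrs with ⟨hr1, hr2⟩ | ⟨hr1, hr2⟩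
    swap
    · exfalso
      have hd : (2 : ℤ) ∣ (e : ℤ) := ⟨r * s', by linear_combination hr1⟩
      have : (2 : ℕ) ∣ e := by exact_mod_cast hd
      omega
    have hhne : (h : ℤ) ≠ 0 := by exact_mod_cast hh.ne'
    have hm0 : m ≠ 0 := by intro h0; apply hhne; rw [hm2, h0]; ring
    have hn0 : n ≠ 0 := by intro h0; apply hhne; rw [hm2, h0]; ring
    have hprod : r * s' = 2 * (m * n) := by
      have h2' : (2 : ℤ) * (r * s') = 2 * (2 * (m * n)) := by
        linear_combination -hr2 + 2 * hm2
      exact mul_left_cancel₀ two_ne_zero h2'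
    have heqE : m ^ 2 - n ^ 2 = r ^ 2 - s' ^ 2 := by linear_combination -hm1 + hr1
    have hparE : s' % 2 = 0 ∨ r % 2 = 0 := by
      rcases hpar2 with ⟨hra, hsa⟩ | ⟨hra, hsa⟩
      · right; exact hra
      · left; exact hsa
    obtain ⟨e', h', g', f', hco', he', hh', h1', h2', hbound⟩ :=
      lemE m n r s' hm0 hn0 hcomn heqE hprod hparE
    have hgz' : (g : ℤ) ^ 2 = (m ^ 2 + n ^ 2) ^ 2 := by
      rcases hgz with hgv | hgv <;> rw [hgv] <;> ring
    have hlt : e' ^ 2 + h' ^ 2 < e ^ 2 + h ^ 2 := by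
      have hcast : ((e' ^ 2 + h' ^ 2 : ℕ) : ℤ) < ((e ^ 2 + h ^ 2 : ℕ) : ℤ) := by
        push_cast
        calc ((e' : ℤ) ^ 2 + (h' : ℤ) ^ 2) < (m ^ 2 + n ^ 2) ^ 2 := hbound
          _ = (g : ℤ) ^ 2 := hgz'.symm
          _ = (e : ℤ) ^ 2 + (h : ℤ) ^ 2 := by
              have : ((e : ℤ)) ^ 2 + (h : ℤ) ^ 2 = (g : ℤ) ^ 2 := by exact_mod_cast h1
              linarith
      exact_mod_cast hcast
    exact ih (e' ^ 2 + h' ^ 2) (lt_of_lt_of_le hlt hle) e' h' g' f' le_rfl hco' he' hh' h1' h2'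

lemma coprime_quartic {x y : ℤ} (hco : Int.gcd x y = 1) :
    IsCoprime (x ^ 2 - y ^ 2) (x * y) := by
  have hxy : IsCoprime x y := Int.isCoprime_iff_gcd_eq_one.mpr hco
  have c1 : IsCoprime (x ^ 2 - y ^ 2) x := by
    have hc : IsCoprime (-(y ^ 2) + x * x) x :=
      IsCoprime.add_mul_left_left (hxy.symm.pow_left).neg_left x
    have : x ^ 2 - y ^ 2 = -(y ^ 2) + x * x := by ring
    rwa [this]
  have c2 : IsCoprime (x ^ 2 - y ^ 2) y := by
    have hc : IsCoprime (x ^ 2 + y * (-y)) y :=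
      IsCoprime.add_mul_left_left (hxy.pow_left) (-y)
    have : x ^ 2 - y ^ 2 = x ^ 2 + y * (-y) := by ring
    rwa [this]
  exact c1.mul_right c2

/-- Case of lemB where `x` is odd and `y` is even. -/
lemma lemB0 (x y z : ℤ) (hx : x % 2 = 1) (hy : y % 2 = 0) (hy0 : y ≠ 0)
    (hco : Int.gcd x y = 1) (h : z ^ 2 = x ^ 4 - x ^ 2 * y ^ 2 + y ^ 4) : False := by
  have hPT : PythagoreanTriple (x ^ 2 - y ^ 2) (x * y) z := by
    show (x ^ 2 - y ^ 2) * (x ^ 2 - y ^ 2) + (x * y) * (x * y) = z * z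
    linear_combination -h
  have hgcd : Int.gcd (x ^ 2 - y ^ 2) (x * y) = 1 :=
    Int.isCoprime_iff_gcd_eq_one.mp (coprime_quartic hco)
  obtain ⟨m, n, hmn, hzz, hcomn, hparmn⟩ :=
    PythagoreanTriple.coprime_classification.mp ⟨hPT, hgcd⟩
  rcases hmn with ⟨h1, h2⟩ | ⟨h1, h2⟩
  swap
  · -- x²−y² = 2mn : impossible since it is odd
    have hodd : (x ^ 2 - y ^ 2) % 2 = 1 := by
      obtain ⟨a, ha⟩ : ∃ a, x = 2 * a + 1 := ⟨x / 2, by omega⟩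
      obtain ⟨b, hb⟩ : ∃ b, y = 2 * b := ⟨y / 2, by omega⟩
      obtain ⟨k, hk⟩ : ∃ k, x ^ 2 - y ^ 2 = 2 * k + 1 :=
        ⟨2 * a * a + 2 * a - 2 * b * b, by rw [ha, hb]; ring⟩
      rw [hk]; omega
    rw [h1, show (2:ℤ) * m * n = 2 * (m * n) by ring, Int.mul_emod_right] at hodd
    omega
  -- x²−y² = m²−n², x*y = 2mn
  have hx0 : x ≠ 0 := by intro h0; rw [h0] at hx; norm_num at hx
  have hxyne : x * y ≠ 0 := mul_ne_zero hx0 hy0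
  have hm0 : m ≠ 0 := by intro h0; rw [h0] at h2; simp at h2; tauto
  have hn0 : n ≠ 0 := by intro h0; rw [h0] at h2; simp at h2; tauto
  obtain ⟨e, h', g, f, hco', he, hh, hs1, hs2, _⟩ :=
    lemE m n x y hm0 hn0 hcomn (by linear_combination -h1) (by linear_combination h2)
      (Or.inl hy)
  exact lemC (e ^ 2 + h' ^ 2) e h' g f le_rfl hco' he hh hs1 hs2

/-- No integral point on `z² = x⁴ − x²y² + y⁴` with `x, y` coprime and `x y (x²−y²) ≠ 0`. -/
lemma lemB (x y z : ℤ) (hco : Int.gcd x y = 1) (hx0 : x ≠ 0) (hy0 : y ≠ 0)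
    (hxy : x ^ 2 ≠ y ^ 2) (h : z ^ 2 = x ^ 4 - x ^ 2 * y ^ 2 + y ^ 4) : False := by
  have hpx := Int.emod_two_eq_zero_or_one x
  have hpy := Int.emod_two_eq_zero_or_one y
  rcases hpx with hpx | hpx <;> rcases hpy with hpy | hpy
  · -- both even
    have d2x : (2 : ℤ) ∣ x := by omega
    have d2y : (2 : ℤ) ∣ y := by omega
    have := Int.dvd_gcd d2x d2y
    rw [hco] at this
    norm_num at this
  · exact lemB0 y x z hpy hpx hx0 (by rwa [Int.gcd_comm]) (by linear_combination h)
  · exact lemB0 x y z hpx hpy hy0 hco h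
  · -- both odd
    have hPT : PythagoreanTriple (x * y) (x ^ 2 - y ^ 2) z := by
      show (x * y) * (x * y) + (x ^ 2 - y ^ 2) * (x ^ 2 - y ^ 2) = z * z
      linear_combination -h
    have hgcd : Int.gcd (x * y) (x ^ 2 - y ^ 2) = 1 := by
      rw [Int.gcd_comm]
      exact Int.isCoprime_iff_gcd_eq_one.mp (coprime_quartic hco)
    obtain ⟨m, n, hmn, hzz, hcomn, hparmn⟩ :=
      PythagoreanTriple.coprime_classification.mp ⟨hPT, hgcd⟩
    rcases hmn with ⟨h1, h2⟩ | ⟨h1, h2⟩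
    swap
    · -- x*y = 2mn even : impossible, x*y odd
      have hodd : (x * y) % 2 = 1 := by
        obtain ⟨a, ha⟩ : ∃ a, x = 2 * a + 1 := ⟨x / 2, by omega⟩
        obtain ⟨b, hb⟩ : ∃ b, y = 2 * b + 1 := ⟨y / 2, by omega⟩
        obtain ⟨k, hk⟩ : ∃ k, x * y = 2 * k + 1 :=
          ⟨2 * a * b + a + b, by rw [ha, hb]; ring⟩
        rw [hk]; omega
      rw [h1, show (2:ℤ) * m * n = 2 * (m * n) by ring, Int.mul_emod_right] at hodd
      omega
    -- x*y = m²−n², x²−y² = 2mn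
    obtain ⟨w, hw⟩ : ∃ w, x ^ 2 + y ^ 2 = 2 * w := by
      obtain ⟨a, ha⟩ : ∃ a, x = 2 * a + 1 := ⟨x / 2, by omega⟩
      obtain ⟨b, hb⟩ : ∃ b, y = 2 * b + 1 := ⟨y / 2, by omega⟩
      exact ⟨2 * a * a + 2 * a + 2 * b * b + 2 * b + 1, by rw [ha, hb]; ring⟩
    have hw2 : w ^ 2 = m ^ 4 - m ^ 2 * n ^ 2 + n ^ 4 := by
      have h4 : (4 : ℤ) * w ^ 2 = 4 * (m ^ 4 - m ^ 2 * n ^ 2 + n ^ 4) := by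
        linear_combination -((x ^ 2 + y ^ 2 + 2 * w) * hw) + (x ^ 2 - y ^ 2 + 2 * m * n) * h2
          + 4 * (x * y + m ^ 2 - n ^ 2) * h1
      exact mul_left_cancel₀ (by norm_num) h4
    have hsub : x ^ 2 - y ^ 2 ≠ 0 := sub_ne_zero.mpr hxy
    have hm0 : m ≠ 0 := by intro h0; rw [h0] at h2; simp at h2; exact hsub (by linarith)
    have hn0 : n ≠ 0 := by intro h0; rw [h0] at h2; simp at h2; exact hsub (by linarith)
    rcases hparmn with ⟨hme, hno⟩ | ⟨hmo, hne⟩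
    · exact lemB0 n m w hno hme hm0 (by rwa [Int.gcd_comm]) (by linear_combination hw2)
    · exact lemB0 m n w hmo hne hn0 hcomn (by linear_combination hw2)

theorem stmt_11 (t s : ℚ) (h : s ^ 2 = t ^ 4 - t ^ 2 + 1) :
    (t = 0 ∧ (s = 1 ∨ s = -1)) ∨ ((t = 1 ∨ t = -1) ∧ (s = 1 ∨ s = -1)) := by
  have hyQ : ((t.den : ℚ)) ≠ 0 := by
    have := t.pos
    positivity
  set z : ℚ := s * (t.den : ℚ) ^ 2 with hzdef
  have h' := h
  rw [← Rat.num_div_den t] at h'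
  field_simp at h'
  have h'' : s ^ 2 * (t.den : ℚ) ^ 4
      = (t.num : ℚ) ^ 4 - (t.num : ℚ) ^ 2 * (t.den : ℚ) ^ 2 + (t.den : ℚ) ^ 4 := by
    have hmul : (s ^ 2 * (t.den : ℚ) ^ 4) * (t.den : ℚ) ^ 2
        = ((t.num : ℚ) ^ 4 - (t.num : ℚ) ^ 2 * (t.den : ℚ) ^ 2 + (t.den : ℚ) ^ 4) * (t.den : ℚ) ^ 2 := by
      linear_combination (t.den : ℚ) ^ 2 * h'
    exact mul_right_cancel₀ (pow_ne_zero 2 hyQ) hmul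
  have hzsq : z ^ 2 = ((t.num ^ 4 - t.num ^ 2 * (t.den : ℤ) ^ 2 + (t.den : ℤ) ^ 4 : ℤ) : ℚ) := by
    push_cast
    rw [hzdef]
    linear_combination h''
  have hdz : z.den = 1 := by
    have h21 : (z ^ 2).den = 1 := by rw [hzsq]; exact Rat.den_intCast _
    have h22 : (z ^ 2).den = z.den ^ 2 := Rat.den_pow z 2
    have : z.den ^ 2 = 1 := by omega
    nlinarith [this]
  have hzz : ((z.num : ℤ) : ℚ) = z := by
    conv_rhs => rw [← Rat.num_div_den z, hdz]
    simp
  have hZint : z.num ^ 2 = t.num ^ 4 - t.num ^ 2 * (t.den : ℤ) ^ 2 + (t.den : ℤ) ^ 4 := by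
    have hc : ((z.num : ℤ) : ℚ) ^ 2 = ((t.num ^ 4 - t.num ^ 2 * (t.den : ℤ) ^ 2 + (t.den : ℤ) ^ 4 : ℤ) : ℚ) := by
      rw [hzz]; exact hzsq
    exact_mod_cast hc
  have hco : Int.gcd t.num ((t.den : ℤ)) = 1 := by
    have := t.reduced
    simpa [Int.gcd] using this
  have hyne : ((t.den : ℤ)) ≠ 0 := by exact_mod_cast t.den_nz
  rcases eq_or_ne t.num 0 with hx0 | hx0
  · have ht0 : t = 0 := Rat.num_eq_zero.mp hx0
    rw [ht0] at h
    norm_num at h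
    exact Or.inl ⟨ht0, h⟩
  · rcases eq_or_ne (t.num ^ 2) ((t.den : ℤ) ^ 2) with hxy | hxy
    · have hnatabs : t.num.natAbs = t.den := by
        have h1 : t.num.natAbs ^ 2 = ((t.den : ℤ)).natAbs ^ 2 := by
          have := congrArg Int.natAbs hxy
          rwa [Int.natAbs_pow, Int.natAbs_pow] at this
        have h2 : t.num.natAbs = ((t.den : ℤ)).natAbs :=
          Nat.pow_left_injective (by norm_num) h1
        simpa using h2
      have hd1 : t.den = 1 := by
        have hred := t.reduced
        rw [hnatabs] at hred
        rwa [Nat.Coprime, Nat.gcd_self] at hred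
      have hnum : t.num = 1 ∨ t.num = -1 := by
        have habs : t.num.natAbs = 1 := by rw [hnatabs, hd1]
        rcases Int.natAbs_eq t.num with he | he <;> rw [habs] at he <;> [left; right] <;> omega
      have ht1 : t = 1 ∨ t = -1 := by
        have htx : t = ((t.num : ℤ) : ℚ) := by
          conv_lhs => rw [← Rat.num_div_den t, hd1]
          simp
        rcases hnum with h1 | h1
        · left; rw [htx, h1]; norm_num
        · right; rw [htx, h1]; norm_num
      rcases ht1 with he | he <;> rw [he] at h <;> norm_num at h
      · exact Or.inr ⟨Or.inl he, h⟩
      · exact Or.inr ⟨Or.inr he, h⟩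
    · exact absurd (lemB t.num ((t.den : ℤ)) z.num hco hx0 hyne hxy hZint) id
end

section
/- Let 0 < α < π/3 and let a triangle have angles (α, β, γ) with β = (π − 3α)/2 and γ = (π + α)/2, and sides a, b, c opposite to α, β, γ respectively (by the law of sines, a : b : c = sin α : sin β : sin γ). Then a/c and b/c are both rational if and only if sin(α/2) is rational. -/
open Real

theorem stmt_12 (α β γ : ℝ) (h0 : 0 < α) (h1 : α < π / 3)
    (hβ : β = (π - 3 * α) / 2) (hγ : γ = (π + α) / 2) :
    ((∃ q : ℚ, sin α / sin γ = q) ∧ (∃ q : ℚ, sin β / sin γ = q)) ↔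
      ∃ q : ℚ, sin (α / 2) = q := by
  have hπ := Real.pi_pos
  have hc : 0 < Real.cos (α / 2) := by
    apply Real.cos_pos_of_mem_Ioo
    constructor <;> nlinarith
  have hsγ : Real.sin γ = Real.cos (α / 2) := by
    rw [hγ, show (π + α) / 2 = π / 2 + α / 2 by ring]
    simp [Real.sin_add]
  have hA : Real.sin α / Real.sin γ = 2 * Real.sin (α / 2) := by
    rw [hsγ, show α = 2 * (α / 2) by ring, Real.sin_two_mul]
    field_simp
  have hB : Real.sin β / Real.sin γ = 1 - 4 * Real.sin (α / 2) ^ 2 := by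
    rw [hsγ, hβ, show (π - 3 * α) / 2 = π / 2 - 3 * (α / 2) by ring,
      Real.sin_pi_div_two_sub, Real.cos_three_mul]
    have h2 : Real.cos (α / 2) ^ 2 = 1 - Real.sin (α / 2) ^ 2 := Real.cos_sq' _
    field_simp
    nlinarith [h2]
  constructor
  · rintro ⟨⟨q, hq⟩, -⟩
    refine ⟨q / 2, ?_⟩
    rw [hA] at hq
    push_cast
    linarith
  · rintro ⟨q, hq⟩
    exact ⟨⟨2 * q, by rw [hA, hq]; push_cast; ring⟩,
      ⟨1 - 4 * q ^ 2, by rw [hB, hq]; push_cast; ring⟩⟩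
end

section
/- For 0 < α < π, the quantities √3·sin α and cos α are both rational if and only if √3·tan(α/2) is rational. -/
/-!
Weierstrass substitution: with `t = tan (α / 2)` one has `sin α = 2t / (1 + t²)`,
`cos α = (1 - t²) / (1 + t²)` and conversely `t = sin α / (1 + cos α)`. For `u = c t` with
`c² = r` rational these read `c sin α = 2ru / (r + u²)`, `cos α = (r - u²) / (r + u²)` and
`u = c sin α / (1 + cos α)`, all rational functions with rational coefficients.
-/

open Real

/-- Holds for every `x`: where `cos (x / 2) = 0` both sides take the junk value `0`. -/
theorem Real.tan_half_eq_sin_div_one_add_cos (x : ℝ) : tan (x / 2) = sin x / (1 + cos x) := by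
  have hsin : sin x = 2 * sin (x / 2) * cos (x / 2) := by
    rw [← sin_two_mul, mul_div_cancel₀ x two_ne_zero]
  have hcos : 1 + cos x = 2 * cos (x / 2) ^ 2 := by
    rw [cos_sq, mul_div_cancel₀ x two_ne_zero]; ring
  rw [tan_eq_sin_div_cos, hsin, hcos]
  rcases eq_or_ne (cos (x / 2)) 0 with h | h
  · simp [h]
  · field_simp

theorem Real.exists_rat_mul_sin_and_cos_iff_mul_tan_half {x c : ℝ} {r : ℚ} (hc : c ≠ 0)
    (hcr : c ^ 2 = r) (hx : cos x ≠ -1) :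
    ((∃ q : ℚ, c * sin x = q) ∧ (∃ q : ℚ, cos x = q)) ↔ ∃ q : ℚ, c * tan (x / 2) = q := by
  constructor
  · rintro ⟨⟨a, ha⟩, ⟨b, hb⟩⟩
    refine ⟨a / (1 + b), ?_⟩
    rw [tan_half_eq_sin_div_one_add_cos, mul_div_assoc', ha, hb]
    push_cast
    rfl
  · rintro ⟨q, hq⟩
    have ht : tan (x / 2) = q / c := by rw [← hq]; field_simp
    have hden : (r : ℝ) + q ^ 2 ≠ 0 := by
      rw [← hcr]; positivity
    refine ⟨⟨2 * r * q / (r + q ^ 2), ?_⟩, ⟨(r - q ^ 2) / (r + q ^ 2), ?_⟩⟩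
    · rw [sin_eq_two_mul_tan_half_div_one_add_tan_half_sq, ht]
      push_cast
      rw [← hcr]
      field_simp
    · rw [cos_eq_two_mul_tan_half_div_one_sub_tan_half_sq x hx, ht]
      push_cast
      rw [← hcr]
      field_simp

theorem stmt_14 (α : ℝ) (h0 : 0 < α) (h1 : α < π) :
    ((∃ q : ℚ, Real.sqrt 3 * sin α = q) ∧ (∃ q : ℚ, cos α = q)) ↔
      ∃ q : ℚ, Real.sqrt 3 * tan (α / 2) = q := by
  have hcos : cos α ≠ -1 := by
    rw [← cos_pi]
    exact (cos_lt_cos_of_nonneg_of_le_pi h0.le le_rfl h1).ne'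
  exact exists_rat_mul_sin_and_cos_iff_mul_tan_half (r := 3) (by positivity) (by simp) hcos
end
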